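/- arXiv:1501.00704 — 8 statements merged into one kernel-verified Lean document; each statement's English description precedes it below -/
import Mathlib

section
/- Let ε ∈ {+1, −1} and let φ ∈ ℋ satisfy φ(1/t) = ε·φ(t) for all t > 0. Define Ξ_φ(s) := ∫₀^∞ t^{s/2−1}·Ψ(t)·φ(t) dt (this integral converges absolutely for every s ∈ ℂ) and Ξ^m_φ(s) := Σ_{l=0}^{m} Ξ_φ(s+l). Then for every m ∈ ℕ and every s ∈ ℂ: Ξ^m_φ(s) − ε·Ξ^m_φ(1−m−s) = ½·𝓜[φ]((s−1)/2) − ½·𝓜[φ]((s+m)/2). -/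
open MeasureTheory Filter Set ComplexConjugate

noncomputable section

/-- Rapid decay at infinity: `t^k · f(t) → 0` as `t → ∞`, for all `k`. -/
def RapidTop (f : ℝ → ℂ) : Prop :=
  ∀ k : ℕ, Tendsto (fun t : ℝ => t ^ k * ‖f t‖) atTop (nhds 0)

/-- Rapid decay at zero: `t^(-k) · f(t) → 0` as `t → 0⁺`, for all `k`. -/
def RapidZero (f : ℝ → ℂ) : Prop :=
  ∀ k : ℕ, Tendsto (fun t : ℝ => t ^ (-(k : ℝ)) * ‖f t‖) (nhdsWithin 0 (Ioi 0)) (nhds 0)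

/-- The space ℋ : smooth functions on (0,∞) all of whose derivatives decay rapidly
at 0 and at ∞. -/
def MemH (f : ℝ → ℂ) : Prop :=
  ContDiffOn ℝ (⊤ : ℕ∞) f (Ioi 0) ∧
  ∀ m : ℕ, RapidTop (iteratedDerivWithin m f (Ioi 0)) ∧
           RapidZero (iteratedDerivWithin m f (Ioi 0))

/-- The inner product `⟨f,g⟩_ℏ = ∫₀^∞ t^ℏ conj(f t) g t dt`. -/
def innerH (hb : ℝ) (f g : ℝ → ℂ) : ℂ :=
  ∫ t in Ioi (0 : ℝ), ((t ^ hb : ℝ) : ℂ) * conj (f t) * g t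

/-- The involution `(τ_ℏ f)(t) = t^(-(1+ℏ)) f(1/t)`. -/
def tauOp (hb : ℝ) (f : ℝ → ℂ) : ℝ → ℂ :=
  fun t => ((t ^ (-(1 + hb)) : ℝ) : ℂ) * f (1 / t)

/-- `(H_α f)(t) = f(t) + α t f'(t)`. -/
def Hop (a : ℝ) (f : ℝ → ℂ) : ℝ → ℂ :=
  fun t => f t + (a : ℂ) * (t : ℂ) * deriv f t

/-- `(Δ_α f)(t) = (2α+α²) t f'(t) + α² t² f''(t)`. -/
def Dop (a : ℝ) (f : ℝ → ℂ) : ℝ → ℂ :=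
  fun t => ((2 * a + a ^ 2 : ℝ) : ℂ) * (t : ℂ) * deriv f t
    + ((a ^ 2 : ℝ) : ℂ) * (t : ℂ) ^ 2 * deriv (deriv f) t

/-- `(Z^λ f)(t) = Σ_{n ≥ 1} f(n^λ t)`. -/
def Zop (lam : ℝ) (f : ℝ → ℂ) : ℝ → ℂ :=
  fun t => ∑' n : ℕ, f ((n + 1 : ℝ) ^ lam * t)

/-- Multiplicative convolution `(f ⊛ g)(t) = ∫₀^∞ f(t/y) g(y) dy/y`. -/
def mconv (f g : ℝ → ℂ) : ℝ → ℂ :=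
  fun t => ∫ y in Ioi (0 : ℝ), f (t / y) * g y / (y : ℂ)

/-- Absolute convergence of the inner-product integral. -/
def InnerIntegrable (hb : ℝ) (f g : ℝ → ℂ) : Prop :=
  IntegrableOn (fun t : ℝ => ((t ^ hb : ℝ) : ℂ) * conj (f t) * g t) (Ioi 0)


/-- `Ψ(t) = Σ_{n≥1} exp(-π n² t)` (as a complex-valued function). -/
def PsiC (t : ℝ) : ℂ := ∑' n : ℕ, Complex.exp (-(Real.pi : ℂ) * ((n : ℂ) + 1) ^ 2 * (t : ℂ))

lemma psiC_eq {t : ℝ} (ht : 0 < t) : PsiC t = (jacobiTheta (t * Complex.I) - 1) / 2 := by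
  have h : (0:ℝ) < ((t:ℂ) * Complex.I).im := by simpa using ht
  rw [PsiC, ← (hasSum_nat_jacobiTheta h).tsum_eq]
  congr 1; ext n; congr 1
  linear_combination (-(Real.pi:ℂ) * ((n:ℂ)+1)^2 * t) * Complex.I_sq

lemma psiC_funeq {t : ℝ} (ht : 0 < t) :
    PsiC (1 / t) = -(1/2 : ℂ) + (t:ℂ)^(1/2 : ℂ)/2 + (t:ℂ)^(1/2 : ℂ) * PsiC t := by
  have htc : (t:ℂ) ≠ 0 := Complex.ofReal_ne_zero.mpr (ne_of_gt ht)
  have him : (0:ℝ) < ((t:ℂ) * Complex.I).im := by simpa using ht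
  have hS := jacobiTheta_S_smul ⟨(t:ℂ) * Complex.I, him⟩
  rw [UpperHalfPlane.modular_S_smul, UpperHalfPlane.coe_mk] at hS
  have hS' : jacobiTheta (-((t:ℂ)*Complex.I))⁻¹
      = (-Complex.I * ((t:ℂ)*Complex.I)) ^ (1/2 : ℂ) * jacobiTheta ((t:ℂ)*Complex.I) := hS
  have hco : (-((t:ℂ)*Complex.I))⁻¹ = ((1/t : ℝ) : ℂ) * Complex.I := by
    refine inv_eq_of_mul_eq_one_right ?_
    calc -((t:ℂ)*Complex.I) * (((1/t:ℝ):ℂ)*Complex.I)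
        = -(((t:ℂ)*((1/t:ℝ):ℂ)) * (Complex.I*Complex.I)) := by ring
      _ = 1 := by rw [Complex.I_mul_I]; push_cast; field_simp
  have hmul : -Complex.I * ((t:ℂ)*Complex.I) = (t:ℂ) := by
    have h2 : -Complex.I * ((t:ℂ)*Complex.I) = -(Complex.I*Complex.I)*(t:ℂ) := by ring
    rw [h2, Complex.I_mul_I]; ring
  rw [hco, hmul] at hS'
  have h1t : (0:ℝ) < 1/t := by positivity
  rw [psiC_eq ht, psiC_eq h1t]
  push_cast at hS' ⊢
  rw [hS']
  ring
lemma psiC_bound {t : ℝ} (ht : 0 < t) : ‖PsiC t‖ ≤ (Real.pi * t)⁻¹ := by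
  have him : (0:ℝ) < ((t:ℂ) * Complex.I).im := by simpa using ht
  have hb := norm_jacobiTheta_sub_one_le him
  have himt : ((t:ℂ) * Complex.I).im = t := by simp
  rw [himt] at hb
  have hπt : 0 < Real.pi * t := by positivity
  have hr1 : Real.exp (-Real.pi * t) < 1 := by
    rw [Real.exp_lt_one_iff]; linarith
  have hr0 : 0 < Real.exp (-Real.pi * t) := Real.exp_pos _
  rw [psiC_eq ht, norm_div]
  have h2 : ‖(2:ℂ)‖ = 2 := by norm_num
  rw [h2]
  have step1 : ‖jacobiTheta ((t:ℂ) * Complex.I) - 1‖ / 2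
      ≤ Real.exp (-Real.pi * t) / (1 - Real.exp (-Real.pi * t)) := by
    rw [div_le_div_iff₀ (by norm_num) (by linarith)]
    have hkey : 2 / (1 - Real.exp (-Real.pi * t)) * Real.exp (-Real.pi * t)
        * (1 - Real.exp (-Real.pi * t)) = Real.exp (-Real.pi * t) * 2 := by
      field_simp
      rw [div_self (ne_of_gt (by rw [← neg_mul]; linarith : (0:ℝ) < 1 - Real.exp (-(Real.pi * t))))]
    nlinarith [mul_le_mul_of_nonneg_right hb (by linarith : (0:ℝ) ≤ 1 - Real.exp (-Real.pi * t))]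
  refine step1.trans ?_
  rw [div_le_iff₀ (by linarith), inv_mul_eq_div, le_div_iff₀ hπt]
  have hE : Real.pi * t + 1 ≤ Real.exp (Real.pi * t) := by
    have := Real.add_one_le_exp (Real.pi * t); linarith
  have hprod : Real.exp (-Real.pi * t) * Real.exp (Real.pi * t) = 1 := by
    rw [← Real.exp_add]; simp
  nlinarith [mul_le_mul_of_nonneg_left hE hr0.le]

lemma psiC_contOn : ContinuousOn PsiC (Ioi 0) := by
  intro t ht
  have ht' : (0:ℝ) < t := ht
  have h1 : ContinuousAt (fun u : ℝ => ((u:ℂ) * Complex.I)) t :=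
    (Complex.continuous_ofReal.continuousAt).mul continuousAt_const
  have him : (0:ℝ) < ((t:ℂ) * Complex.I).im := by simpa using ht'
  have h2 : ContinuousAt (fun u : ℝ => jacobiTheta ((u:ℂ) * Complex.I)) t :=
    ContinuousAt.comp (g := jacobiTheta) (x := t) (continuousAt_jacobiTheta him) h1
  have hc : ContinuousAt (fun u : ℝ => (jacobiTheta ((u:ℂ) * Complex.I) - 1) / 2) t :=
    (h2.sub continuousAt_const).div_const 2
  refine (hc.congr ?_).continuousWithinAt
  filter_upwards [isOpen_Ioi.mem_nhds ht] with u hu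
  exact (psiC_eq hu).symm
lemma memH_isBigO_top {φ : ℝ → ℂ} (hφ : MemH φ) (a : ℝ) :
    φ =O[atTop] fun t : ℝ => t ^ (-a) := by
  have h0 := (hφ.2 0).1
  rw [iteratedDerivWithin_zero] at h0
  set k := ⌈a⌉₊ with hk
  have hka : a ≤ (k : ℝ) := Nat.le_ceil a
  rw [Asymptotics.isBigO_iff]
  refine ⟨1, ?_⟩
  filter_upwards [(h0 k).eventually_lt_const one_pos |>.mono (fun t h => h.le),
    eventually_ge_atTop (1:ℝ)] with t h1 h2
  have ht : (0:ℝ) < t := lt_of_lt_of_le one_pos h2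
  have hpk : (0:ℝ) < t ^ k := by positivity
  have hb1 : ‖φ t‖ ≤ (t ^ k)⁻¹ := by
    calc ‖φ t‖ = (t^k)⁻¹ * (t^k * ‖φ t‖) := by field_simp
      _ ≤ (t^k)⁻¹ * 1 := by gcongr
      _ = (t^k)⁻¹ := mul_one _
  have hb2 : (t ^ k)⁻¹ ≤ t ^ (-a) := by
    rw [← Real.rpow_natCast t k, ← Real.rpow_neg ht.le]
    exact Real.rpow_le_rpow_of_exponent_le h2 (by linarith)
  have : t ^ (-a) = ‖t ^ (-a)‖ := (Real.norm_of_nonneg (Real.rpow_nonneg ht.le _)).symm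
  rw [one_mul, ← this]
  exact hb1.trans hb2

lemma memH_isBigO_zero {φ : ℝ → ℂ} (hφ : MemH φ) (k : ℕ) :
    φ =O[nhdsWithin 0 (Ioi 0)] fun t : ℝ => t ^ (k:ℝ) := by
  have h0 := (hφ.2 0).2
  rw [iteratedDerivWithin_zero] at h0
  rw [Asymptotics.isBigO_iff]
  refine ⟨1, ?_⟩
  filter_upwards [(h0 k).eventually_lt_const one_pos |>.mono (fun t h => h.le),
    self_mem_nhdsWithin] with t h1 h2
  have ht : (0:ℝ) < t := h2
  have hpk : (0:ℝ) < t ^ (-(k:ℝ)) := Real.rpow_pos_of_pos ht _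
  have hinv : t ^ (-(k:ℝ)) * t ^ (k:ℝ) = 1 := by
    rw [← Real.rpow_add ht]; simp
  have hb1 : ‖φ t‖ ≤ t ^ (k:ℝ) := by
    calc ‖φ t‖ = t ^ (k:ℝ) * (t ^ (-(k:ℝ)) * ‖φ t‖) := by
          rw [← mul_assoc, mul_comm (t ^ (k:ℝ)), mul_assoc, ← mul_assoc, hinv]; ring
      _ ≤ t ^ (k:ℝ) * 1 := by
          have := Real.rpow_pos_of_pos ht (k:ℝ)
          gcongr
      _ = t ^ (k:ℝ) := mul_one _
  have : t ^ (k:ℝ) = ‖t ^ (k:ℝ)‖ := (Real.norm_of_nonneg (Real.rpow_nonneg ht.le _)).symm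
  rw [one_mul, ← this]
  exact hb1

lemma memH_mellinConv {φ : ℝ → ℂ} (hφ : MemH φ) (w : ℂ) : MellinConvergent φ w := by
  have hloc : MeasureTheory.LocallyIntegrableOn φ (Ioi 0) :=
    (hφ.1.continuousOn).locallyIntegrableOn measurableSet_Ioi
  set k := ⌈-w.re⌉₊ + 1 with hk
  have hkw : -(k:ℝ) < w.re := by
    have := Nat.le_ceil (-w.re)
    push_cast [hk]
    linarith
  refine mellinConvergent_of_isBigO_rpow (a := w.re + 1) (b := -(k:ℝ)) hloc
    (memH_isBigO_top hφ _) (by linarith) ?_ hkw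
  have := memH_isBigO_zero hφ k
  simpa using this

lemma memH_integrableOn {φ : ℝ → ℂ} (hφ : MemH φ) (w : ℂ) :
    IntegrableOn (fun t : ℝ => (t:ℂ) ^ (w - 1) * φ t) (Ioi 0) := by
  have := memH_mellinConv hφ w
  simpa [MellinConvergent, smul_eq_mul] using this
lemma psi_phi_contOn {φ : ℝ → ℂ} (hφ : MemH φ) (w : ℂ) :
    ContinuousOn (fun t : ℝ => (t:ℂ) ^ (w - 1) * (PsiC t * φ t)) (Ioi 0) := by
  refine ContinuousOn.mul ?_ (psiC_contOn.mul hφ.1.continuousOn)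
  intro t ht
  exact (Complex.continuousAt_ofReal_cpow_const t (w-1) (Or.inr (ne_of_gt ht))).continuousWithinAt

lemma psi_phi_integrableOn {φ : ℝ → ℂ} (hφ : MemH φ) (w : ℂ) :
    IntegrableOn (fun t : ℝ => (t:ℂ) ^ (w - 1) * (PsiC t * φ t)) (Ioi 0) := by
  have hmaj : IntegrableOn
      (fun t : ℝ => ((Real.pi⁻¹ : ℝ) : ℂ) * ((t:ℂ) ^ (w - 1 - 1) * φ t)) (Ioi 0) :=
    (memH_integrableOn hφ (w - 1)).const_mul _
  refine MeasureTheory.Integrable.mono hmaj ((psi_phi_contOn hφ w).aestronglyMeasurable measurableSet_Ioi) ?_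
  filter_upwards [ae_restrict_mem measurableSet_Ioi] with t ht
  have ht' : (0:ℝ) < t := ht
  calc ‖(t:ℂ) ^ (w - 1) * (PsiC t * φ t)‖
      = t ^ ((w-1).re) * (‖PsiC t‖ * ‖φ t‖) := by
        rw [norm_mul, norm_mul, Complex.norm_cpow_eq_rpow_re_of_pos ht']
    _ ≤ t ^ ((w-1).re) * ((Real.pi * t)⁻¹ * ‖φ t‖) := by
        have h1 : (0:ℝ) ≤ t ^ ((w-1).re) := (Real.rpow_pos_of_pos ht' _).le
        gcongr
        exact psiC_bound ht'
    _ = Real.pi⁻¹ * (t ^ ((w-1-1).re) * ‖φ t‖) := by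
        rw [show ((w-1-1):ℂ).re = (w-1).re - 1 by simp, Real.rpow_sub ht', Real.rpow_one,
          mul_inv]
        ring
    _ = ‖((Real.pi⁻¹ : ℝ) : ℂ) * ((t:ℂ) ^ (w - 1 - 1) * φ t)‖ := by
        rw [norm_mul, norm_mul, Complex.norm_cpow_eq_rpow_re_of_pos ht', Complex.norm_real,
          Real.norm_of_nonneg (by positivity)]

lemma psi_phi_mellinConv {φ : ℝ → ℂ} (hφ : MemH φ) (w : ℂ) :
    MellinConvergent (fun t : ℝ => PsiC t * φ t) w := by
  have := psi_phi_integrableOn hφ w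
  simpa [MellinConvergent, smul_eq_mul] using this
lemma mellin_eq_integral (f : ℝ → ℂ) (w : ℂ) :
    mellin f w = ∫ t in Ioi (0:ℝ), (t:ℂ)^(w-1) * f t := by
  simp [mellin, smul_eq_mul]

lemma mellin_sym {ε : ℂ} {φ : ℝ → ℂ} (hsym : ∀ t : ℝ, 0 < t → φ (1/t) = ε * φ t) (w : ℂ) :
    mellin φ (-w) = ε * mellin φ w := by
  rw [← mellin_comp_inv φ w, mellin_eq_integral, mellin_eq_integral,
    ← MeasureTheory.integral_const_mul]
  refine setIntegral_congr_fun measurableSet_Ioi (fun t ht => ?_)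
  have ht' : (0:ℝ) < t := ht
  show (t:ℂ)^(w-1) * φ t⁻¹ = ε * ((t:ℂ)^(w-1) * φ t)
  rw [show (t:ℝ)⁻¹ = 1/t from (one_div t).symm, hsym t ht']
  ring

lemma mellin_psiphi_funeq {ε : ℂ} {φ : ℝ → ℂ} (hφ : MemH φ)
    (hsym : ∀ t : ℝ, 0 < t → φ (1/t) = ε * φ t) (w : ℂ) :
    mellin (fun t => PsiC t * φ t) (-w)
      = ε * (-(1/2 : ℂ) * mellin φ w + (1/2 : ℂ) * mellin φ (w + 1/2)
          + mellin (fun t => PsiC t * φ t) (w + 1/2)) := by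
  rw [← mellin_comp_inv (fun t : ℝ => PsiC t * φ t) w]
  have heq : EqOn (fun t : ℝ => (t:ℂ)^(w-1) • ((fun u : ℝ => PsiC u * φ u) t⁻¹))
      (fun t : ℝ => ε • (-(1/2:ℂ) * ((t:ℂ)^(w-1) * φ t)
        + (1/2:ℂ) * ((t:ℂ)^(w + 1/2 - 1) * φ t)
        + (t:ℂ)^(w + 1/2 - 1) * (PsiC t * φ t))) (Ioi 0) := by
    intro t ht
    have ht' : (0:ℝ) < t := ht
    have htc : (t:ℂ) ≠ 0 := Complex.ofReal_ne_zero.mpr (ne_of_gt ht')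
    have e1 : (t:ℂ)^(w + 1/2 - 1) = (t:ℂ)^(w-1) * (t:ℂ)^(1/2 : ℂ) := by
      rw [← Complex.cpow_add _ _ htc]; congr 1; ring
    simp only [smul_eq_mul]
    rw [show (t:ℝ)⁻¹ = 1/t from (one_div t).symm, psiC_funeq ht', hsym t ht', e1]
    ring
  rw [mellin, setIntegral_congr_fun measurableSet_Ioi heq]
  have hI1 : IntegrableOn (fun t : ℝ => -(1/2:ℂ) * ((t:ℂ)^(w-1) * φ t)) (Ioi 0) :=
    (memH_integrableOn hφ w).const_mul _
  have hI2 : IntegrableOn (fun t : ℝ => (1/2:ℂ) * ((t:ℂ)^(w + 1/2 - 1) * φ t)) (Ioi 0) :=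
    (memH_integrableOn hφ (w + 1/2)).const_mul _
  have hI3 : IntegrableOn (fun t : ℝ => (t:ℂ)^(w + 1/2 - 1) * (PsiC t * φ t)) (Ioi 0) :=
    psi_phi_integrableOn hφ (w + 1/2)
  have hI12 : IntegrableOn (fun t : ℝ => -(1/2:ℂ) * ((t:ℂ)^(w-1) * φ t)
      + (1/2:ℂ) * ((t:ℂ)^(w + 1/2 - 1) * φ t)) (Ioi 0) := hI1.add hI2
  rw [integral_smul, MeasureTheory.integral_add hI12 hI3,
    MeasureTheory.integral_add hI1 hI2,
    MeasureTheory.integral_const_mul, MeasureTheory.integral_const_mul]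
  rw [smul_eq_mul, mellin_eq_integral φ w, mellin_eq_integral φ (w + 1/2),
    mellin_eq_integral (fun t => PsiC t * φ t) (w + 1/2)]

lemma step_eq {ε : ℂ} {φ : ℝ → ℂ} (hφ : MemH φ) (hε2 : ε * ε = 1)
    (hsym : ∀ t : ℝ, 0 < t → φ (1/t) = ε * φ t) (s : ℂ) :
    mellin (fun t => PsiC t * φ t) (s/2) - ε * mellin (fun t => PsiC t * φ t) ((1-s)/2)
      = (1/2:ℂ) * mellin φ ((s-1)/2) - (1/2:ℂ) * mellin φ (s/2) := by
  have hk := mellin_psiphi_funeq hφ hsym (-(s/2))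
  rw [neg_neg, show -(s/2) + 1/2 = (1-s)/2 by ring] at hk
  have hm1 : mellin φ (-(s/2)) = ε * mellin φ (s/2) := mellin_sym hsym (s/2)
  have hm2 : mellin φ ((1-s)/2) = ε * mellin φ ((s-1)/2) := by
    have h := mellin_sym hsym ((s-1)/2)
    rw [show -((s-1)/2) = (1-s)/2 by ring] at h
    exact h
  rw [hk, hm1, hm2]
  linear_combination ((1/2:ℂ) * mellin φ ((s-1)/2) - (1/2:ℂ) * mellin φ (s/2)) * hε2
/-- telescoped symmetry defect of `Ξ^m_φ` for `τ`-(anti)symmetric `φ`. -/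
theorem stmt4 (ε : ℂ) (hε : ε = 1 ∨ ε = -1) (φ : ℝ → ℂ) (hφ : MemH φ)
    (hsym : ∀ t : ℝ, 0 < t → φ (1 / t) = ε * φ t) :
    (∀ s : ℂ, IntegrableOn (fun t : ℝ => (t : ℂ) ^ (s / 2 - 1) * PsiC t * φ t) (Ioi 0)) ∧
    ∀ (m : ℕ) (s : ℂ),
      (∑ l ∈ Finset.range (m + 1),
          ∫ t in Ioi (0 : ℝ), (t : ℂ) ^ ((s + (l : ℂ)) / 2 - 1) * PsiC t * φ t)
        - ε * (∑ l ∈ Finset.range (m + 1),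
          ∫ t in Ioi (0 : ℝ), (t : ℂ) ^ ((1 - (m : ℂ) - s + (l : ℂ)) / 2 - 1) * PsiC t * φ t)
      = (1 / 2 : ℂ) * mellin φ ((s - 1) / 2) - (1 / 2 : ℂ) * mellin φ ((s + (m : ℂ)) / 2) := by
  have hε2 : ε * ε = 1 := by rcases hε with h | h <;> rw [h] <;> norm_num
  constructor
  · intro s
    have h := psi_phi_integrableOn hφ (s/2)
    simpa [mul_assoc] using h
  · intro m s
    have hGdef : ∀ w : ℂ, (∫ t in Ioi (0:ℝ), (t:ℂ)^(w-1) * PsiC t * φ t)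
        = mellin (fun t => PsiC t * φ t) w := by
      intro w
      rw [mellin_eq_integral]
      exact setIntegral_congr_fun measurableSet_Ioi (fun t ht => by ring)
    simp only [hGdef]
    have hrefl : ∑ l ∈ Finset.range (m+1),
          mellin (fun t => PsiC t * φ t) ((1 - (m:ℂ) - s + (l:ℂ))/2)
        = ∑ l ∈ Finset.range (m+1),
          mellin (fun t => PsiC t * φ t) ((1 - (s + (l:ℂ)))/2) := by
      rw [← Finset.sum_range_reflect
        (fun l => mellin (fun t => PsiC t * φ t) ((1 - (s + (l:ℂ)))/2)) (m+1)]
      refine Finset.sum_congr rfl (fun j hj => ?_)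
      have hj' : j ≤ m := Nat.lt_succ_iff.mp (Finset.mem_range.mp hj)
      show mellin (fun t => PsiC t * φ t) ((1 - (m:ℂ) - s + (j:ℂ))/2)
        = mellin (fun t => PsiC t * φ t) ((1 - (s + ((m + 1 - 1 - j : ℕ):ℂ)))/2)
      congr 1
      rw [Nat.add_sub_cancel]
      push_cast [Nat.cast_sub hj']
      ring
    rw [hrefl, Finset.mul_sum, ← Finset.sum_sub_distrib]
    have hsum : ∑ l ∈ Finset.range (m+1),
        (mellin (fun t => PsiC t * φ t) ((s + (l:ℂ))/2)
          - ε * mellin (fun t => PsiC t * φ t) ((1 - (s + (l:ℂ)))/2))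
        = ∑ l ∈ Finset.range (m+1),
          ((fun l : ℕ => (1/2:ℂ) * mellin φ ((s + (l:ℂ) - 1)/2)) l
            - (fun l : ℕ => (1/2:ℂ) * mellin φ ((s + (l:ℂ) - 1)/2)) (l+1)) := by
      refine Finset.sum_congr rfl (fun l _ => ?_)
      show _ = (1/2:ℂ) * mellin φ ((s + (l:ℂ) - 1)/2)
        - (1/2:ℂ) * mellin φ ((s + (((l+1):ℕ):ℂ) - 1)/2)
      rw [step_eq hφ hε2 hsym (s + (l:ℂ))]
      have e : (s + (((l+1):ℕ):ℂ) - 1)/2 = (s + (l:ℂ))/2 := by push_cast; ring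
      rw [e]
    rw [hsum, Finset.sum_range_sub' (fun l : ℕ => (1/2:ℂ) * mellin φ ((s + (l:ℂ) - 1)/2))]
    show (1/2:ℂ) * mellin φ ((s + ((0:ℕ):ℂ) - 1)/2)
        - (1/2:ℂ) * mellin φ ((s + (((m+1):ℕ):ℂ) - 1)/2) = _
    have e0 : (s + ((0:ℕ):ℂ) - 1)/2 = (s - 1)/2 := by push_cast; ring
    have em : (s + (((m+1):ℕ):ℂ) - 1)/2 = (s + (m:ℂ))/2 := by push_cast; ring
    rw [e0, em]
end
end

section
/- Let ℏ ∈ ℝ and V ∈ ℋ. Then: (i) the operator f ↦ ½·(V + τ_ℏ conj(V)) ⊛ f is symmetric with respect to ⟨·,·⟩_ℏ, i.e. ⟨½(V + τ_ℏ conj(V)) ⊛ f, g⟩_ℏ = ⟨f, ½(V + τ_ℏ conj(V)) ⊛ g⟩_ℏ for all f, g ∈ ℋ; (ii) the operator f ↦ (i/2)·(V − τ_ℏ conj(V)) ⊛ f is symmetric with respect to ⟨·,·⟩_ℏ; (iii) if V is real-valued, then the operators f ↦ τ_ℏ(V ⊛ f) and f ↦ V ⊛ (τ_ℏ f) are both symmetric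 with respect to ⟨·,·⟩_ℏ. -/
open MeasureTheory Filter Set ComplexConjugate

noncomputable section

def Decay (f : ℝ → ℂ) : Prop :=
  ContinuousOn f (Ioi 0) ∧
  ∀ k : ℕ, ∃ C : ℝ, 0 ≤ C ∧ ∀ t ∈ Ioi (0:ℝ), ‖f t‖ ≤ C * (min t t⁻¹) ^ k


lemma decay_of_memH {f : ℝ → ℂ} (hf : MemH f) : Decay f := by
  refine ⟨hf.1.continuousOn, fun k => ?_⟩
  have htop : Tendsto (fun t : ℝ => t ^ k * ‖f t‖) atTop (nhds 0) := by
    simpa [iteratedDerivWithin_zero] using (hf.2 0).1 k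
  have hzero : Tendsto (fun t : ℝ => t ^ (-(k : ℝ)) * ‖f t‖) (nhdsWithin 0 (Ioi 0)) (nhds 0) := by
    simpa [iteratedDerivWithin_zero] using (hf.2 0).2 k
  obtain ⟨M₀, hM₀⟩ := eventually_atTop.mp (htop.eventually_lt_const one_pos)
  set M : ℝ := max M₀ 1 with hM
  have hM1 : (1:ℝ) ≤ M := le_max_right _ _
  have hMpos : (0:ℝ) < M := lt_of_lt_of_le one_pos hM1
  have hz := hzero.eventually_lt_const one_pos
  rw [eventually_nhdsWithin_iff] at hz
  obtain ⟨ε₀, hε₀pos, hε₀⟩ := Metric.eventually_nhds_iff.mp hz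
  set ε : ℝ := min (ε₀/2) 1 with hε
  have hεpos : 0 < ε := lt_min (by linarith) one_pos
  have hε1 : ε ≤ 1 := min_le_right _ _
  have hεsmall : ∀ t : ℝ, 0 < t → t < ε → t ^ (-(k:ℝ)) * ‖f t‖ < 1 := by
    intro t ht htε
    refine hε₀ ?_ ht
    rw [Real.dist_eq]
    have h1 : |t - 0| = t := by rw [sub_zero, abs_of_pos ht]
    rw [h1]
    calc t < ε := htε
      _ ≤ ε₀/2 := min_le_left _ _
      _ < ε₀ := by linarith
  have hsub : Icc ε M ⊆ Ioi 0 := fun x hx => lt_of_lt_of_le hεpos hx.1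
  obtain ⟨B, hB⟩ := isCompact_Icc.exists_bound_of_continuousOn (hf.1.continuousOn.mono hsub)
  set δ : ℝ := min ε M⁻¹ with hδ
  have hδpos : 0 < δ := lt_min hεpos (inv_pos.mpr hMpos)
  set C : ℝ := max 1 (max B 0 / δ ^ k) with hC
  have hC1 : (1:ℝ) ≤ C := le_max_left _ _
  have hC0 : 0 ≤ C := le_trans zero_le_one hC1
  refine ⟨C, hC0, fun t ht => ?_⟩
  have ht0 : (0:ℝ) < t := ht
  have htinv : (0:ℝ) < t⁻¹ := inv_pos.mpr ht0
  have hcancel : t * t⁻¹ = 1 := mul_inv_cancel₀ (ne_of_gt ht0)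
  have hminpos : 0 < min t t⁻¹ := lt_min ht0 htinv
  have htk : (0:ℝ) < t ^ k := pow_pos ht0 k
  rcases lt_or_ge t ε with hcase | hcase
  · -- small t
    have h1 : t ^ (-(k:ℝ)) * ‖f t‖ < 1 := hεsmall t ht0 hcase
    have ht1 : t ≤ 1 := le_of_lt (lt_of_lt_of_le hcase hε1)
    have h2 : t ≤ t⁻¹ := by nlinarith
    have hmin : min t t⁻¹ = t := min_eq_left h2
    rw [Real.rpow_neg ht0.le, Real.rpow_natCast] at h1
    have h3 : ‖f t‖ ≤ t ^ k := by
      have h4 := mul_lt_mul_of_pos_left h1 htk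
      rw [mul_one, ← mul_assoc, mul_inv_cancel₀ (ne_of_gt htk), one_mul] at h4
      exact h4.le
    rw [hmin]
    nlinarith
  · rcases le_or_gt t M with hmid | hbig
    · -- middle
      have hBt : ‖f t‖ ≤ B := hB t ⟨hcase, hmid⟩
      have hδmin : δ ≤ min t t⁻¹ := by
        apply le_min
        · exact le_trans (min_le_left _ _) hcase
        · refine le_trans (min_le_right _ _) ?_
          have hMc : M * M⁻¹ = 1 := mul_inv_cancel₀ (ne_of_gt hMpos)
          nlinarith
      have hδk : δ ^ k ≤ (min t t⁻¹) ^ k := pow_le_pow_left₀ hδpos.le hδmin k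
      have hδkpos : (0:ℝ) < δ ^ k := pow_pos hδpos k
      have h5 : max B 0 / δ ^ k ≤ C := le_max_right _ _
      calc ‖f t‖ ≤ B := hBt
        _ ≤ max B 0 := le_max_left _ _
        _ = (max B 0 / δ ^ k) * δ ^ k := by field_simp
        _ ≤ C * δ ^ k := mul_le_mul_of_nonneg_right h5 hδkpos.le
        _ ≤ C * (min t t⁻¹) ^ k := mul_le_mul_of_nonneg_left hδk hC0
    · -- big t
      have h1 : t ^ k * ‖f t‖ < 1 := hM₀ t (le_trans (le_max_left _ _) hbig.le)
      have ht1 : (1:ℝ) ≤ t := le_trans hM1 hbig.le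
      have h2 : t⁻¹ ≤ t := by nlinarith
      have hmin : min t t⁻¹ = t⁻¹ := min_eq_right h2
      have h3 : ‖f t‖ ≤ (t⁻¹) ^ k := by
        rw [inv_pow]
        have h4 := mul_lt_mul_of_pos_left h1 (inv_pos.mpr htk)
        rw [mul_one, ← mul_assoc, inv_mul_cancel₀ (ne_of_gt htk), one_mul] at h4
        exact h4.le
      rw [hmin]
      nlinarith [pow_pos (inv_pos.mpr ht0) k]


lemma rpow_mul_min_pow_le {t : ℝ} (ht : 0 < t) {c : ℝ} {k : ℕ} (hk : |c| ≤ (k:ℝ)) :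
    t ^ c * (min t t⁻¹) ^ k ≤ 1 := by
  have hinv : (0:ℝ) < t⁻¹ := inv_pos.mpr ht
  have hcan : t * t⁻¹ = 1 := mul_inv_cancel₀ (ne_of_gt ht)
  rcases le_total 1 t with h1 | h1
  · have htinv : t⁻¹ ≤ t := by nlinarith
    rw [min_eq_right htinv]
    have e : (t⁻¹:ℝ) ^ k = t ^ (-(k:ℝ)) := by
      rw [← Real.rpow_natCast t⁻¹ k, Real.inv_rpow ht.le, ← Real.rpow_neg ht.le]
    rw [e, ← Real.rpow_add ht]
    apply Real.rpow_le_one_of_one_le_of_nonpos h1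
    have hc := le_abs_self c
    linarith
  · have htle : t ≤ t⁻¹ := by nlinarith
    rw [min_eq_left htle, ← Real.rpow_natCast t k, ← Real.rpow_add ht]
    apply Real.rpow_le_one ht.le h1
    have hc := neg_abs_le c
    linarith

lemma decay_bdd {f : ℝ → ℂ} (hf : Decay f) : ∃ C : ℝ, 0 ≤ C ∧ ∀ t ∈ Ioi (0:ℝ), ‖f t‖ ≤ C := by
  obtain ⟨C, hC0, hC⟩ := hf.2 0
  exact ⟨C, hC0, fun t ht => by simpa using hC t ht⟩

lemma decay_conj {f : ℝ → ℂ} (hf : Decay f) : Decay (fun t => conj (f t)) := by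
  refine ⟨continuous_star.comp_continuousOn hf.1, fun k => ?_⟩
  obtain ⟨C, hC0, hC⟩ := hf.2 k
  exact ⟨C, hC0, fun t ht => by simpa using hC t ht⟩

lemma decay_tau (hb : ℝ) {f : ℝ → ℂ} (hf : Decay f) : Decay (tauOp hb f) := by
  constructor
  · apply ContinuousOn.mul
    · apply Complex.continuous_ofReal.comp_continuousOn
      exact continuousOn_id.rpow_const fun x hx => Or.inl (ne_of_gt hx)
    · apply hf.1.comp
      · exact continuousOn_const.div continuousOn_id fun x hx => ne_of_gt hx
      · intro x hx
        have hx0 : (0:ℝ) < x := hx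
        simpa [mem_Ioi] using by positivity
  · intro k
    set m : ℕ := k + ⌈|1 + hb|⌉₊ with hm
    obtain ⟨C, hC0, hC⟩ := hf.2 m
    refine ⟨C, hC0, fun t ht => ?_⟩
    have ht0 : (0:ℝ) < t := ht
    have hinv0 : (0:ℝ) < t⁻¹ := inv_pos.mpr ht0
    have hnorm : ‖tauOp hb f t‖ = t ^ (-(1+hb)) * ‖f (1/t)‖ := by
      rw [tauOp, norm_mul, Complex.norm_real, Real.norm_eq_abs, abs_of_pos (Real.rpow_pos_of_pos ht0 _)]
    rw [hnorm]
    have hmem : (1/t : ℝ) ∈ Ioi (0:ℝ) := by simpa [mem_Ioi] using by positivity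
    have hb1 := hC (1/t) hmem
    have hminswap : min (1/t : ℝ) (1/t)⁻¹ = min t t⁻¹ := by
      rw [one_div, inv_inv, min_comm]
    rw [hminswap] at hb1
    have hminpos : 0 < min t t⁻¹ := lt_min ht0 hinv0
    have hsplit : (min t t⁻¹) ^ m = (min t t⁻¹) ^ (⌈|1 + hb|⌉₊) * (min t t⁻¹) ^ k := by
      rw [hm, pow_add, mul_comm]
    have hkey : t ^ (-(1+hb)) * (min t t⁻¹) ^ (⌈|1 + hb|⌉₊) ≤ 1 := by
      apply rpow_mul_min_pow_le ht0
      rw [abs_neg]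
      exact Nat.le_ceil _
    calc t ^ (-(1+hb)) * ‖f (1/t)‖
        ≤ t ^ (-(1+hb)) * (C * (min t t⁻¹) ^ m) := by
          apply mul_le_mul_of_nonneg_left hb1 (Real.rpow_pos_of_pos ht0 _).le
      _ = (t ^ (-(1+hb)) * (min t t⁻¹) ^ (⌈|1 + hb|⌉₊)) * (C * (min t t⁻¹) ^ k) := by
          rw [hsplit]; ring
      _ ≤ 1 * (C * (min t t⁻¹) ^ k) := by
          apply mul_le_mul_of_nonneg_right hkey
          positivity
      _ = C * (min t t⁻¹) ^ k := one_mul _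

lemma decay_integrable {f : ℝ → ℂ} (hf : Decay f) (a : ℝ) :
    IntegrableOn (fun t : ℝ => t ^ a * ‖f t‖) (Ioi (0:ℝ)) := by
  set k : ℕ := ⌈|a|⌉₊ + 2 with hk
  obtain ⟨C, hC0, hC⟩ := hf.2 k
  have hak2 : |a| + 2 ≤ (k:ℝ) := by
    rw [hk]
    push_cast
    have := Nat.le_ceil |a|
    linarith
  have hak : |a| ≤ (k:ℝ) := by linarith
  have hcont : ContinuousOn (fun t : ℝ => t ^ a * ‖f t‖) (Ioi 0) :=
    (continuousOn_id.rpow_const fun x hx => Or.inl (ne_of_gt hx)).mul hf.1.norm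
  have hIoc : Ioc (0:ℝ) 1 ⊆ Ioi 0 := Ioc_subset_Ioi_self
  have hIoi1 : Ioi (1:ℝ) ⊆ Ioi 0 := Ioi_subset_Ioi zero_le_one
  rw [← Ioc_union_Ioi_eq_Ioi (zero_le_one : (0:ℝ) ≤ 1)]
  apply IntegrableOn.union
  · -- near zero
    have hmaj : IntegrableOn (fun t : ℝ => C * t ^ (a + (k:ℝ))) (Ioc (0:ℝ) 1) := by
      apply Integrable.const_mul
      have hbase : IntervalIntegrable (fun t : ℝ => t ^ (a + (k:ℝ))) volume 0 1 := by
        apply intervalIntegral.intervalIntegrable_rpow'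
        have := abs_nonneg a
        have := neg_abs_le a
        linarith
      exact (intervalIntegrable_iff_integrableOn_Ioc_of_le (zero_le_one : (0:ℝ) ≤ 1)).mp hbase
    apply Integrable.mono' hmaj ((hcont.mono hIoc).aestronglyMeasurable measurableSet_Ioc)
    filter_upwards [ae_restrict_mem measurableSet_Ioc] with t ht
    have ht0 : (0:ℝ) < t := ht.1
    have hrp : (0:ℝ) < t ^ a := Real.rpow_pos_of_pos ht0 a
    have hn : ‖t ^ a * ‖f t‖‖ = t ^ a * ‖f t‖ := by
      rw [Real.norm_eq_abs, abs_of_nonneg (by positivity)]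
    rw [hn]
    have hmin : min t t⁻¹ ≤ t := min_le_left _ _
    have hminpos : 0 ≤ min t t⁻¹ := le_min ht0.le (inv_pos.mpr ht0).le
    calc t ^ a * ‖f t‖ ≤ t ^ a * (C * (min t t⁻¹) ^ k) :=
          mul_le_mul_of_nonneg_left (hC t (hIoc ht)) hrp.le
      _ ≤ t ^ a * (C * t ^ k) := by
          apply mul_le_mul_of_nonneg_left _ hrp.le
          exact mul_le_mul_of_nonneg_left (pow_le_pow_left₀ hminpos hmin k) hC0
      _ = C * t ^ (a + (k:ℝ)) := by
          rw [Real.rpow_add ht0, ← Real.rpow_natCast t k]; ring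
  · -- near infinity
    have hmaj : IntegrableOn (fun t : ℝ => C * t ^ (a - (k:ℝ))) (Ioi (1:ℝ)) := by
      apply Integrable.const_mul
      apply integrableOn_Ioi_rpow_of_lt _ one_pos
      have := le_abs_self a
      linarith
    apply Integrable.mono' hmaj ((hcont.mono hIoi1).aestronglyMeasurable measurableSet_Ioi)
    filter_upwards [ae_restrict_mem measurableSet_Ioi] with t ht
    have ht1 : (1:ℝ) < t := ht
    have ht0 : (0:ℝ) < t := lt_trans one_pos ht1
    have hrp : (0:ℝ) < t ^ a := Real.rpow_pos_of_pos ht0 a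
    have hn : ‖t ^ a * ‖f t‖‖ = t ^ a * ‖f t‖ := by
      rw [Real.norm_eq_abs, abs_of_nonneg (by positivity)]
    rw [hn]
    have hmin : min t t⁻¹ ≤ t⁻¹ := min_le_right _ _
    have hminpos : 0 ≤ min t t⁻¹ := le_min ht0.le (inv_pos.mpr ht0).le
    calc t ^ a * ‖f t‖ ≤ t ^ a * (C * (min t t⁻¹) ^ k) :=
          mul_le_mul_of_nonneg_left (hC t (hIoi1 ht)) hrp.le
      _ ≤ t ^ a * (C * (t⁻¹) ^ k) := by
          apply mul_le_mul_of_nonneg_left _ hrp.le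
          exact mul_le_mul_of_nonneg_left (pow_le_pow_left₀ hminpos hmin k) hC0
      _ = C * t ^ (a - (k:ℝ)) := by
          have hne : (t:ℝ) ^ k ≠ 0 := (pow_pos ht0 k).ne'
          rw [Real.rpow_sub ht0, Real.rpow_natCast, inv_pow]
          field_simp


lemma rpadd {t : ℝ} (ht : 0 < t) {c d e : ℝ} (h : c + d = e) : t ^ c * t ^ d = t ^ e := by
  rw [← Real.rpow_add ht, h]

lemma rpadd1 {t : ℝ} (ht : 0 < t) {c e : ℝ} (h : c + 1 = e) : t ^ c * t = t ^ e := by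
  have h2 := rpadd ht (c := c) (d := 1) (e := e) h
  rwa [Real.rpow_one] at h2

lemma innerH_congr {hb : ℝ} {u u' v v' : ℝ → ℂ} (hu : EqOn u u' (Ioi 0))
    (hv : EqOn v v' (Ioi 0)) : innerH hb u v = innerH hb u' v' := by
  unfold innerH
  apply setIntegral_congr_fun measurableSet_Ioi
  intro t ht
  dsimp only
  rw [hu ht, hv ht]

lemma mconv_congr {W W' f f' : ℝ → ℂ} (hW : EqOn W W' (Ioi 0)) (hf : EqOn f f' (Ioi 0)) :
    EqOn (mconv W f) (mconv W' f') (Ioi 0) := by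
  intro t ht
  unfold mconv
  apply setIntegral_congr_fun measurableSet_Ioi
  intro y hy
  dsimp only
  have hdiv : t / y ∈ Ioi (0:ℝ) := by
    have ht0 : (0:ℝ) < t := ht
    have hy0 : (0:ℝ) < y := hy
    simpa [mem_Ioi] using div_pos ht0 hy0
  rw [hW hdiv, hf hy]

lemma tau_tau (hb : ℝ) (f : ℝ → ℂ) : EqOn (tauOp hb (tauOp hb f)) f (Ioi 0) := by
  intro t ht
  have ht0 : (0:ℝ) < t := ht
  have hinv : (0:ℝ) < t⁻¹ := inv_pos.mpr ht0
  unfold tauOp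
  simp only [one_div, inv_inv]
  have h1 : (t:ℝ) ^ (-(1+hb)) * (t⁻¹) ^ (-(1+hb)) = 1 := by
    rw [← Real.mul_rpow ht0.le hinv.le, mul_inv_cancel₀ (ne_of_gt ht0), Real.one_rpow]
  rw [← mul_assoc, ← Complex.ofReal_mul, h1, Complex.ofReal_one, one_mul]

lemma tau_symm (hb : ℝ) (u g : ℝ → ℂ) :
    innerH hb (tauOp hb u) g = innerH hb u (tauOp hb g) := by
  have key := integral_comp_rpow_Ioi
    (fun s : ℝ => ((s ^ (-1:ℝ) : ℝ) : ℂ) * conj (u s) * g s⁻¹) (p := (-1:ℝ)) (by norm_num)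
  unfold innerH
  calc (∫ t in Ioi (0:ℝ), ((t ^ hb : ℝ) : ℂ) * conj (tauOp hb u t) * g t)
      = ∫ x in Ioi (0:ℝ), (|(-1:ℝ)| * x ^ ((-1:ℝ) - 1)) •
          ((fun s : ℝ => ((s ^ (-1:ℝ) : ℝ) : ℂ) * conj (u s) * g s⁻¹) (x ^ (-1:ℝ))) := by
        apply setIntegral_congr_fun measurableSet_Ioi
        intro t ht
        have ht0 : (0:ℝ) < t := ht
        dsimp only
        simp only [tauOp, Real.rpow_neg_one, inv_inv, abs_neg, abs_one, one_mul, map_mul,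
          Complex.conj_ofReal, Complex.real_smul, Complex.ofReal_mul, one_div]
        have e1 : t ^ hb * t ^ (-(1+hb)) = t ^ ((-1:ℝ) - 1) * t := by
          rw [rpadd ht0 (by ring : hb + -(1+hb) = (-1:ℝ)),
            rpadd1 ht0 (by norm_num : ((-1:ℝ) - 1) + 1 = (-1:ℝ))]
        have e1' : ((t ^ hb : ℝ) : ℂ) * ((t ^ (-(1+hb)) : ℝ) : ℂ)
            = ((t ^ ((-1:ℝ) - 1) : ℝ) : ℂ) * (t : ℂ) := by exact_mod_cast e1
        linear_combination (conj (u t⁻¹) * g t) * e1'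
    _ = ∫ s in Ioi (0:ℝ), ((s ^ (-1:ℝ) : ℝ) : ℂ) * conj (u s) * g s⁻¹ := key
    _ = ∫ t in Ioi (0:ℝ), ((t ^ hb : ℝ) : ℂ) * conj (u t) * tauOp hb g t := by
        apply setIntegral_congr_fun measurableSet_Ioi
        intro t ht
        have ht0 : (0:ℝ) < t := ht
        dsimp only
        simp only [tauOp, one_div]
        have e1 : t ^ hb * t ^ (-(1+hb)) = t ^ (-1:ℝ) :=
          rpadd ht0 (by ring : hb + -(1+hb) = (-1:ℝ))
        have e1' : ((t ^ hb : ℝ) : ℂ) * ((t ^ (-(1+hb)) : ℝ) : ℂ) = ((t ^ (-1:ℝ) : ℝ) : ℂ) := by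
          exact_mod_cast e1
        linear_combination (-(conj (u t) * g t⁻¹)) * e1'

lemma tau_mconv (hb : ℝ) (W g : ℝ → ℂ) :
    EqOn (tauOp hb (mconv W g)) (mconv (tauOp hb W) (tauOp hb g)) (Ioi 0) := by
  intro t ht
  have ht0 : (0:ℝ) < t := ht
  have key := integral_comp_rpow_Ioi
    (fun y : ℝ => W (1 / t / y) * g y / (y : ℂ)) (p := (-1:ℝ)) (by norm_num)
  show tauOp hb (mconv W g) t = mconv (tauOp hb W) (tauOp hb g) t
  have step1 : mconv (tauOp hb W) (tauOp hb g) t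
      = ∫ y in Ioi (0:ℝ), ((t ^ (-(1+hb)) : ℝ) : ℂ) * (W (y / t) * g (1 / y) / (y : ℂ)) := by
    unfold mconv tauOp
    apply setIntegral_congr_fun measurableSet_Ioi
    intro y hy
    dsimp only
    have hy0 : (0:ℝ) < y := hy
    have e1 : (t / y) ^ (-(1+hb)) * y ^ (-(1+hb)) = t ^ (-(1+hb)) := by
      rw [← Real.mul_rpow (by positivity) hy0.le, div_mul_cancel₀ _ (ne_of_gt hy0)]
    have e1' : (((t / y) ^ (-(1+hb)) : ℝ) : ℂ) * ((y ^ (-(1+hb)) : ℝ) : ℂ)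
        = ((t ^ (-(1+hb)) : ℝ) : ℂ) := by exact_mod_cast e1
    rw [one_div_div]
    linear_combination (W (y / t) * g (1/y) / (y:ℂ)) * e1'
  have step3 : (∫ y in Ioi (0:ℝ), W (y / t) * g (1 / y) / (y : ℂ))
      = ∫ y in Ioi (0:ℝ), W (1 / t / y) * g y / (y : ℂ) := by
    rw [← key]
    apply setIntegral_congr_fun measurableSet_Ioi
    intro x hx
    have hx0 : (0:ℝ) < x := hx
    dsimp only
    simp only [Real.rpow_neg_one, abs_neg, abs_one, one_mul, Complex.real_smul,
      Complex.ofReal_mul, one_div, Complex.ofReal_inv, inv_inv]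
    have e2 : (t⁻¹ / x⁻¹ : ℝ) = x / t := by field_simp
    rw [e2]
    have e5 : ((x:ℂ))⁻¹⁻¹ = (x:ℂ) := inv_inv _
    rw [div_eq_mul_inv _ ((x:ℂ))⁻¹, e5]
    have e3 : x ^ ((-1:ℝ) - 1) * x = x⁻¹ := by
      rw [rpadd1 hx0 (by norm_num : ((-1:ℝ) - 1) + 1 = (-1:ℝ)), Real.rpow_neg_one]
    have e3' : ((x ^ ((-1:ℝ) - 1) : ℝ) : ℂ) * (x : ℂ) = ((x:ℂ))⁻¹ := by
      have h5 := congrArg (fun r : ℝ => (r : ℂ)) e3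
      push_cast at h5
      exact h5
    linear_combination (-(W (x / t) * g x⁻¹)) * e3'
  rw [step1, integral_const_mul, step3]
  rfl

lemma adjoint (hb : ℝ) {W f g : ℝ → ℂ} (hWc : ContinuousOn W (Ioi 0))
    (hWb : ∃ C : ℝ, 0 ≤ C ∧ ∀ t ∈ Ioi (0:ℝ), ‖W t‖ ≤ C)
    (hf : Decay f) (hg : Decay g) :
    innerH hb (mconv W f) g
      = innerH hb f (mconv (tauOp hb fun x => conj (W x)) g) := by
  obtain ⟨C, hC0, hC⟩ := hWb
  set F : ℝ → ℝ → ℂ :=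
    fun t y => ((t ^ hb : ℝ) : ℂ) * conj (W (t / y) * f y / (y : ℂ)) * g t with hF
  -- integrability on the product
  have hInt : Integrable (Function.uncurry F)
      ((volume.restrict (Ioi (0:ℝ))).prod (volume.restrict (Ioi (0:ℝ)))) := by
    rw [Measure.prod_restrict]
    have hmeas : MeasurableSet (Ioi (0:ℝ) ×ˢ Ioi (0:ℝ)) :=
      measurableSet_Ioi.prod measurableSet_Ioi
    have hcont : ContinuousOn (Function.uncurry F) (Ioi (0:ℝ) ×ˢ Ioi (0:ℝ)) := by
      have hA : ContinuousOn (fun p : ℝ × ℝ => ((p.1 ^ hb : ℝ) : ℂ))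
          (Ioi (0:ℝ) ×ˢ Ioi (0:ℝ)) :=
        Complex.continuous_ofReal.comp_continuousOn
          (continuousOn_fst.rpow_const fun p hp => Or.inl (ne_of_gt hp.1))
      have hdiv : ContinuousOn (fun p : ℝ × ℝ => p.1 / p.2) (Ioi (0:ℝ) ×ˢ Ioi (0:ℝ)) :=
        continuousOn_fst.div continuousOn_snd fun p hp => ne_of_gt hp.2
      have hWcomp : ContinuousOn (fun p : ℝ × ℝ => W (p.1 / p.2)) (Ioi (0:ℝ) ×ˢ Ioi (0:ℝ)) :=
        hWc.comp hdiv fun p hp => mem_Ioi.mpr (div_pos hp.1 hp.2)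
      have hfcomp : ContinuousOn (fun p : ℝ × ℝ => f p.2) (Ioi (0:ℝ) ×ˢ Ioi (0:ℝ)) :=
        hf.1.comp continuousOn_snd fun p hp => hp.2
      have hgcomp : ContinuousOn (fun p : ℝ × ℝ => g p.1) (Ioi (0:ℝ) ×ˢ Ioi (0:ℝ)) :=
        hg.1.comp continuousOn_fst fun p hp => hp.1
      have hycast : ContinuousOn (fun p : ℝ × ℝ => ((p.2 : ℝ) : ℂ)) (Ioi (0:ℝ) ×ˢ Ioi (0:ℝ)) :=
        Complex.continuous_ofReal.comp_continuousOn continuousOn_snd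
      have hBin : ContinuousOn (fun p : ℝ × ℝ => W (p.1 / p.2) * f p.2 / ((p.2 : ℝ) : ℂ))
          (Ioi (0:ℝ) ×ˢ Ioi (0:ℝ)) := by
        apply (hWcomp.mul hfcomp).div hycast
        intro p hp
        exact_mod_cast ne_of_gt hp.2
      exact (hA.mul (continuous_star.comp_continuousOn hBin)).mul hgcomp
    have haesm : AEStronglyMeasurable (Function.uncurry F)
        ((volume.prod volume).restrict (Ioi (0:ℝ) ×ˢ Ioi (0:ℝ))) :=
      hcont.aestronglyMeasurable hmeas
    have hΦ : IntegrableOn (fun t : ℝ => t ^ hb * ‖g t‖) (Ioi (0:ℝ)) := decay_integrable hg hb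
    have hΨ : IntegrableOn (fun y : ℝ => C * (y ^ (-1:ℝ) * ‖f y‖)) (Ioi (0:ℝ)) :=
      (decay_integrable hf (-1)).const_mul C
    have hmaj : Integrable
        (fun p : ℝ × ℝ => (p.1 ^ hb * ‖g p.1‖) * (C * (p.2 ^ (-1:ℝ) * ‖f p.2‖)))
        ((volume.prod volume).restrict (Ioi (0:ℝ) ×ˢ Ioi (0:ℝ))) := by
      rw [← Measure.prod_restrict]
      exact hΦ.mul_prod hΨ
    apply Integrable.mono' hmaj haesm
    filter_upwards [ae_restrict_mem hmeas] with p hp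
    have ht0 : (0:ℝ) < p.1 := hp.1
    have hy0 : (0:ℝ) < p.2 := hp.2
    have hdivpos : (0:ℝ) < p.1 / p.2 := div_pos ht0 hy0
    have hnorm : ‖Function.uncurry F p‖
        = (p.1 ^ hb * ‖g p.1‖) * (‖W (p.1 / p.2)‖ * (p.2 ^ (-1:ℝ) * ‖f p.2‖)) := by
      simp only [Function.uncurry, hF, norm_mul, norm_div, RCLike.norm_conj,
        Complex.norm_real, Real.norm_eq_abs]
      rw [abs_of_pos (Real.rpow_pos_of_pos ht0 hb), abs_of_pos hy0, Real.rpow_neg_one]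
      field_simp
    rw [hnorm]
    have hWle : ‖W (p.1 / p.2)‖ ≤ C := hC _ hdivpos
    have h1 : (0:ℝ) ≤ p.1 ^ hb * ‖g p.1‖ := by positivity
    have h2 : (0:ℝ) ≤ p.2 ^ (-1:ℝ) * ‖f p.2‖ := by positivity
    apply mul_le_mul_of_nonneg_left _ h1
    exact mul_le_mul_of_nonneg_right hWle h2
  -- main computation
  calc innerH hb (mconv W f) g
      = ∫ t in Ioi (0:ℝ), ∫ y in Ioi (0:ℝ), F t y := by
        unfold innerH mconv
        apply setIntegral_congr_fun measurableSet_Ioi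
        intro t ht
        dsimp only
        rw [hF]
        dsimp only
        rw [integral_mul_const, integral_const_mul, integral_conj]
    _ = ∫ y in Ioi (0:ℝ), ∫ t in Ioi (0:ℝ), F t y := integral_integral_swap hInt
    _ = innerH hb f (mconv (tauOp hb fun x => conj (W x)) g) := by
        unfold innerH mconv
        apply setIntegral_congr_fun measurableSet_Ioi
        intro y hy
        have hy0 : (0:ℝ) < y := hy
        dsimp only
        rw [← integral_const_mul]
        apply setIntegral_congr_fun measurableSet_Ioi
        intro t ht
        have ht0 : (0:ℝ) < t := ht
        rw [hF]
        dsimp only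
        simp only [tauOp, one_div_div, map_mul, map_div₀, Complex.conj_ofReal]
        have h : y ^ hb * (y / t) ^ (-(1+hb)) * t⁻¹ = t ^ hb * y⁻¹ := by
          rw [Real.rpow_neg (by positivity), Real.div_rpow hy0.le ht0.le,
            Real.rpow_add hy0, Real.rpow_add ht0, Real.rpow_one, Real.rpow_one]
          have h1 : (0:ℝ) < t ^ hb := Real.rpow_pos_of_pos ht0 hb
          have h2 : (0:ℝ) < y ^ hb := Real.rpow_pos_of_pos hy0 hb
          field_simp
        have h' : ((y ^ hb : ℝ) : ℂ) * (((y / t) ^ (-(1+hb)) : ℝ) : ℂ) * ((t : ℝ) : ℂ)⁻¹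
            = ((t ^ hb : ℝ) : ℂ) * ((y : ℝ) : ℂ)⁻¹ := by exact_mod_cast h
        linear_combination (-(conj (W (t / y)) * conj (f y) * g t)) * h'

/-- the symmetrized convolution operators are symmetric w.r.t.
`⟨·,·⟩_ℏ`, and for real `V` also `τ_ℏ ∘ c_V` and `c_V ∘ τ_ℏ` are symmetric. -/
theorem stmt6 (hb : ℝ) (V : ℝ → ℂ) (hV : MemH V) :
    (∀ f g : ℝ → ℂ, MemH f → MemH g →
      innerH hb (mconv (fun t => (1 / 2 : ℂ) *
          (V t + tauOp hb (fun x => conj (V x)) t)) f) g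
        = innerH hb f (mconv (fun t => (1 / 2 : ℂ) *
          (V t + tauOp hb (fun x => conj (V x)) t)) g)) ∧
    (∀ f g : ℝ → ℂ, MemH f → MemH g →
      innerH hb (mconv (fun t => (Complex.I / 2) *
          (V t - tauOp hb (fun x => conj (V x)) t)) f) g
        = innerH hb f (mconv (fun t => (Complex.I / 2) *
          (V t - tauOp hb (fun x => conj (V x)) t)) g)) ∧
    ((∀ t : ℝ, 0 < t → (V t).im = 0) →
      ∀ f g : ℝ → ℂ, MemH f → MemH g →
        innerH hb (tauOp hb (mconv V f)) g = innerH hb f (tauOp hb (mconv V g)) ∧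
        innerH hb (mconv V (tauOp hb f)) g = innerH hb f (mconv V (tauOp hb g))) := by
  have hVd : Decay V := decay_of_memH hV
  have hτ : Decay (tauOp hb fun x => conj (V x)) := decay_tau hb (decay_conj hVd)
  obtain ⟨C1, hC10, hC1⟩ := decay_bdd hVd
  obtain ⟨C2, hC20, hC2⟩ := decay_bdd hτ
  have hone_inv : ∀ t : ℝ, 0 < t → (1/t : ℝ) ∈ Ioi (0:ℝ) := by
    intro t ht
    simpa [mem_Ioi] using by positivity
  have h1cancel : ∀ t : ℝ, 0 < t →
      ((t ^ (-(1+hb)) : ℝ) : ℂ) * (((t⁻¹) ^ (-(1+hb)) : ℝ) : ℂ) = 1 := by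
    intro t ht0
    have hinv : (0:ℝ) < t⁻¹ := inv_pos.mpr ht0
    have h1 : (t:ℝ) ^ (-(1+hb)) * (t⁻¹) ^ (-(1+hb)) = 1 := by
      rw [← Real.mul_rpow ht0.le hinv.le, mul_inv_cancel₀ (ne_of_gt ht0), Real.one_rpow]
    exact_mod_cast h1
  refine ⟨?_, ?_, ?_⟩
  · -- part (i)
    intro f g hf hg
    set W : ℝ → ℂ := fun t => (1 / 2 : ℂ) * (V t + tauOp hb (fun x => conj (V x)) t) with hWdef
    have hWc : ContinuousOn W (Ioi 0) := continuousOn_const.mul (hVd.1.add hτ.1)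
    have hhalf : ‖(1 / 2 : ℂ)‖ ≤ 1 := by
      have he : (1 / 2 : ℂ) = ((1/2 : ℝ) : ℂ) := by norm_num
      rw [he, Complex.norm_real, Real.norm_eq_abs, abs_of_nonneg (by norm_num : (0:ℝ) ≤ 1/2)]
      norm_num
    have hWb : ∃ C : ℝ, 0 ≤ C ∧ ∀ t ∈ Ioi (0:ℝ), ‖W t‖ ≤ C := by
      refine ⟨C1 + C2, by linarith, fun t ht => ?_⟩
      calc ‖W t‖ = ‖(1 / 2 : ℂ)‖ * ‖V t + tauOp hb (fun x => conj (V x)) t‖ := norm_mul _ _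
        _ ≤ 1 * (C1 + C2) := by
            apply mul_le_mul hhalf _ (norm_nonneg _) zero_le_one
            exact (norm_add_le _ _).trans (add_le_add (hC1 t ht) (hC2 t ht))
        _ = C1 + C2 := one_mul _
    have hEq : EqOn (tauOp hb fun x => conj (W x)) W (Ioi 0) := by
      intro t ht
      have ht0 : (0:ℝ) < t := ht
      simp only [tauOp, hWdef, one_div, inv_inv, map_mul, map_add, map_one, map_ofNat,
        map_inv₀, Complex.conj_conj, Complex.conj_ofReal]
      linear_combination ((2:ℂ)⁻¹ * V t) * h1cancel t ht0
    calc innerH hb (mconv W f) g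
        = innerH hb f (mconv (tauOp hb fun x => conj (W x)) g) :=
          adjoint hb hWc hWb (decay_of_memH hf) (decay_of_memH hg)
      _ = innerH hb f (mconv W g) :=
          innerH_congr (fun _ _ => rfl) (mconv_congr hEq (fun _ _ => rfl))
  · -- part (ii)
    intro f g hf hg
    set W : ℝ → ℂ := fun t => (Complex.I / 2) * (V t - tauOp hb (fun x => conj (V x)) t)
      with hWdef
    have hWc : ContinuousOn W (Ioi 0) := continuousOn_const.mul (hVd.1.sub hτ.1)
    have hhalf : ‖(Complex.I / 2 : ℂ)‖ ≤ 1 := by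
      have he : ‖(2:ℂ)‖ = 2 := by
        have : (2:ℂ) = ((2:ℝ):ℂ) := by norm_num
        rw [this, Complex.norm_real, Real.norm_eq_abs]
        norm_num
      rw [norm_div, Complex.norm_I, he]
      norm_num
    have hWb : ∃ C : ℝ, 0 ≤ C ∧ ∀ t ∈ Ioi (0:ℝ), ‖W t‖ ≤ C := by
      refine ⟨C1 + C2, by linarith, fun t ht => ?_⟩
      calc ‖W t‖ = ‖(Complex.I / 2 : ℂ)‖ * ‖V t - tauOp hb (fun x => conj (V x)) t‖ :=
            norm_mul _ _
        _ ≤ 1 * (C1 + C2) := by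
            apply mul_le_mul hhalf _ (norm_nonneg _) zero_le_one
            exact (norm_sub_le _ _).trans (add_le_add (hC1 t ht) (hC2 t ht))
        _ = C1 + C2 := one_mul _
    have hEq : EqOn (tauOp hb fun x => conj (W x)) W (Ioi 0) := by
      intro t ht
      have ht0 : (0:ℝ) < t := ht
      simp only [tauOp, hWdef, one_div, inv_inv, map_mul, map_sub, map_one, map_ofNat,
        map_inv₀, map_div₀, Complex.conj_I, Complex.conj_conj, Complex.conj_ofReal]
      linear_combination (Complex.I / 2 * V t) * h1cancel t ht0
    calc innerH hb (mconv W f) g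
        = innerH hb f (mconv (tauOp hb fun x => conj (W x)) g) :=
          adjoint hb hWc hWb (decay_of_memH hf) (decay_of_memH hg)
      _ = innerH hb f (mconv W g) :=
          innerH_congr (fun _ _ => rfl) (mconv_congr hEq (fun _ _ => rfl))
  · -- part (iii)
    intro hre f g hf hg
    have hfd : Decay f := decay_of_memH hf
    have hgd : Decay g := decay_of_memH hg
    have hVb : ∃ C : ℝ, 0 ≤ C ∧ ∀ t ∈ Ioi (0:ℝ), ‖V t‖ ≤ C := ⟨C1, hC10, hC1⟩
    have hconjV : EqOn (fun x => conj (V x)) V (Ioi 0) := fun t ht =>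
      Complex.conj_eq_iff_im.mpr (hre t ht)
    have hτeq : EqOn (tauOp hb fun x => conj (V x)) (tauOp hb V) (Ioi 0) := by
      intro t ht
      have ht0 : (0:ℝ) < t := ht
      simp only [tauOp]
      exact congrArg (fun z => ((t ^ (-(1+hb)) : ℝ) : ℂ) * z) (hconjV (hone_inv t ht0))
    have hττ : EqOn (tauOp hb (tauOp hb fun x => conj (V x))) V (Ioi 0) := fun t ht =>
      (tau_tau hb _ ht).trans (hconjV ht)
    constructor
    · calc innerH hb (tauOp hb (mconv V f)) g
          = innerH hb (mconv V f) (tauOp hb g) := tau_symm hb _ g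
        _ = innerH hb f (mconv (tauOp hb fun x => conj (V x)) (tauOp hb g)) :=
            adjoint hb hVd.1 hVb hfd (decay_tau hb hgd)
        _ = innerH hb f (mconv (tauOp hb V) (tauOp hb g)) :=
            innerH_congr (fun _ _ => rfl) (mconv_congr hτeq (fun _ _ => rfl))
        _ = innerH hb f (tauOp hb (mconv V g)) :=
            innerH_congr (fun _ _ => rfl) (fun t ht => (tau_mconv hb V g ht).symm)
    · calc innerH hb (mconv V (tauOp hb f)) g
          = innerH hb (tauOp hb f) (mconv (tauOp hb fun x => conj (V x)) g) :=
            adjoint hb hVd.1 hVb (decay_tau hb hfd) hgd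
        _ = innerH hb f (tauOp hb (mconv (tauOp hb fun x => conj (V x)) g)) :=
            tau_symm hb f _
        _ = innerH hb f (mconv (tauOp hb (tauOp hb fun x => conj (V x))) (tauOp hb g)) :=
            innerH_congr (fun _ _ => rfl) (tau_mconv hb _ g)
        _ = innerH hb f (mconv V (tauOp hb g)) :=
            innerH_congr (fun _ _ => rfl) (mconv_congr hττ (fun _ _ => rfl))
end
end

section
/- Let λ > 0. For all f₁, f₂ ∈ ℋ and all t > 0, all occurring series and integrals converge absolutely and H_λ(Z^λ(f₁ ⊛ f₂))(t) = ((H_λ(Z^λ f₁)) ⊛ f₂)(t) = (f₁ ⊛ (H_λ(Z^λ f₂)))(t). Consequently, for every V ∈ ℋ the operator f ↦ H_λ(Z^λ(V ⊛ f)) commutes with convolution: H_λ(Z^λ(V ⊛ f)) = V ⊛ H_λ(Z^λ f). -/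
open MeasureTheory Filter Set ComplexConjugate

noncomputable section

lemma bound_aux {g : ℝ → ℂ} (hc : ContinuousOn g (Ioi 0)) (r : ℝ)
    (h0 : ∀ᶠ t in nhdsWithin 0 (Ioi 0), ‖g t‖ ≤ t ^ r)
    (hT : ∀ᶠ t in atTop, ‖g t‖ ≤ t ^ r) :
    ∃ C, 0 < C ∧ ∀ t, 0 < t → ‖g t‖ ≤ C * t ^ r := by
  rw [Filter.eventually_iff, Metric.mem_nhdsWithin_iff] at h0
  obtain ⟨ε, εpos, hsub⟩ := h0
  obtain ⟨T, hT'⟩ := eventually_atTop.1 hT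
  set T' := max T 1 with hT'def
  have φcont : ContinuousOn (fun t : ℝ => ‖g t‖ * t ^ (-r)) (Icc (ε/2) T') := by
    intro x hx
    have hx0 : 0 < x := lt_of_lt_of_le (by positivity) hx.1
    exact ((hc x hx0).norm.mul
      ((Real.continuousAt_rpow_const x (-r) (Or.inl hx0.ne')).continuousWithinAt.mono
        (fun y hy => trivial))).mono (fun y hy => lt_of_lt_of_le (by positivity) hy.1)
  obtain ⟨M, hM⟩ := (isCompact_Icc).exists_bound_of_continuousOn φcont
  refine ⟨max 1 M, lt_of_lt_of_le zero_lt_one (le_max_left _ _), fun t ht => ?_⟩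
  have htr : (0:ℝ) < t ^ r := Real.rpow_pos_of_pos ht r
  rcases lt_or_ge t ε with hlt | hge
  · have : t ∈ {t | ‖g t‖ ≤ t ^ r} := hsub ⟨by simpa [Real.dist_eq, abs_of_pos ht] using hlt, ht⟩
    calc ‖g t‖ ≤ t ^ r := this
    _ ≤ max 1 M * t ^ r := le_mul_of_one_le_left htr.le (le_max_left _ _)
  · rcases le_or_gt t T' with hle | hgt
    · have : t ∈ Icc (ε/2) T' := ⟨le_trans (by linarith) hge, hle⟩
      have h2 := hM t this
      rw [Real.norm_eq_abs, abs_of_nonneg (by positivity)] at h2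
      have : ‖g t‖ * t ^ (-r) ≤ M := h2
      have h3 : ‖g t‖ ≤ M * t ^ r := by
        rw [Real.rpow_neg ht.le] at this
        calc ‖g t‖ = ‖g t‖ * (t ^ r)⁻¹ * t ^ r := by field_simp
        _ ≤ M * t ^ r := mul_le_mul_of_nonneg_right this htr.le
      exact h3.trans (mul_le_mul_of_nonneg_right (le_max_right _ _) htr.le)
    · have : ‖g t‖ ≤ t ^ r := hT' t (le_trans (le_max_left _ _) hgt.le)
      exact this.trans (le_mul_of_one_le_left htr.le (le_max_left _ _))

lemma decay_top {g : ℝ → ℂ} (hc : ContinuousOn g (Ioi 0)) (ht : RapidTop g) (hz : RapidZero g)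
    (k : ℕ) : ∃ C, 0 < C ∧ ∀ t, 0 < t → ‖g t‖ ≤ C * t ^ (-(k:ℝ)) := by
  apply bound_aux hc
  · have h1 : Tendsto (fun t : ℝ => ‖g t‖) (nhdsWithin 0 (Ioi 0)) (nhds 0) := by
      have := hz 0
      simpa using this
    have h2 : ∀ᶠ t in nhdsWithin 0 (Ioi 0), ‖g t‖ < 1 := by
      have := h1.eventually (eventually_lt_nhds zero_lt_one)
      simpa using this
    have h3 : ∀ᶠ t in nhdsWithin 0 (Ioi 0), t ∈ Ioo (0:ℝ) 1 :=
      eventually_mem_nhdsWithin.mp (eventually_of_mem (Ioo_mem_nhdsGT_of_mem ⟨le_refl _, zero_lt_one⟩) (fun x hx _ => hx))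
    filter_upwards [h2, h3] with t h2 h3
    have : (1:ℝ) ≤ t ^ (-(k:ℝ)) :=
      Real.one_le_rpow_of_pos_of_le_one_of_nonpos h3.1 h3.2.le (by simp)
    linarith
  · have h2 : ∀ᶠ t in atTop, t ^ k * ‖g t‖ < 1 := by
      have := (ht k).eventually (eventually_lt_nhds zero_lt_one)
      simpa using this
    filter_upwards [h2, eventually_ge_atTop (1:ℝ)] with t h2 h3
    have htp : (0:ℝ) < t := lt_of_lt_of_le zero_lt_one h3
    have hpk : (0:ℝ) < t ^ k := by positivity
    rw [Real.rpow_neg htp.le, Real.rpow_natCast]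
    calc ‖g t‖ = t ^ k * ‖g t‖ * (t ^ k)⁻¹ := by field_simp
    _ ≤ 1 * (t ^ k)⁻¹ := mul_le_mul_of_nonneg_right h2.le (by positivity)
    _ = (t ^ k)⁻¹ := one_mul _

lemma decay_zero {g : ℝ → ℂ} (hc : ContinuousOn g (Ioi 0)) (ht : RapidTop g) (hz : RapidZero g)
    (m : ℕ) : ∃ C, 0 < C ∧ ∀ t, 0 < t → ‖g t‖ ≤ C * t ^ (m:ℝ) := by
  apply bound_aux hc
  · have h2 : ∀ᶠ t in nhdsWithin 0 (Ioi 0), t ^ (-(m:ℝ)) * ‖g t‖ < 1 := by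
      have := (hz m).eventually (eventually_lt_nhds zero_lt_one)
      simpa using this
    have h3 : ∀ᶠ t in nhdsWithin 0 (Ioi 0), t ∈ Ioi (0:ℝ) := eventually_mem_nhdsWithin
    filter_upwards [h2, h3] with t h2 h3
    have htp : (0:ℝ) < t := h3
    have hpm : (0:ℝ) < t ^ (m:ℝ) := Real.rpow_pos_of_pos htp _
    rw [Real.rpow_neg htp.le] at h2
    calc ‖g t‖ = (t ^ (m:ℝ))⁻¹ * ‖g t‖ * t ^ (m:ℝ) := by field_simp
    _ ≤ 1 * t ^ (m:ℝ) := mul_le_mul_of_nonneg_right h2.le hpm.le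
    _ = t ^ (m:ℝ) := one_mul _
  · have h2 : ∀ᶠ t in atTop, ‖g t‖ < 1 := by
      have := (ht 0).eventually (eventually_lt_nhds zero_lt_one)
      simpa using this
    filter_upwards [h2, eventually_ge_atTop (1:ℝ)] with t h2 h3
    have : (1:ℝ) ≤ t ^ (m:ℝ) := Real.one_le_rpow h3 (by positivity)
    linarith

lemma MemH.contOn {f : ℝ → ℂ} (hf : MemH f) : ContinuousOn f (Ioi 0) := hf.1.continuousOn

lemma MemH.rtop {f : ℝ → ℂ} (hf : MemH f) : RapidTop f := by
  have := (hf.2 0).1; rwa [iteratedDerivWithin_zero] at this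

lemma MemH.rzero {f : ℝ → ℂ} (hf : MemH f) : RapidZero f := by
  have := (hf.2 0).2; rwa [iteratedDerivWithin_zero] at this

lemma MemH.hasDeriv {f : ℝ → ℂ} (hf : MemH f) {t : ℝ} (ht : 0 < t) :
    HasDerivAt f (deriv f t) t := by
  have h : DifferentiableOn ℝ f (Ioi 0) := hf.1.differentiableOn (by simp)
  exact (h.differentiableAt (isOpen_Ioi.mem_nhds ht)).hasDerivAt

lemma MemH.derivMem {f : ℝ → ℂ} (hf : MemH f) : MemH (deriv f) := by
  obtain ⟨hs, hd⟩ := hf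
  refine ⟨hs.deriv_of_isOpen isOpen_Ioi (by simp), fun m => ?_⟩
  have key : Set.EqOn (iteratedDerivWithin m (deriv f) (Ioi 0))
      (iteratedDerivWithin (m+1) f (Ioi 0)) (Ioi 0) := by
    intro x hx
    rw [iteratedDerivWithin_succ']
    exact iteratedDerivWithin_congr
      (fun y hy => (derivWithin_of_isOpen isOpen_Ioi hy).symm) hx
  constructor
  · intro k
    apply ((hd (m+1)).1 k).congr'
    filter_upwards [eventually_gt_atTop (0:ℝ)] with t htp
    rw [key htp]
  · intro k
    apply ((hd (m+1)).2 k).congr'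
    filter_upwards [eventually_mem_nhdsWithin] with t htp
    rw [key htp]

lemma MemH.bound_top {f : ℝ → ℂ} (hf : MemH f) (k : ℕ) :
    ∃ C, 0 < C ∧ ∀ t, 0 < t → ‖f t‖ ≤ C * t ^ (-(k:ℝ)) :=
  decay_top hf.contOn hf.rtop hf.rzero k

lemma MemH.bound_zero {f : ℝ → ℂ} (hf : MemH f) (m : ℕ) :
    ∃ C, 0 < C ∧ ∀ t, 0 < t → ‖f t‖ ≤ C * t ^ (m:ℝ) :=
  decay_zero hf.contOn hf.rtop hf.rzero m

lemma summable_aux {r : ℝ} (hr : 1 < r) : Summable (fun n : ℕ => ((n:ℝ)+1) ^ (-r)) := by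
  have h : Summable (fun n : ℕ => ((n:ℝ)) ^ (-r)) :=
    (Real.summable_nat_rpow (p := -r)).2 (by linarith)
  have h2 := (summable_nat_add_iff 1).2 h
  apply h2.congr
  intro n; push_cast; ring_nf

/-- weighted zeta-like series -/
def wser (lam : ℝ) (j : ℕ) (g : ℝ → ℂ) : ℝ → ℂ :=
  fun t => ∑' n : ℕ, ((((n:ℝ)+1) ^ (lam * (j:ℝ)) : ℝ) : ℂ) * g (((n:ℝ)+1) ^ lam * t)

lemma rpow_term_bound {lam C : ℝ} (hC : 0 ≤ C) (j k : ℕ) {g : ℝ → ℂ}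
    (hg : ∀ u, 0 < u → ‖g u‖ ≤ C * u ^ (-(k:ℝ))) {t : ℝ} (ht : 0 < t) (n : ℕ) :
    ((n:ℝ)+1) ^ (lam * (j:ℝ)) * ‖g (((n:ℝ)+1) ^ lam * t)‖ ≤
      (C * t ^ (-(k:ℝ))) * (((n:ℝ)+1) ^ (-(lam * ((k:ℝ)-(j:ℝ))))) := by
  have hb : (0:ℝ) < (n:ℝ)+1 := by positivity
  have hc : (0:ℝ) < ((n:ℝ)+1) ^ lam := Real.rpow_pos_of_pos hb _
  have hw : (0:ℝ) ≤ ((n:ℝ)+1) ^ (lam * (j:ℝ)) := (Real.rpow_pos_of_pos hb _).le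
  have h1 := hg _ (mul_pos hc ht)
  have h2 : (((n:ℝ)+1) ^ lam * t) ^ (-(k:ℝ))
      = ((n:ℝ)+1) ^ (lam * (-(k:ℝ))) * t ^ (-(k:ℝ)) := by
    rw [Real.mul_rpow hc.le ht.le, Real.rpow_mul hb.le]
  calc ((n:ℝ)+1) ^ (lam * (j:ℝ)) * ‖g (((n:ℝ)+1) ^ lam * t)‖
      ≤ ((n:ℝ)+1) ^ (lam * (j:ℝ)) * (C * (((n:ℝ)+1) ^ lam * t) ^ (-(k:ℝ))) :=
        mul_le_mul_of_nonneg_left h1 hw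
    _ = (C * t ^ (-(k:ℝ))) * (((n:ℝ)+1) ^ (lam * (j:ℝ)) * ((n:ℝ)+1) ^ (lam * (-(k:ℝ)))) := by
        rw [h2]; ring
    _ = (C * t ^ (-(k:ℝ))) * (((n:ℝ)+1) ^ (-(lam * ((k:ℝ)-(j:ℝ))))) := by
        rw [← Real.rpow_add hb]; ring_nf

lemma wser_est {lam : ℝ} (j k : ℕ) (hk : 1 < lam * ((k:ℝ)-(j:ℝ))) {C : ℝ} (hC : 0 < C)
    {g : ℝ → ℂ} (hg : ∀ u, 0 < u → ‖g u‖ ≤ C * u ^ (-(k:ℝ))) :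
    ∃ D, 0 < D ∧ ∀ t, 0 < t →
      Summable (fun n : ℕ => ((((n:ℝ)+1) ^ (lam * (j:ℝ)) : ℝ) : ℂ) * g (((n:ℝ)+1) ^ lam * t)) ∧
      ‖wser lam j g t‖ ≤ D * t ^ (-(k:ℝ)) := by
  set S := ∑' n : ℕ, ((n:ℝ)+1) ^ (-(lam * ((k:ℝ)-(j:ℝ)))) with hS
  have hSsum : Summable (fun n : ℕ => ((n:ℝ)+1) ^ (-(lam * ((k:ℝ)-(j:ℝ))))) := summable_aux hk
  have hS0 : 0 ≤ S := tsum_nonneg (fun n => (Real.rpow_pos_of_pos (by positivity) _).le)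
  refine ⟨C * S + 1, by positivity, fun t ht => ?_⟩
  have hterm : ∀ n : ℕ, ‖((((n:ℝ)+1) ^ (lam * (j:ℝ)) : ℝ) : ℂ) * g (((n:ℝ)+1) ^ lam * t)‖
      ≤ (C * t ^ (-(k:ℝ))) * (((n:ℝ)+1) ^ (-(lam * ((k:ℝ)-(j:ℝ))))) := by
    intro n
    rw [norm_mul, Complex.norm_real, Real.norm_eq_abs,
      abs_of_nonneg (Real.rpow_pos_of_pos (by positivity) _).le]
    exact rpow_term_bound hC.le j k hg ht n
  have hsum : Summable (fun n : ℕ =>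
      ((((n:ℝ)+1) ^ (lam * (j:ℝ)) : ℝ) : ℂ) * g (((n:ℝ)+1) ^ lam * t)) :=
    Summable.of_norm (Summable.of_nonneg_of_le (fun n => norm_nonneg _) hterm
      (hSsum.mul_left _))
  refine ⟨hsum, ?_⟩
  have h1 : ‖wser lam j g t‖ ≤ ∑' n : ℕ, (C * t ^ (-(k:ℝ))) * (((n:ℝ)+1) ^ (-(lam * ((k:ℝ)-(j:ℝ))))) := by
    refine (norm_tsum_le_tsum_norm hsum.norm).trans ?_
    exact hsum.norm.tsum_le_tsum hterm (hSsum.mul_left _)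
  rw [tsum_mul_left] at h1
  have htp : (0:ℝ) < t ^ (-(k:ℝ)) := Real.rpow_pos_of_pos ht _
  calc ‖wser lam j g t‖ ≤ C * t ^ (-(k:ℝ)) * S := h1
  _ = C * S * t ^ (-(k:ℝ)) := by ring
  _ ≤ (C * S + 1) * t ^ (-(k:ℝ)) := by nlinarith

lemma wser_hasDerivAt {lam : ℝ} (hlam : 0 < lam) (j k : ℕ)
    (hk : 1 < lam * ((k:ℝ) - (j:ℝ) - 1)) {C : ℝ} (hC : 0 < C) {g : ℝ → ℂ}
    (hg : ∀ u, 0 < u → ‖g u‖ ≤ C * u ^ (-(k:ℝ)))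
    (hg' : ∀ u, 0 < u → ‖deriv g u‖ ≤ C * u ^ (-(k:ℝ)))
    (hd : ∀ u, 0 < u → HasDerivAt g (deriv g u) u)
    {t : ℝ} (ht : 0 < t) :
    HasDerivAt (wser lam j g) (wser lam (j+1) (deriv g) t) t := by
  set c : ℕ → ℝ := fun n => ((n:ℝ)+1) ^ lam with hc
  have hcpos : ∀ n, 0 < c n := fun n => Real.rpow_pos_of_pos (by positivity) _
  set u : ℕ → ℝ := fun n =>
    (C * (t/2) ^ (-(k:ℝ))) * (((n:ℝ)+1) ^ (-(lam * ((k:ℝ)-((j:ℕ)+1:ℝ))))) with hu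
  have husum : Summable u := by
    apply Summable.mul_left
    apply summable_aux
    push_cast
    linarith
  have hs : IsOpen (Ioi (t/2)) := isOpen_Ioi
  have hps : IsPreconnected (Ioi (t/2)) := (convex_Ioi _).isPreconnected
  have hmem : t ∈ Ioi (t/2) := by simp [mem_Ioi]; linarith
  have hder : ∀ (n : ℕ) (y : ℝ), y ∈ Ioi (t/2) →
      HasDerivAt (fun y => ((((n:ℝ)+1) ^ (lam * (j:ℝ)) : ℝ) : ℂ) * g (c n * y))
        (((((n:ℝ)+1) ^ (lam * ((j:ℕ)+1:ℝ)) : ℝ) : ℂ) * deriv g (c n * y)) y := by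
    intro n y hy
    have hy0 : 0 < y := lt_trans (by linarith) hy
    have harg : 0 < c n * y := mul_pos (hcpos n) hy0
    have hinner : HasDerivAt (fun y : ℝ => c n * y) (c n) y := by
      simpa using (hasDerivAt_id y).const_mul (c n)
    have hcomp := HasDerivAt.scomp y (hd _ harg) hinner
    have := hcomp.const_mul ((((n:ℝ)+1) ^ (lam * (j:ℝ)) : ℝ) : ℂ)
    refine this.congr_deriv ?_
    symm
    rw [Complex.real_smul, ← mul_assoc, ← Complex.ofReal_mul]
    congr 2
    rw [hc, ← Real.rpow_add (by positivity : (0:ℝ) < (n:ℝ)+1)]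
    ring_nf
  have hbnd : ∀ (n : ℕ) (y : ℝ), y ∈ Ioi (t/2) →
      ‖((((n:ℝ)+1) ^ (lam * ((j:ℕ)+1:ℝ)) : ℝ) : ℂ) * deriv g (c n * y)‖ ≤ u n := by
    intro n y hy
    have hy0 : 0 < y := lt_trans (by linarith) hy
    have h1 : ((n:ℝ)+1) ^ (lam * ((j+1:ℕ):ℝ)) * ‖deriv g (((n:ℝ)+1) ^ lam * y)‖
        ≤ (C * y ^ (-(k:ℝ))) * (((n:ℝ)+1) ^ (-(lam * ((k:ℝ)-((j+1:ℕ):ℝ))))) :=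
      rpow_term_bound hC.le (j+1) k hg' hy0 n
    rw [norm_mul, Complex.norm_real, Real.norm_eq_abs,
      abs_of_nonneg (Real.rpow_pos_of_pos (by positivity) _).le]
    have h2 : y ^ (-(k:ℝ)) ≤ (t/2) ^ (-(k:ℝ)) := by
      rw [Real.rpow_neg hy0.le, Real.rpow_neg (by linarith : (0:ℝ) ≤ t/2)]
      apply inv_anti₀ (Real.rpow_pos_of_pos (by linarith) _)
      exact Real.rpow_le_rpow (by linarith) (le_of_lt hy) (by positivity)
    have h3 : (0:ℝ) ≤ ((n:ℝ)+1) ^ (-(lam * ((k:ℝ)-((j+1:ℕ):ℝ)))) :=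
      (Real.rpow_pos_of_pos (by positivity) _).le
    calc ((n:ℝ)+1) ^ (lam * ((j:ℕ)+1:ℝ)) * ‖deriv g (c n * y)‖
        ≤ (C * y ^ (-(k:ℝ))) * (((n:ℝ)+1) ^ (-(lam * ((k:ℝ)-((j+1:ℕ):ℝ))))) := by
          convert h1 using 3 <;> push_cast <;> ring
    _ ≤ (C * (t/2) ^ (-(k:ℝ))) * (((n:ℝ)+1) ^ (-(lam * ((k:ℝ)-((j+1:ℕ):ℝ))))) := by
          apply mul_le_mul_of_nonneg_right _ h3
          exact mul_le_mul_of_nonneg_left h2 hC.le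
    _ = u n := by rw [hu]; push_cast; ring_nf
  have hsum0 : Summable (fun n : ℕ =>
      ((((n:ℝ)+1) ^ (lam * (j:ℝ)) : ℝ) : ℂ) * g (((n:ℝ)+1) ^ lam * t)) := by
    have hkj : 1 < lam * ((k:ℝ)-(j:ℝ)) := by
      have : lam * ((k:ℝ)-(j:ℝ)) = lam * ((k:ℝ)-(j:ℝ)-1) + lam := by ring
      linarith
    obtain ⟨D, hD, hall⟩ := wser_est j k hkj hC hg
    exact (hall t ht).1
  have key := hasDerivAt_tsum_of_isPreconnected husum hs hps hder hbnd hmem hsum0 hmem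
  have heq : wser lam (j+1) (deriv g) t
      = ∑' (n : ℕ), ((((n:ℝ) + 1) ^ (lam * ((j:ℝ) + 1)) : ℝ) : ℂ) * deriv g (c n * t) := by
    apply tsum_congr; intro n
    simp only [Nat.cast_add, Nat.cast_one]
    rfl
  rw [heq]
  exact key

lemma Zop_eq_wser (lam : ℝ) (g : ℝ → ℂ) : Zop lam g = wser lam 0 g := by
  funext t
  apply tsum_congr
  intro n
  simp [Real.rpow_zero]

lemma kchoice {lam : ℝ} (hlam : 0 < lam) :
    ∀ j : ℕ, (j:ℝ) ≤ 2 → 1 < lam * ((((⌈1/lam⌉₊ + 4 : ℕ)):ℝ) - (j:ℝ) - 1) := by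
  intro j hj
  have h1 : 1/lam ≤ (⌈1/lam⌉₊ : ℝ) := Nat.le_ceil _
  have h2 : ((⌈1/lam⌉₊ + 4 : ℕ):ℝ) - (j:ℝ) - 1 ≥ 1/lam + 1 := by push_cast; linarith
  calc (1:ℝ) = lam * (1/lam) := by field_simp
  _ < lam * (1/lam + 1) := by nlinarith
  _ ≤ lam * (((⌈1/lam⌉₊ + 4 : ℕ):ℝ) - (j:ℝ) - 1) := by nlinarith

lemma mul_le_max_left {C₁ C₂ x : ℝ} (hx : 0 ≤ x) : C₁ * x ≤ max C₁ C₂ * x :=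
  mul_le_mul_of_nonneg_right (le_max_left _ _) hx

lemma mul_le_max_right {C₁ C₂ x : ℝ} (hx : 0 ≤ x) : C₂ * x ≤ max C₁ C₂ * x :=
  mul_le_mul_of_nonneg_right (le_max_right _ _) hx

lemma Zfacts {lam : ℝ} (hlam : 0 < lam) {f : ℝ → ℂ} (hf : MemH f) :
    (∀ t, 0 < t → HasDerivAt (Zop lam f) (wser lam 1 (deriv f) t) t) ∧
    (∀ t, 0 < t → deriv (Zop lam f) t = wser lam 1 (deriv f) t) ∧
    ContinuousOn (Zop lam f) (Ioi 0) ∧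
    ContinuousOn (deriv (Zop lam f)) (Ioi 0) ∧
    (∀ k₀ : ℕ, ∃ k : ℕ, k₀ ≤ k ∧ ∃ C, 0 < C ∧
      (∀ u, 0 < u → ‖Zop lam f u‖ ≤ C * u ^ (-(k:ℝ))) ∧
      (∀ u, 0 < u → ‖deriv (Zop lam f) u‖ ≤ C * u ^ (-(k:ℝ)))) := by
  set k₁ : ℕ := ⌈1/lam⌉₊ + 4 with hk₁
  have hA : 1 < lam * ((k₁:ℝ) - ((0:ℕ):ℝ) - 1) := by
    have := kchoice hlam 0 (by norm_num)
    simp only [hk₁]; push_cast at this ⊢; linarith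
  have hB : 1 < lam * ((k₁:ℝ) - ((1:ℕ):ℝ) - 1) := by
    have := kchoice hlam 1 (by norm_num)
    simp only [hk₁]; push_cast at this ⊢; linarith
  obtain ⟨C₀, hC₀, hb₀⟩ := hf.bound_top k₁
  obtain ⟨C₁, hC₁, hb₁⟩ := hf.derivMem.bound_top k₁
  obtain ⟨C₂, hC₂, hb₂⟩ := hf.derivMem.derivMem.bound_top k₁
  have hd := fun u (hu : (0:ℝ) < u) => hf.hasDeriv hu
  have hd' := fun u (hu : (0:ℝ) < u) => hf.derivMem.hasDeriv hu
  have hrp : ∀ u : ℝ, 0 < u → (0:ℝ) ≤ u ^ (-(k₁:ℝ)) :=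
    fun u hu => (Real.rpow_pos_of_pos hu _).le
  have hZd : ∀ t, 0 < t → HasDerivAt (Zop lam f) (wser lam 1 (deriv f) t) t := by
    intro t ht
    rw [Zop_eq_wser]
    exact wser_hasDerivAt hlam 0 k₁ hA (lt_of_lt_of_le hC₀ (le_max_left C₀ C₁))
      (fun u hu => (hb₀ u hu).trans (mul_le_max_left (hrp u hu)))
      (fun u hu => (hb₁ u hu).trans (mul_le_max_right (hrp u hu))) hd ht
  have hder_eq : ∀ t, 0 < t → deriv (Zop lam f) t = wser lam 1 (deriv f) t :=
    fun t ht => (hZd t ht).deriv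
  have hW1d : ∀ t, 0 < t → HasDerivAt (wser lam 1 (deriv f))
      (wser lam 2 (deriv (deriv f)) t) t := by
    intro t ht
    exact wser_hasDerivAt hlam 1 k₁ hB (lt_of_lt_of_le hC₁ (le_max_left C₁ C₂))
      (fun u hu => (hb₁ u hu).trans (mul_le_max_left (hrp u hu)))
      (fun u hu => (hb₂ u hu).trans (mul_le_max_right (hrp u hu))) hd' ht
  have hcontZ : ContinuousOn (Zop lam f) (Ioi 0) :=
    fun t ht => ((hZd t ht).continuousAt).continuousWithinAt
  have hcontW1 : ContinuousOn (wser lam 1 (deriv f)) (Ioi 0) :=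
    fun t ht => ((hW1d t ht).continuousAt).continuousWithinAt
  have hcontdZ : ContinuousOn (deriv (Zop lam f)) (Ioi 0) :=
    hcontW1.congr (fun t ht => hder_eq t ht)
  refine ⟨hZd, hder_eq, hcontZ, hcontdZ, ?_⟩
  intro k₀
  set k : ℕ := max k₀ k₁ with hkdef
  have hkk₁ : (k₁:ℝ) ≤ (k:ℝ) := by exact_mod_cast Nat.le_max_right k₀ k₁
  have hcond0 : 1 < lam * ((k:ℝ) - ((0:ℕ):ℝ)) := by push_cast at hA ⊢; nlinarith
  have hcond1 : 1 < lam * ((k:ℝ) - ((1:ℕ):ℝ)) := by push_cast at hB ⊢; nlinarith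
  obtain ⟨B₀, hB₀, hbb₀⟩ := hf.bound_top k
  obtain ⟨B₁, hB₁, hbb₁⟩ := hf.derivMem.bound_top k
  obtain ⟨D₀, hD₀, hw₀⟩ := wser_est 0 k hcond0 hB₀ hbb₀
  obtain ⟨D₁, hD₁, hw₁⟩ := wser_est 1 k hcond1 hB₁ hbb₁
  have hrpk : ∀ u : ℝ, 0 < u → (0:ℝ) ≤ u ^ (-(k:ℝ)) :=
    fun u hu => (Real.rpow_pos_of_pos hu _).le
  refine ⟨k, Nat.le_max_left _ _, max D₀ D₁, lt_of_lt_of_le hD₀ (le_max_left _ _), ?_, ?_⟩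
  · intro u hu
    rw [Zop_eq_wser]
    exact ((hw₀ u hu).2).trans (mul_le_max_left (hrpk u hu))
  · intro u hu
    rw [hder_eq u hu]
    exact ((hw₁ u hu).2).trans (mul_le_max_right (hrpk u hu))

lemma integrableOn_Ioi_of_bounds {E : Type*} [NormedAddCommGroup E] {g : ℝ → E}
    (hm : AEStronglyMeasurable g (volume.restrict (Ioi 0))) {C p q : ℝ} (hC : 0 ≤ C)
    (hp : -1 < p) (hq : q < -1)
    (h0 : ∀ y, 0 < y → y ≤ 1 → ‖g y‖ ≤ C * y ^ p)
    (h1 : ∀ y, 1 ≤ y → ‖g y‖ ≤ C * y ^ q) : IntegrableOn g (Ioi 0) := by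
  have hsplit : Ioc (0:ℝ) 1 ∪ Ioi 1 = Ioi 0 := Ioc_union_Ioi_eq_Ioi (by norm_num)
  rw [← hsplit]
  apply IntegrableOn.union
  · have hbint : IntegrableOn (fun y : ℝ => C * y ^ p) (Ioc 0 1) := by
      have h := (intervalIntegral.intervalIntegrable_rpow' hp (a := 0) (b := 1))
      rw [intervalIntegrable_iff] at h
      simp only [uIoc_of_le (by norm_num : (0:ℝ) ≤ 1)] at h
      exact h.const_mul C
    refine Integrable.mono' hbint
      (hm.mono_measure (Measure.restrict_mono (Ioc_subset_Ioi_self) le_rfl)) ?_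
    rw [ae_restrict_iff' measurableSet_Ioc]
    exact ae_of_all _ (fun y hy => h0 y hy.1 hy.2)
  · have hbint : IntegrableOn (fun y : ℝ => C * y ^ q) (Ioi 1) :=
      (integrableOn_Ioi_rpow_of_lt hq zero_lt_one).const_mul C
    refine Integrable.mono' hbint
      (hm.mono_measure (Measure.restrict_mono (Ioi_subset_Ioi (by norm_num)) le_rfl)) ?_
    rw [ae_restrict_iff' measurableSet_Ioi]
    exact ae_of_all _ (fun y hy => h1 y (le_of_lt hy))

lemma rpow_contOn (a : ℝ) : ContinuousOn (fun y : ℝ => y ^ a) (Ioi 0) :=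
  fun y hy => (Real.continuousAt_rpow_const y a (Or.inl (ne_of_gt hy))).continuousWithinAt

lemma memH_weight_integrable {f : ℝ → ℂ} (hf : MemH f) (a : ℝ) :
    IntegrableOn (fun y => y ^ a * ‖f y‖) (Ioi 0) := by
  set m : ℕ := ⌈|a|⌉₊ + 2 with hm
  have hma : |a| + 2 ≤ (m:ℝ) := by
    have := Nat.le_ceil |a|
    push_cast [hm]; push_cast at this; linarith
  obtain ⟨C₀, hC₀, h₀⟩ := hf.bound_zero m
  obtain ⟨C₁, hC₁, h₁⟩ := hf.bound_top m
  have hmeas : AEStronglyMeasurable (fun y : ℝ => y ^ a * ‖f y‖) (volume.restrict (Ioi 0)) :=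
    ((rpow_contOn a).mul hf.contOn.norm).aestronglyMeasurable measurableSet_Ioi
  apply integrableOn_Ioi_of_bounds hmeas (C := max C₀ C₁) (p := a + m) (q := a - m)
    (le_trans hC₀.le (le_max_left _ _))
  · nlinarith [neg_abs_le a, hma]
  · nlinarith [le_abs_self a, hma]
  · intro y hy hy1
    have h := h₀ y hy
    have hy0 : (0:ℝ) ≤ y := hy.le
    rw [Real.norm_eq_abs, abs_of_nonneg (by positivity)]
    calc y ^ a * ‖f y‖ ≤ y ^ a * (C₀ * y ^ (m:ℝ)) :=
          mul_le_mul_of_nonneg_left h (Real.rpow_pos_of_pos hy a).le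
    _ = C₀ * y ^ (a + m) := by rw [Real.rpow_add hy]; ring
    _ ≤ max C₀ C₁ * y ^ (a + m) := mul_le_max_left (Real.rpow_pos_of_pos hy _).le
  · intro y hy
    have hy0 : (0:ℝ) < y := lt_of_lt_of_le zero_lt_one hy
    have h := h₁ y hy0
    rw [Real.norm_eq_abs, abs_of_nonneg (by positivity)]
    calc y ^ a * ‖f y‖ ≤ y ^ a * (C₁ * y ^ (-(m:ℝ))) :=
          mul_le_mul_of_nonneg_left h (Real.rpow_pos_of_pos hy0 a).le
    _ = C₁ * y ^ (a - m) := by rw [show a - (m:ℝ) = a + (-(m:ℝ)) by ring, Real.rpow_add hy0]; ring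
    _ ≤ max C₀ C₁ * y ^ (a - m) := mul_le_max_right (Real.rpow_pos_of_pos hy0 _).le

lemma conv_cont {g h : ℝ → ℂ} (hgc : ContinuousOn g (Ioi 0)) (hhc : ContinuousOn h (Ioi 0))
    {t : ℝ} (ht : 0 < t) :
    ContinuousOn (fun y => g (t/y) * h y / (y:ℂ)) (Ioi 0) := by
  have cg : ContinuousOn (fun y : ℝ => g (t/y)) (Ioi 0) := by
    apply hgc.comp (continuousOn_const.div continuousOn_id (fun y hy => ne_of_gt hy))
    intro y hy
    exact div_pos ht hy
  exact (cg.mul hhc).div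
    (Complex.continuous_ofReal.continuousOn)
    (fun y hy => by simpa using ne_of_gt (hy : (0:ℝ) < y))

lemma conv_ptwise_bound {g f₂ : ℝ → ℂ} (k : ℕ) {C : ℝ} (hC : 0 < C)
    (hg : ∀ u, 0 < u → ‖g u‖ ≤ C * u ^ (-(k:ℝ))) {t : ℝ} (ht : 0 < t)
    {y : ℝ} (hy : 0 < y) :
    ‖g (t/y) * f₂ y / (y:ℂ)‖ ≤ C * t ^ (-(k:ℝ)) * (y ^ ((k:ℝ)-1) * ‖f₂ y‖) := by
  have harg : 0 < t/y := div_pos ht hy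
  rw [norm_div, norm_mul, Complex.norm_real, Real.norm_eq_abs, abs_of_pos hy]
  have h1 : ‖g (t/y)‖ ≤ C * (t/y) ^ (-(k:ℝ)) := hg _ harg
  have h2 : (t/y) ^ (-(k:ℝ)) = t ^ (-(k:ℝ)) * y ^ (k:ℝ) := by
    rw [Real.div_rpow ht.le hy.le, Real.rpow_neg ht.le, Real.rpow_neg hy.le]
    field_simp
  have h3 : y ^ (k:ℝ) / y = y ^ ((k:ℝ)-1) := by
    rw [Real.rpow_sub hy, Real.rpow_one]
  calc ‖g (t/y)‖ * ‖f₂ y‖ / y ≤ C * (t/y) ^ (-(k:ℝ)) * ‖f₂ y‖ / y := by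
        apply div_le_div_of_nonneg_right _ hy.le
        exact mul_le_mul_of_nonneg_right h1 (norm_nonneg _)
  _ = C * t ^ (-(k:ℝ)) * (y ^ ((k:ℝ)-1) * ‖f₂ y‖) := by
        rw [h2, ← h3]; field_simp

lemma mconv_integrand_integrable {g f₂ : ℝ → ℂ} (hgc : ContinuousOn g (Ioi 0)) (hf₂ : MemH f₂)
    (k : ℕ) {C : ℝ} (hC : 0 < C) (hg : ∀ u, 0 < u → ‖g u‖ ≤ C * u ^ (-(k:ℝ)))
    {t : ℝ} (ht : 0 < t) :
    IntegrableOn (fun y => g (t/y) * f₂ y / (y:ℂ)) (Ioi 0) ∧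
    (∫ y in Ioi (0:ℝ), ‖g (t/y) * f₂ y / (y:ℂ)‖)
      ≤ C * t ^ (-(k:ℝ)) * ∫ y in Ioi (0:ℝ), y ^ ((k:ℝ)-1) * ‖f₂ y‖ := by
  have hWint : IntegrableOn (fun y : ℝ => y ^ ((k:ℝ)-1) * ‖f₂ y‖) (Ioi 0) :=
    memH_weight_integrable hf₂ _
  have hmeas : AEStronglyMeasurable (fun y => g (t/y) * f₂ y / (y:ℂ))
      (volume.restrict (Ioi 0)) :=
    (conv_cont hgc hf₂.contOn ht).aestronglyMeasurable measurableSet_Ioi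
  have hptw : ∀ y ∈ Ioi (0:ℝ), ‖g (t/y) * f₂ y / (y:ℂ)‖
      ≤ C * t ^ (-(k:ℝ)) * (y ^ ((k:ℝ)-1) * ‖f₂ y‖) :=
    fun y hy => conv_ptwise_bound k hC hg ht hy
  have hint : IntegrableOn (fun y => g (t/y) * f₂ y / (y:ℂ)) (Ioi 0) := by
    refine Integrable.mono' (hWint.const_mul (C * t ^ (-(k:ℝ)))) hmeas ?_
    rw [ae_restrict_iff' measurableSet_Ioi]
    exact ae_of_all _ hptw
  refine ⟨hint, ?_⟩
  have h1 : (∫ y in Ioi (0:ℝ), ‖g (t/y) * f₂ y / (y:ℂ)‖)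
      ≤ ∫ y in Ioi (0:ℝ), C * t ^ (-(k:ℝ)) * (y ^ ((k:ℝ)-1) * ‖f₂ y‖) := by
    refine setIntegral_mono_on hint.norm (hWint.const_mul _) measurableSet_Ioi hptw
  rwa [MeasureTheory.integral_const_mul] at h1

lemma memH_global_bound {f : ℝ → ℂ} (hf : MemH f) :
    ∃ B, 0 < B ∧ ∀ u, 0 < u → ‖f u‖ ≤ B := by
  obtain ⟨B, hB, h⟩ := hf.bound_zero 0
  exact ⟨B, hB, fun u hu => by simpa using h u hu⟩

lemma mconv_integrand_integrable' {f₁ G : ℝ → ℂ} (hf₁ : MemH f₁)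
    (hGc : ContinuousOn G (Ioi 0)) {a b : ℝ} (ha : 0 ≤ a) (hb1 : 1 ≤ b) {C : ℝ} (hC : 0 < C)
    (hG0 : ∀ u, 0 < u → u ≤ 1 → ‖G u‖ ≤ C * u ^ (-a))
    (hG1 : ∀ u, 1 ≤ u → ‖G u‖ ≤ C * u ^ (-b))
    {t : ℝ} (ht : 0 < t) :
    IntegrableOn (fun y => f₁ (t/y) * G y / (y:ℂ)) (Ioi 0) := by
  set m : ℕ := ⌈a⌉₊ + 2 with hm
  have hma : a + 2 ≤ (m:ℝ) := by
    have h := Nat.le_ceil a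
    push_cast [hm]; push_cast at h; linarith
  obtain ⟨C₁, hC₁, hf₁b⟩ := hf₁.bound_top m
  obtain ⟨B, hB, hBb⟩ := memH_global_bound hf₁
  have hmeas : AEStronglyMeasurable (fun y => f₁ (t/y) * G y / (y:ℂ))
      (volume.restrict (Ioi 0)) :=
    (conv_cont hf₁.contOn hGc ht).aestronglyMeasurable measurableSet_Ioi
  set K : ℝ := C₁ * C * t ^ (-(m:ℝ)) + B * C with hK
  apply integrableOn_Ioi_of_bounds hmeas (C := K) (p := (m:ℝ) - a - 1) (q := -b-1)
  · positivity
  · linarith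
  · linarith
  · intro y hy hy1
    have harg : 0 < t/y := div_pos ht hy
    rw [norm_div, norm_mul, Complex.norm_real, Real.norm_eq_abs, abs_of_pos hy]
    have h1 : ‖f₁ (t/y)‖ ≤ C₁ * (t/y) ^ (-(m:ℝ)) := hf₁b _ harg
    have h2 : (t/y) ^ (-(m:ℝ)) = t ^ (-(m:ℝ)) * y ^ (m:ℝ) := by
      rw [Real.div_rpow ht.le hy.le, Real.rpow_neg ht.le, Real.rpow_neg hy.le]
      field_simp
    have h3 : ‖G y‖ ≤ C * y ^ (-a) := hG0 y hy hy1
    have hcomb : ‖f₁ (t/y)‖ * ‖G y‖ / y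
        ≤ (C₁ * (t ^ (-(m:ℝ)) * y ^ (m:ℝ))) * (C * y ^ (-a)) / y := by
      apply div_le_div_of_nonneg_right _ hy.le
      apply mul_le_mul _ h3 (norm_nonneg _) (by positivity)
      rw [← h2]; exact h1
    refine hcomb.trans ?_
    have heq : (C₁ * (t ^ (-(m:ℝ)) * y ^ (m:ℝ))) * (C * y ^ (-a)) / y
        = (C₁ * C * t ^ (-(m:ℝ))) * y ^ ((m:ℝ) - a - 1) := by
      have hsplit : y ^ ((m:ℝ)-a-1) = y ^ (m:ℝ) * (y ^ a)⁻¹ * y⁻¹ := by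
        rw [show (m:ℝ)-a-1 = (m:ℝ) + (-a) + (-1) by ring, Real.rpow_add hy,
          Real.rpow_add hy, Real.rpow_neg hy.le, Real.rpow_neg_one]
      rw [hsplit, Real.rpow_neg hy.le a]
      field_simp
    rw [heq]
    apply mul_le_mul_of_nonneg_right _ (Real.rpow_pos_of_pos hy _).le
    have hBC : (0:ℝ) < B * C := by positivity
    rw [hK]; linarith
  · intro y hy
    have hy0 : (0:ℝ) < y := lt_of_lt_of_le zero_lt_one hy
    have harg : 0 < t/y := div_pos ht hy0
    rw [norm_div, norm_mul, Complex.norm_real, Real.norm_eq_abs, abs_of_pos hy0]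
    have h1 : ‖f₁ (t/y)‖ ≤ B := hBb _ harg
    have h3 : ‖G y‖ ≤ C * y ^ (-b) := hG1 y hy
    have hcomb : ‖f₁ (t/y)‖ * ‖G y‖ / y ≤ B * (C * y ^ (-b)) / y := by
      apply div_le_div_of_nonneg_right _ hy0.le
      exact mul_le_mul h1 h3 (norm_nonneg _) hB.le
    refine hcomb.trans ?_
    rw [show -b-1 = -b + (-1) by ring, Real.rpow_add hy0, Real.rpow_neg_one]
    have hyk : (0:ℝ) < y ^ (-b) := Real.rpow_pos_of_pos hy0 _
    rw [div_eq_mul_inv]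
    have heq2 : B * (C * y ^ (-b)) * y⁻¹ = (B * C) * (y ^ (-b) * y⁻¹) := by ring
    rw [heq2]
    have hKge : B * C ≤ K := by
      have : (0:ℝ) < C₁ * C * t ^ (-(m:ℝ)) := by positivity
      rw [hK]; linarith
    apply mul_le_mul_of_nonneg_right hKge
    positivity

lemma Z_mconv {lam : ℝ} (hlam : 0 < lam) {f₁ f₂ : ℝ → ℂ} (hf₁ : MemH f₁) (hf₂ : MemH f₂)
    {t : ℝ} (ht : 0 < t) :
    Summable (fun n : ℕ => mconv f₁ f₂ (((n:ℝ)+1) ^ lam * t)) ∧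
    Zop lam (mconv f₁ f₂) t = mconv (Zop lam f₁) f₂ t := by
  set k : ℕ := ⌈1/lam⌉₊ + 2 with hkdef
  have hlk : 1 < lam * (k:ℝ) := by
    have h1 : 1/lam ≤ (⌈1/lam⌉₊ : ℝ) := Nat.le_ceil _
    have h2 : 1/lam + 2 ≤ (k:ℝ) := by rw [hkdef]; push_cast; linarith
    calc (1:ℝ) = lam * (1/lam) := by field_simp
    _ < lam * (1/lam + 2) := by nlinarith
    _ ≤ lam * (k:ℝ) := by nlinarith
  obtain ⟨C, hC, hgb⟩ := hf₁.bound_top k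
  set c : ℕ → ℝ := fun n => ((n:ℝ)+1) ^ lam with hc
  have hcpos : ∀ n, 0 < c n := fun n => Real.rpow_pos_of_pos (by positivity) _
  set F : ℕ → ℝ → ℂ := fun n y => f₁ (c n * t / y) * f₂ y / (y:ℂ) with hF
  have hn : ∀ n : ℕ, IntegrableOn (F n) (Ioi 0) ∧
      (∫ y in Ioi (0:ℝ), ‖F n y‖) ≤ C * (c n * t) ^ (-(k:ℝ)) * ∫ y in Ioi (0:ℝ),
        y ^ ((k:ℝ)-1) * ‖f₂ y‖ :=
    fun n => mconv_integrand_integrable hf₁.contOn hf₂ k hC hgb (mul_pos (hcpos n) ht)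
  set I : ℝ := ∫ y in Ioi (0:ℝ), y ^ ((k:ℝ)-1) * ‖f₂ y‖ with hI
  have hI0 : 0 ≤ I := setIntegral_nonneg measurableSet_Ioi
    (fun y hy => mul_nonneg (Real.rpow_pos_of_pos hy _).le (norm_nonneg _))
  have hmaj : ∀ n : ℕ, C * (c n * t) ^ (-(k:ℝ)) * I
      ≤ (C * t ^ (-(k:ℝ)) * I) * ((n:ℝ)+1) ^ (-(lam * (k:ℝ))) := by
    intro n
    have hb : (0:ℝ) < (n:ℝ)+1 := by positivity
    have : (c n * t) ^ (-(k:ℝ)) = ((n:ℝ)+1) ^ (-(lam * (k:ℝ))) * t ^ (-(k:ℝ)) := by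
      rw [hc, Real.mul_rpow (hcpos n).le ht.le, ← Real.rpow_mul hb.le]
      ring_nf
    rw [this]; ring_nf; rfl
  have hmajsum : Summable (fun n : ℕ => (C * t ^ (-(k:ℝ)) * I) * ((n:ℝ)+1) ^ (-(lam * (k:ℝ)))) :=
    (summable_aux hlk).mul_left _
  have hAsum : Summable (fun n : ℕ => ∫ y in Ioi (0:ℝ), ‖F n y‖) := by
    apply Summable.of_nonneg_of_le
      (fun n => setIntegral_nonneg measurableSet_Ioi (fun y _ => norm_nonneg _))
      (fun n => le_trans ((hn n).2) (hmaj n)) hmajsum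
  have key := MeasureTheory.integral_tsum_of_summable_integral_norm
    (F := F) (μ := volume.restrict (Ioi 0)) (fun n => (hn n).1) hAsum
  constructor
  · apply Summable.of_norm_bounded hmajsum
    intro n
    calc ‖mconv f₁ f₂ (((n:ℝ)+1) ^ lam * t)‖ = ‖∫ y in Ioi (0:ℝ), F n y‖ := rfl
    _ ≤ ∫ y in Ioi (0:ℝ), ‖F n y‖ := norm_integral_le_integral_norm _
    _ ≤ C * (c n * t) ^ (-(k:ℝ)) * I := (hn n).2
    _ ≤ _ := hmaj n
  · have hZ : Zop lam (mconv f₁ f₂) t = ∑' n : ℕ, ∫ y in Ioi (0:ℝ), F n y := rfl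
    rw [hZ, key]
    apply setIntegral_congr_fun measurableSet_Ioi
    intro y hy
    have hy0 : (0:ℝ) < y := hy
    have : ∀ n : ℕ, F n y = f₁ (c n * (t/y)) * (f₂ y / (y:ℂ)) := by
      intro n
      rw [hF]
      simp only [mul_div_assoc]
    show (∑' n : ℕ, F n y) = Zop lam f₁ (t / y) * f₂ y / (y:ℂ)
    rw [tsum_congr this, tsum_mul_right, ← mul_div_assoc]
    rfl

lemma mconv_comm (f g : ℝ → ℂ) {t : ℝ} (ht : 0 < t) : mconv f g t = mconv g f t := by
  have himg : (fun y : ℝ => t / y) '' (Ioi 0) = Ioi 0 := by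
    ext x
    simp only [mem_image, mem_Ioi]
    constructor
    · rintro ⟨y, hy, rfl⟩; exact div_pos ht hy
    · intro hx; exact ⟨t / x, div_pos ht hx, by field_simp⟩
  have hder : ∀ y ∈ Ioi (0:ℝ), HasDerivWithinAt (fun y : ℝ => t / y) (-t / y^2) (Ioi 0) y := by
    intro y hy
    have h : HasDerivAt (fun y : ℝ => t / y) (-t/y^2) y := by
      have := (hasDerivAt_inv (ne_of_gt (hy : (0:ℝ) < y))).const_mul t
      simpa [div_eq_mul_inv, neg_div, mul_comm] using this
    exact h.hasDerivWithinAt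
  have hinj : InjOn (fun y : ℝ => t / y) (Ioi 0) := by
    intro a ha b hb hab
    simp only at hab
    have ha0 : (a:ℝ) ≠ 0 := ne_of_gt ha
    have hb0 : (b:ℝ) ≠ 0 := ne_of_gt hb
    field_simp at hab
    exact hab.symm
  have key := integral_image_eq_integral_abs_deriv_smul measurableSet_Ioi hder hinj
    (fun x => g (t/x) * f x / (x:ℂ))
  rw [himg] at key
  have : mconv g f t = ∫ x in Ioi (0:ℝ), g (t/x) * f x / (x:ℂ) := rfl
  rw [mconv, this, key]
  apply setIntegral_congr_fun measurableSet_Ioi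
  intro y hy
  have hy0 : (0:ℝ) < y := hy
  have ht0 : (t:ℝ) ≠ 0 := ne_of_gt ht
  have h1 : t / (t/y) = y := by field_simp
  beta_reduce
  rw [h1]
  have h2 : |(-t / y^2)| = t / y^2 := by
    rw [abs_div, abs_neg, abs_of_pos ht, abs_of_pos (by positivity : (0:ℝ) < y^2)]
  rw [h2, Complex.real_smul]
  push_cast
  have hyC : (y:ℂ) ≠ 0 := by exact_mod_cast ne_of_gt hy0
  have htC : (t:ℂ) ≠ 0 := by exact_mod_cast ht0
  field_simp

lemma hop_mconv {lam : ℝ} {g f₂ : ℝ → ℂ} (hf₂ : MemH f₂)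
    (hgc : ContinuousOn g (Ioi 0)) (hg'c : ContinuousOn (deriv g) (Ioi 0))
    (hgd : ∀ u, 0 < u → HasDerivAt g (deriv g u) u)
    (k : ℕ) {C : ℝ} (hC : 0 < C)
    (hg : ∀ u, 0 < u → ‖g u‖ ≤ C * u ^ (-(k:ℝ)))
    (hg' : ∀ u, 0 < u → ‖deriv g u‖ ≤ C * u ^ (-(k:ℝ)))
    {t : ℝ} (ht : 0 < t) :
    IntegrableOn (fun y => Hop lam g (t/y) * f₂ y / (y:ℂ)) (Ioi 0) ∧
    Hop lam (mconv g f₂) t = mconv (Hop lam g) f₂ t := by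
  set μ := volume.restrict (Ioi (0:ℝ)) with hμ
  set F : ℝ → ℝ → ℂ := fun x y => g (x/y) * (f₂ y / (y:ℂ)) with hF
  set F' : ℝ → ℝ → ℂ := fun x y => ((1/y : ℝ) • deriv g (x/y)) * (f₂ y / (y:ℂ)) with hF'
  have hε : (0:ℝ) < t/2 := half_pos ht
  have hball : Metric.ball t (t/2) ⊆ Ioi (t/2) := by
    intro x hx
    rw [Real.ball_eq_Ioo] at hx
    have := hx.1
    simp only [mem_Ioi]
    linarith
  have hF_meas : ∀ᶠ x in nhds t, AEStronglyMeasurable (F x) μ := by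
    filter_upwards [isOpen_Ioi.eventually_mem (show t ∈ Ioi (0:ℝ) from ht)] with x hx
    have : ContinuousOn (F x) (Ioi 0) := by
      have := conv_cont hgc hf₂.contOn (hx : (0:ℝ) < x)
      apply this.congr
      intro y hy
      rw [hF]; simp only [mul_div_assoc]
    exact this.aestronglyMeasurable measurableSet_Ioi
  have hF_int : Integrable (F t) μ := by
    have := (mconv_integrand_integrable hgc hf₂ k hC hg ht).1
    apply this.congr_fun _ measurableSet_Ioi
    intro y hy
    rw [hF]; simp only [mul_div_assoc]
  have hF'_meas : AEStronglyMeasurable (F' t) μ := by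
    have c1 : ContinuousOn (fun y : ℝ => (1/y : ℝ)) (Ioi 0) :=
      continuousOn_const.div continuousOn_id (fun y hy => ne_of_gt hy)
    have c2 : ContinuousOn (fun y : ℝ => deriv g (t/y)) (Ioi 0) := by
      apply hg'c.comp (continuousOn_const.div continuousOn_id (fun y hy => ne_of_gt hy))
      intro y hy
      exact div_pos ht hy
    have c3 : ContinuousOn (fun y : ℝ => f₂ y / (y:ℂ)) (Ioi 0) :=
      hf₂.contOn.div Complex.continuous_ofReal.continuousOn
        (fun y hy => by simpa using ne_of_gt (hy : (0:ℝ) < y))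
    exact (((c1.smul c2)).mul c3).aestronglyMeasurable measurableSet_Ioi
  set bound : ℝ → ℝ := fun y => (C * (t/2) ^ (-(k:ℝ))) * (y ^ ((k:ℝ)-2) * ‖f₂ y‖) with hbd
  have h_bound : ∀ᵐ y ∂μ, ∀ x ∈ Metric.ball t (t/2), ‖F' x y‖ ≤ bound y := by
    rw [hμ, ae_restrict_iff' measurableSet_Ioi]
    apply ae_of_all
    intro y hy x hx
    have hy0 : (0:ℝ) < y := hy
    have hx2 : t/2 < x := hball hx
    have hx0 : (0:ℝ) < x := lt_trans hε hx2
    have harg : 0 < x/y := div_pos hx0 hy0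
    have hnorm : ‖F' x y‖ = 1/y * ‖deriv g (x/y)‖ * (‖f₂ y‖ / y) := by
      rw [hF']
      beta_reduce
      rw [norm_mul, norm_smul, Real.norm_eq_abs (1/y), abs_of_pos (by positivity : (0:ℝ) < 1/y),
        norm_div, Complex.norm_real, Real.norm_eq_abs y, abs_of_pos hy0]
    rw [hnorm]
    have h1 : ‖deriv g (x/y)‖ ≤ C * (x/y) ^ (-(k:ℝ)) := hg' _ harg
    have h2 : (x/y) ^ (-(k:ℝ)) = x ^ (-(k:ℝ)) * y ^ (k:ℝ) := by
      rw [Real.div_rpow hx0.le hy0.le, Real.rpow_neg hx0.le, Real.rpow_neg hy0.le]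
      field_simp
    have h3 : x ^ (-(k:ℝ)) ≤ (t/2) ^ (-(k:ℝ)) := by
      rw [Real.rpow_neg hx0.le, Real.rpow_neg hε.le]
      apply inv_anti₀ (Real.rpow_pos_of_pos hε _)
      exact Real.rpow_le_rpow hε.le hx2.le (by positivity)
    have hchain : ‖deriv g (x/y)‖ ≤ C * (t/2) ^ (-(k:ℝ)) * y ^ (k:ℝ) := by
      calc ‖deriv g (x/y)‖ ≤ C * (x ^ (-(k:ℝ)) * y ^ (k:ℝ)) := by rw [← h2]; exact h1
      _ ≤ C * ((t/2) ^ (-(k:ℝ)) * y ^ (k:ℝ)) := by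
          apply mul_le_mul_of_nonneg_left _ hC.le
          exact mul_le_mul_of_nonneg_right h3 (Real.rpow_pos_of_pos hy0 _).le
      _ = C * (t/2) ^ (-(k:ℝ)) * y ^ (k:ℝ) := by ring
    have hyk2 : y ^ ((k:ℝ)) / y / y = y ^ ((k:ℝ)-2) := by
      rw [show (k:ℝ)-2 = (k:ℝ) + (-1) + (-1) by ring, Real.rpow_add hy0, Real.rpow_add hy0,
        Real.rpow_neg_one]
      field_simp
    calc 1/y * ‖deriv g (x/y)‖ * (‖f₂ y‖ / y)
        ≤ 1/y * (C * (t/2) ^ (-(k:ℝ)) * y ^ (k:ℝ)) * (‖f₂ y‖ / y) := by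
          apply mul_le_mul_of_nonneg_right _ (by positivity)
          exact mul_le_mul_of_nonneg_left hchain (by positivity)
    _ = (C * (t/2) ^ (-(k:ℝ))) * ((y ^ ((k:ℝ)) / y / y) * ‖f₂ y‖) := by ring
    _ = bound y := by rw [hyk2, hbd]
  have bound_int : Integrable bound μ :=
    (memH_weight_integrable hf₂ ((k:ℝ)-2)).const_mul _
  have h_diff : ∀ᵐ y ∂μ, ∀ x ∈ Metric.ball t (t/2), HasDerivAt (fun x => F x y) (F' x y) x := by
    rw [hμ, ae_restrict_iff' measurableSet_Ioi]
    apply ae_of_all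
    intro y hy x hx
    have hy0 : (0:ℝ) < y := hy
    have hx0 : (0:ℝ) < x := lt_trans hε (hball hx)
    have harg : 0 < x/y := div_pos hx0 hy0
    have hdiv : HasDerivAt (fun x : ℝ => x/y) (1/y) x := by
      simpa using (hasDerivAt_id x).div_const y
    have hcomp := HasDerivAt.scomp x (hgd _ harg) hdiv
    exact hcomp.mul_const (f₂ y / (y:ℂ))
  obtain ⟨hF'_int, hderiv⟩ := hasDerivAt_integral_of_dominated_loc_of_deriv_le (Metric.ball_mem_nhds t hε) hF_meas
    hF_int hF'_meas h_bound bound_int h_diff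
  have heq : mconv g f₂ = fun x => ∫ y, F x y ∂μ := by
    funext x
    rw [mconv, hμ, hF]
    simp only [mul_div_assoc]
  have hd2 : HasDerivAt (mconv g f₂) (∫ y, F' t y ∂μ) t := by rw [heq]; exact hderiv
  have hHopEq : ∀ y, 0 < y →
      Hop lam g (t/y) * f₂ y / (y:ℂ) = F t y + ((lam:ℂ) * (t:ℂ)) * F' t y := by
    intro y hy0
    have hyC : (y:ℂ) ≠ 0 := by exact_mod_cast ne_of_gt hy0
    simp only [Hop, hF, hF', Complex.real_smul]
    push_cast
    field_simp
  constructor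
  · have hint : IntegrableOn (fun y => F t y + ((lam:ℂ) * (t:ℂ)) * F' t y) (Ioi 0) :=
      hF_int.add (hF'_int.const_mul _)
    apply hint.congr_fun _ measurableSet_Ioi
    intro y hy
    exact (hHopEq y hy).symm
  · have hL : Hop lam (mconv g f₂) t
        = mconv g f₂ t + (lam:ℂ) * (t:ℂ) * (∫ y, F' t y ∂μ) := by
      rw [Hop, hd2.deriv]
    rw [hL]
    have hR : mconv (Hop lam g) f₂ t
        = ∫ y in Ioi (0:ℝ), (F t y + ((lam:ℂ) * (t:ℂ)) * F' t y) := by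
      rw [mconv]
      apply setIntegral_congr_fun measurableSet_Ioi
      intro y hy
      exact hHopEq y hy
    rw [hR]
    rw [integral_add hF_int (hF'_int.const_mul _), MeasureTheory.integral_const_mul]
    have : mconv g f₂ t = ∫ y, F t y ∂μ := by rw [heq]
    rw [this]

lemma memH_summable {lam : ℝ} (hlam : 0 < lam) {f : ℝ → ℂ} (hf : MemH f) {t : ℝ} (ht : 0 < t) :
    Summable (fun n : ℕ => f (((n:ℝ)+1) ^ lam * t)) := by
  set k : ℕ := ⌈1/lam⌉₊ + 4 with hk
  have hcond : 1 < lam * ((k:ℝ) - ((0:ℕ):ℝ)) := by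
    have := kchoice hlam 0 (by norm_num)
    push_cast [hk] at this ⊢
    nlinarith
  obtain ⟨C, hC, hb⟩ := hf.bound_top k
  obtain ⟨D, hD, hw⟩ := wser_est 0 k hcond hC hb
  have := (hw t ht).1
  apply Summable.congr this
  intro n
  norm_num

lemma Hop_congr_Ioi {a : ℝ} {F G : ℝ → ℂ} (h : ∀ s, 0 < s → F s = G s) {t : ℝ} (ht : 0 < t) :
    Hop a F t = Hop a G t := by
  have hEv : F =ᶠ[nhds t] G :=
    Filter.eventuallyEq_of_mem (isOpen_Ioi.mem_nhds ht) (fun s hs => h s hs)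
  rw [Hop, Hop, h t ht, hEv.deriv_eq]

lemma Hop_contOn {a : ℝ} {G : ℝ → ℂ} (h1 : ContinuousOn G (Ioi 0))
    (h2 : ContinuousOn (deriv G) (Ioi 0)) : ContinuousOn (Hop a G) (Ioi 0) := by
  show ContinuousOn (fun t => G t + (a:ℂ) * (t:ℂ) * deriv G t) (Ioi 0)
  exact h1.add (((continuous_const.mul Complex.continuous_ofReal).continuousOn).mul h2)

lemma Hop_norm_le {lam : ℝ} (hlam : 0 < lam) {G : ℝ → ℂ} {u : ℝ} (hu : 0 < u) :
    ‖Hop lam G u‖ ≤ ‖G u‖ + lam * u * ‖deriv G u‖ := by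
  rw [Hop]
  refine (norm_add_le _ _).trans ?_
  rw [norm_mul, norm_mul, Complex.norm_real, Complex.norm_real, Real.norm_eq_abs,
    Real.norm_eq_abs, abs_of_pos hlam, abs_of_pos hu]

lemma Hop_two_bounds {lam : ℝ} (hlam : 0 < lam) {G : ℝ → ℂ} {k : ℕ} {C : ℝ} (hC : 0 < C)
    (hb : ∀ u, 0 < u → ‖G u‖ ≤ C * u ^ (-(k:ℝ)))
    (hb' : ∀ u, 0 < u → ‖deriv G u‖ ≤ C * u ^ (-(k:ℝ))) :
    (∀ u, 0 < u → u ≤ 1 → ‖Hop lam G u‖ ≤ (C * (1+lam)) * u ^ (-((k:ℝ)+1))) ∧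
    (∀ u, 1 ≤ u → ‖Hop lam G u‖ ≤ (C * (1+lam)) * u ^ (-((k:ℝ)-1))) := by
  have base : ∀ u, 0 < u → ‖Hop lam G u‖ ≤ C * u ^ (-(k:ℝ)) * (1 + lam * u) := by
    intro u hu
    refine (Hop_norm_le hlam hu).trans ?_
    have h1 := hb u hu
    have h2 := hb' u hu
    have hru : (0:ℝ) < u ^ (-(k:ℝ)) := Real.rpow_pos_of_pos hu _
    nlinarith [mul_le_mul_of_nonneg_left h2 (by positivity : (0:ℝ) ≤ lam * u)]
  constructor
  · intro u hu hu1
    have hru : (0:ℝ) < u ^ (-(k:ℝ)) := Real.rpow_pos_of_pos hu _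
    refine (base u hu).trans ?_
    have hmono : u ^ (-(k:ℝ)) ≤ u ^ (-((k:ℝ)+1)) :=
      Real.rpow_le_rpow_of_exponent_ge hu hu1 (by linarith)
    have h2 : 1 + lam * u ≤ 1 + lam := by nlinarith
    have hru1 : (0:ℝ) < u ^ (-((k:ℝ)+1)) := Real.rpow_pos_of_pos hu _
    calc C * u ^ (-(k:ℝ)) * (1 + lam * u) ≤ C * u ^ (-((k:ℝ)+1)) * (1 + lam) := by
          apply mul_le_mul _ h2 (by nlinarith) (by positivity)
          exact mul_le_mul_of_nonneg_left hmono hC.le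
    _ = C * (1+lam) * u ^ (-((k:ℝ)+1)) := by ring
  · intro u hu
    have hu0 : (0:ℝ) < u := lt_of_lt_of_le zero_lt_one hu
    have hru : (0:ℝ) < u ^ (-(k:ℝ)) := Real.rpow_pos_of_pos hu0 _
    refine (base u hu0).trans ?_
    have hsplit : u ^ (-((k:ℝ)-1)) = u ^ (-(k:ℝ)) * u := by
      rw [show -((k:ℝ)-1) = -(k:ℝ) + 1 by ring, Real.rpow_add hu0, Real.rpow_one]
    rw [hsplit]
    have h2 : 1 + lam * u ≤ (1 + lam) * u := by nlinarith
    calc C * u ^ (-(k:ℝ)) * (1 + lam * u) ≤ C * u ^ (-(k:ℝ)) * ((1 + lam) * u) := by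
          apply mul_le_mul_of_nonneg_left h2 (by positivity)
    _ = C * (1+lam) * (u ^ (-(k:ℝ)) * u) := by ring

lemma main_first {lam : ℝ} (hlam : 0 < lam) {f₁ f₂ : ℝ → ℂ} (hf₁ : MemH f₁) (hf₂ : MemH f₂)
    {t : ℝ} (ht : 0 < t) :
    IntegrableOn (fun y => Hop lam (Zop lam f₁) (t/y) * f₂ y / (y:ℂ)) (Ioi 0) ∧
    Hop lam (Zop lam (mconv f₁ f₂)) t = mconv (Hop lam (Zop lam f₁)) f₂ t := by
  obtain ⟨hZd, hdeq, hcZ, hcdZ, hbnd⟩ := Zfacts hlam hf₁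
  obtain ⟨k, hk0, C, hC, hb, hb'⟩ := hbnd 0
  have hgd : ∀ u, 0 < u → HasDerivAt (Zop lam f₁) (deriv (Zop lam f₁) u) u := by
    intro u hu; rw [hdeq u hu]; exact hZd u hu
  obtain ⟨hint5, heq⟩ := hop_mconv hf₂ hcZ hcdZ hgd k hC hb hb' ht
  refine ⟨hint5, ?_⟩
  have hE1 : ∀ s, 0 < s → Zop lam (mconv f₁ f₂) s = mconv (Zop lam f₁) f₂ s :=
    fun s hs => (Z_mconv hlam hf₁ hf₂ hs).2
  rw [Hop_congr_Ioi hE1 ht]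
  exact heq

lemma main_second {lam : ℝ} (hlam : 0 < lam) {f₁ f₂ : ℝ → ℂ} (hf₁ : MemH f₁) (hf₂ : MemH f₂)
    {t : ℝ} (ht : 0 < t) :
    Hop lam (Zop lam (mconv f₁ f₂)) t = mconv f₁ (Hop lam (Zop lam f₂)) t := by
  obtain ⟨hZd, hdeq, hcZ, hcdZ, hbnd⟩ := Zfacts hlam hf₂
  obtain ⟨k, hk0, C, hC, hb, hb'⟩ := hbnd 0
  have hgd : ∀ u, 0 < u → HasDerivAt (Zop lam f₂) (deriv (Zop lam f₂) u) u := by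
    intro u hu; rw [hdeq u hu]; exact hZd u hu
  obtain ⟨hint6, heq⟩ := hop_mconv hf₁ hcZ hcdZ hgd k hC hb hb' ht
  have hE2 : ∀ s, 0 < s → Zop lam (mconv f₁ f₂) s = mconv (Zop lam f₂) f₁ s := by
    intro s hs
    have h1 : Zop lam (mconv f₁ f₂) s = Zop lam (mconv f₂ f₁) s := by
      apply tsum_congr; intro n
      exact mconv_comm f₁ f₂ (mul_pos (Real.rpow_pos_of_pos (by positivity) _) hs)
    rw [h1]
    exact (Z_mconv hlam hf₂ hf₁ hs).2
  rw [Hop_congr_Ioi hE2 ht, heq]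
  exact mconv_comm _ f₁ ht

lemma item6 {lam : ℝ} (hlam : 0 < lam) {f₁ f₂ : ℝ → ℂ} (hf₁ : MemH f₁) (hf₂ : MemH f₂)
    {t : ℝ} (ht : 0 < t) :
    IntegrableOn (fun y => f₁ (t/y) * Hop lam (Zop lam f₂) y / (y:ℂ)) (Ioi 0) := by
  obtain ⟨hZd, hdeq, hcZ, hcdZ, hbnd⟩ := Zfacts hlam hf₂
  obtain ⟨k, hk2, C, hC, hb, hb'⟩ := hbnd 2
  have hGc := Hop_contOn (a := lam) hcZ hcdZ
  obtain ⟨hH0, hH1⟩ := Hop_two_bounds hlam hC hb hb'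
  have hk2' : (2:ℝ) ≤ (k:ℝ) := by exact_mod_cast hk2
  exact mconv_integrand_integrable' hf₁ hGc (a := (k:ℝ)+1) (b := (k:ℝ)-1)
    (by positivity) (by linarith) (C := C*(1+lam)) (by positivity)
    (fun u hu hu1 => hH0 u hu hu1) (fun u hu => hH1 u hu) ht

/-- `H_λ ∘ Z^λ` is compatible with multiplicative convolution. -/
theorem stmt7 (lam : ℝ) (hlam : 0 < lam) :
    (∀ f₁ f₂ : ℝ → ℂ, MemH f₁ → MemH f₂ → ∀ t : ℝ, 0 < t →
      (IntegrableOn (fun y : ℝ => f₁ (t / y) * f₂ y / (y : ℂ)) (Ioi 0) ∧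
       Summable (fun n : ℕ => mconv f₁ f₂ ((n + 1 : ℝ) ^ lam * t)) ∧
       Summable (fun n : ℕ => f₁ ((n + 1 : ℝ) ^ lam * t)) ∧
       Summable (fun n : ℕ => f₂ ((n + 1 : ℝ) ^ lam * t)) ∧
       IntegrableOn (fun y : ℝ =>
         Hop lam (Zop lam f₁) (t / y) * f₂ y / (y : ℂ)) (Ioi 0) ∧
       IntegrableOn (fun y : ℝ =>
         f₁ (t / y) * Hop lam (Zop lam f₂) y / (y : ℂ)) (Ioi 0)) ∧
      Hop lam (Zop lam (mconv f₁ f₂)) t = mconv (Hop lam (Zop lam f₁)) f₂ t ∧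
      Hop lam (Zop lam (mconv f₁ f₂)) t = mconv f₁ (Hop lam (Zop lam f₂)) t) ∧
    (∀ V f : ℝ → ℂ, MemH V → MemH f → ∀ t : ℝ, 0 < t →
      Hop lam (Zop lam (mconv V f)) t = mconv V (Hop lam (Zop lam f)) t) := by
  constructor
  · intro f₁ f₂ hf₁ hf₂ t ht
    refine ⟨⟨?_, ?_, ?_, ?_, ?_, ?_⟩, ?_, ?_⟩
    · obtain ⟨C, hC, hb⟩ := hf₁.bound_top 1
      exact (mconv_integrand_integrable hf₁.contOn hf₂ 1 hC hb ht).1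
    · exact (Z_mconv hlam hf₁ hf₂ ht).1
    · exact memH_summable hlam hf₁ ht
    · exact memH_summable hlam hf₂ ht
    · exact (main_first hlam hf₁ hf₂ ht).1
    · exact item6 hlam hf₁ hf₂ ht
    · exact (main_first hlam hf₁ hf₂ ht).2
    · exact main_second hlam hf₁ hf₂ ht
  · intro V f hV hf t ht
    exact main_second hlam hV hf ht
end
end

section
/- Let g : (0,∞) → (0,∞) be a smooth involution (g(g(t)) = t for all t > 0) with g(t) → ∞ as t → 0⁺. Then there exists a smooth strictly increasing bijection f : (0,∞) → (0,∞) such that f(g(t)) = 1/f(t) for all t > 0; i.e. g is smoothly conjugate to the involution t ↦ 1/t. Consequently, in the set of smooth involutions of (0,∞), every involution is conjugate (by a smooth bijection of (0,∞)) either to the identity or to t ↦ 1/t. -/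
open Set Filter

noncomputable section

/-- a smooth involution of `(0,∞)` diverging at `0⁺` is smoothly
conjugate to `t ↦ 1/t`; consequently every smooth involution of `(0,∞)` is
conjugate to the identity or to `t ↦ 1/t`. -/
theorem stmt11 (g : ℝ → ℝ)
    (hg_pos : ∀ t : ℝ, 0 < t → 0 < g t)
    (hg_smooth : ContDiffOn ℝ (⊤ : ℕ∞) g (Ioi 0))
    (hg_invol : ∀ t : ℝ, 0 < t → g (g t) = t) :
    ((Tendsto g (nhdsWithin 0 (Ioi 0)) atTop) →
      ∃ f : ℝ → ℝ, ContDiffOn ℝ (⊤ : ℕ∞) f (Ioi 0) ∧ StrictMonoOn f (Ioi 0) ∧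
        BijOn f (Ioi 0) (Ioi 0) ∧ ∀ t : ℝ, 0 < t → f (g t) = 1 / f t) ∧
    ((∀ t : ℝ, 0 < t → g t = t) ∨
      ∃ f : ℝ → ℝ, ContDiffOn ℝ (⊤ : ℕ∞) f (Ioi 0) ∧ BijOn f (Ioi 0) (Ioi 0) ∧
        ∀ t : ℝ, 0 < t → f (g t) = 1 / f t) := by
  have hinj : InjOn g (Ioi 0) := by
    intro a ha b hb h
    have h1 := hg_invol a ha
    rw [h, hg_invol b hb] at h1
    exact h1.symm
  have hcont : ContinuousOn g (Ioi 0) := hg_smooth.continuousOn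
  haveI : Inhabited (Ioi (0:ℝ)) := ⟨⟨1, by norm_num⟩⟩
  have hmono : StrictMonoOn g (Ioi 0) ∨ StrictAntiOn g (Ioi 0) := by
    have h := Continuous.strictMono_of_inj hcont.restrict hinj.injective
    exact h.imp strictMono_restrict.mp strictAntiOn_iff_strictAnti.mpr
  have main : (Tendsto g (nhdsWithin 0 (Ioi 0)) atTop) →
      ∃ f : ℝ → ℝ, ContDiffOn ℝ (⊤ : ℕ∞) f (Ioi 0) ∧ StrictMonoOn f (Ioi 0) ∧
        BijOn f (Ioi 0) (Ioi 0) ∧ ∀ t : ℝ, 0 < t → f (g t) = 1 / f t := by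
    intro hlim
    have hanti : StrictAntiOn g (Ioi 0) := by
      rcases hmono with hm | ha
      · exfalso
        have h1 : ∀ᶠ t in nhdsWithin 0 (Ioi 0), g 1 < g t := hlim.eventually_gt_atTop (g 1)
        have h2 : Ioo (0:ℝ) 1 ∈ nhdsWithin 0 (Ioi 0) :=
          Ioo_mem_nhdsGT_of_mem ⟨le_refl 0, one_pos⟩
        obtain ⟨t, ht1, ht2⟩ := (h1.and (Filter.eventually_mem_set.mpr h2)).exists
        exact absurd (hm ht2.1 (by norm_num : (1:ℝ) ∈ Ioi 0) ht2.2) (not_lt.mpr ht1.le)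
      · exact ha
    set f : ℝ → ℝ := fun t => Real.sqrt (t / g t) with hf
    have hrat_pos : ∀ t ∈ Ioi (0:ℝ), 0 < t / g t := fun t ht =>
      div_pos ht (hg_pos t ht)
    have hfpos : ∀ t ∈ Ioi (0:ℝ), 0 < f t := fun t ht =>
      Real.sqrt_pos.mpr (hrat_pos t ht)
    have hrat_smooth : ContDiffOn ℝ (⊤ : ℕ∞) (fun t => t / g t) (Ioi 0) :=
      contDiffOn_id.div hg_smooth (fun t ht => (hg_pos t ht).ne')
    have hfsmooth : ContDiffOn ℝ (⊤ : ℕ∞) f (Ioi 0) :=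
      hrat_smooth.sqrt (fun t ht => (hrat_pos t ht).ne')
    have hratmono : StrictMonoOn (fun t => t / g t) (Ioi 0) := by
      intro x hx y hy hxy
      have hgy : (0:ℝ) < g y := hg_pos y hy
      have hgyx : g y < g x := hanti hx hy hxy
      exact div_lt_div₀ hxy hgyx.le hy.le hgy
    have hfmono : StrictMonoOn f (Ioi 0) := fun x hx y hy hxy =>
      Real.sqrt_lt_sqrt (hrat_pos x hx).le (hratmono hx hy hxy)
    refine ⟨f, hfsmooth, hfmono, ⟨fun t ht => hfpos t ht, hfmono.injOn, ?_⟩, ?_⟩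
    · -- surjectivity
      intro y hy
      have hy0 : (0:ℝ) < y := hy
      have hy2 : (0:ℝ) < y ^ 2 := by positivity
      -- small point a
      have h1 : ∀ᶠ t in nhdsWithin 0 (Ioi 0), 1 < g t := hlim.eventually_gt_atTop 1
      have h2 : Ioo (0:ℝ) (y ^ 2) ∈ nhdsWithin 0 (Ioi 0) :=
        Ioo_mem_nhdsGT_of_mem ⟨le_refl 0, hy2⟩
      obtain ⟨a, hga, ha⟩ := (h1.and (Filter.eventually_mem_set.mpr h2)).exists
      have ha0 : (0:ℝ) < a := ha.1
      have hfa : f a < y := by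
        have h3 : a / g a < y ^ 2 := lt_of_lt_of_le (div_lt_self ha0 hga) ha.2.le
        calc f a < Real.sqrt (y ^ 2) :=
              Real.sqrt_lt_sqrt (hrat_pos a ha0).le h3
          _ = y := Real.sqrt_sq hy0.le
      -- large point b
      set b : ℝ := max (max (g 1) (y ^ 2)) a + 1 with hb
      have hg1 : (0:ℝ) < g 1 := hg_pos 1 one_pos
      have hb0 : (0:ℝ) < b := by
        have : g 1 ≤ max (max (g 1) (y ^ 2)) a := le_trans (le_max_left _ _) (le_max_left _ _)
        nlinarith
      have hbg1 : g 1 < b := by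
        have : g 1 ≤ max (max (g 1) (y ^ 2)) a := le_trans (le_max_left _ _) (le_max_left _ _)
        linarith
      have hby2 : y ^ 2 < b := by
        have : y ^ 2 ≤ max (max (g 1) (y ^ 2)) a := le_trans (le_max_right _ _) (le_max_left _ _)
        linarith
      have hab : a < b := by
        have : a ≤ max (max (g 1) (y ^ 2)) a := le_max_right _ _
        linarith
      have hgb1 : g b < 1 := by
        have := hanti hg1 hb0 hbg1
        rwa [hg_invol 1 one_pos] at this
      have hgb0 : (0:ℝ) < g b := hg_pos b hb0
      have hfb : y < f b := by
        have h4 : b < b / g b := by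
          rw [lt_div_iff₀ hgb0]
          nlinarith
        have h5 : y ^ 2 < b / g b := lt_trans hby2 h4
        calc y = Real.sqrt (y ^ 2) := (Real.sqrt_sq hy0.le).symm
          _ < f b := Real.sqrt_lt_sqrt hy2.le h5
      -- intermediate value theorem on [a, b]
      have hsub : Icc a b ⊆ Ioi (0:ℝ) := fun x hx => lt_of_lt_of_le ha0 hx.1
      have hivt := intermediate_value_Ioo hab.le (hfsmooth.continuousOn.mono hsub)
      have hyIoo : y ∈ Ioo (f a) (f b) := ⟨hfa, hfb⟩
      obtain ⟨x, hx, hxy⟩ := hivt hyIoo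
      exact ⟨x, lt_trans ha0 hx.1, hxy⟩
    · -- functional equation
      intro t ht
      have hgt : (0:ℝ) < g t := hg_pos t ht
      show Real.sqrt (g t / g (g t)) = 1 / Real.sqrt (t / g t)
      rw [hg_invol t ht, one_div, ← Real.sqrt_inv, inv_div]
  refine ⟨main, ?_⟩
  rcases hmono with hm | ha
  · left
    intro t ht
    rcases lt_trichotomy (g t) t with h | h | h
    · exfalso
      have := hm (hg_pos t ht) ht h
      rw [hg_invol t ht] at this
      exact absurd this (not_lt.mpr h.le)
    · exact h
    · exfalso
      have := hm ht (hg_pos t ht) h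
      rw [hg_invol t ht] at this
      exact absurd this (not_lt.mpr h.le)
  · right
    have hlim : Tendsto g (nhdsWithin 0 (Ioi 0)) atTop := by
      rw [tendsto_atTop]
      intro M
      have hM' : (0:ℝ) < max M 1 := lt_of_lt_of_le one_pos (le_max_right _ _)
      have hgM' : (0:ℝ) < g (max M 1) := hg_pos _ hM'
      filter_upwards [Filter.eventually_mem_set.mpr (Ioo_mem_nhdsGT_of_mem ⟨le_refl (0:ℝ), hgM'⟩)] with t ht
      have := ha ht.1 hgM' ht.2
      rw [hg_invol _ hM'] at this
      exact le_trans (le_max_left _ _) this.le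
    obtain ⟨f, h1, _, h3, h4⟩ := main hlim
    exact ⟨f, h1, h3, h4⟩
end
end

section
/- Let A be an associative ring and ∂ : A → A an additive map satisfying the Leibniz rule ∂(a·b) = (∂a)·b + a·(∂b). Assume that A is commutative, or that ∂ ∘ ∂ = 0. Then the bracket [a,b]_∂ := (∂a)·b − (∂b)·a is antisymmetric ([a,b]_∂ = −[b,a]_∂) and satisfies the Jacobi identity: [a,[b,c]_∂]_∂ + [b,[c,a]_∂]_∂ + [c,[a,b]_∂]_∂ = 0 for all a, b, c ∈ A. -/
/-- for a derivation `d` on a ring that is commutative or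
satisfies `d ∘ d = 0`, the bracket `[a,b]_d = (d a)·b − (d b)·a` is
antisymmetric and satisfies the Jacobi identity. -/
theorem stmt12 {A : Type*} [Ring A] (d : A → A)
    (hadd : ∀ a b : A, d (a + b) = d a + d b)
    (hleib : ∀ a b : A, d (a * b) = d a * b + a * d b)
    (hc : (∀ a b : A, a * b = b * a) ∨ (∀ a : A, d (d a) = 0)) :
    (∀ a b : A, d a * b - d b * a = -(d b * a - d a * b)) ∧
    (∀ a b c : A,
      (d a * (d b * c - d c * b) - d (d b * c - d c * b) * a) +
      (d b * (d c * a - d a * c) - d (d c * a - d a * c) * b) +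
      (d c * (d a * b - d b * a) - d (d a * b - d b * a) * c) = 0) := by
  have h0 : d 0 = 0 := by
    have h := hadd 0 0
    rw [add_zero] at h
    exact add_eq_left.mp h.symm
  have hneg : ∀ a : A, d (-a) = -d a := by
    intro a
    have h := hadd a (-a)
    rw [add_neg_cancel, h0] at h
    exact (neg_eq_of_add_eq_zero_right h.symm).symm
  have hsub : ∀ a b : A, d (a - b) = d a - d b := by
    intro a b
    rw [sub_eq_add_neg, hadd, hneg, sub_eq_add_neg]
  refine ⟨fun a b => (neg_sub _ _).symm, fun a b c => ?_⟩
  simp only [hsub, hleib]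
  rcases hc with h | h
  · letI : CommRing A := { ‹Ring A› with mul_comm := h }
    ring
  · simp only [h, zero_mul]
    noncomm_ring
end

section
/- Let R be a commutative ring and τ : R → R a ring homomorphism with τ ∘ τ = id. Define [f,g]* := (τf)·g − (τg)·f and f ⋆^± g := (f ± τf)·(g ± τg). Then: (i) [·,·]* is antisymmetric and satisfies the Jacobi identity [f,[g,h]*]* + [g,[h,f]*]* + [h,[f,g]*]* = 0; (ii) τ([f,g]*) = −[f,g]* (so [f,g]* lies in the (−1)-eigenspace of τ) and τ([f,g]*) = [τf, τg]* (τ is a Lie morphism); (iii) both products ⋆^+ and ⋆^− are associative, τ(f ⋆^± g) = f ⋆^± g (so f ⋆^± g lies in the (+1)-eigenspace of τ), and τ is a morphism of ⋆^±: τ(f ⋆^± g) = (τf) ⋆^± (τg). -/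
/-- for an involutive ring homomorphism `τ` of a commutative ring,
the bracket `[f,g]* = τf·g − τg·f` is a Lie bracket landing in the
`(−1)`-eigenspace, `τ` is a Lie morphism, and the products
`f ⋆^± g = (f ± τf)(g ± τg)` are associative, land in the `(+1)`-eigenspace,
and `τ` is a morphism for them. -/
theorem stmt13 {R : Type*} [CommRing R] (τ : R →+* R) (hτ : ∀ x : R, τ (τ x) = x) :
    -- (i) antisymmetry and Jacobi identity for [f,g]* = τf·g − τg·f
    (∀ f g : R, τ f * g - τ g * f = -(τ g * f - τ f * g)) ∧
    (∀ f g h : R,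
      (τ f * (τ g * h - τ h * g) - τ (τ g * h - τ h * g) * f) +
      (τ g * (τ h * f - τ f * h) - τ (τ h * f - τ f * h) * g) +
      (τ h * (τ f * g - τ g * f) - τ (τ f * g - τ g * f) * h) = 0) ∧
    -- (ii) [f,g]* lies in the (−1)-eigenspace and τ is a Lie morphism
    (∀ f g : R, τ (τ f * g - τ g * f) = -(τ f * g - τ g * f)) ∧
    (∀ f g : R, τ (τ f * g - τ g * f) = τ (τ f) * τ g - τ (τ g) * τ f) ∧
    -- (iii) associativity of ⋆^±
    (∀ f g h : R,
      ((f + τ f) * (g + τ g) + τ ((f + τ f) * (g + τ g))) * (h + τ h)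
        = (f + τ f) * ((g + τ g) * (h + τ h) + τ ((g + τ g) * (h + τ h)))) ∧
    (∀ f g h : R,
      ((f - τ f) * (g - τ g) - τ ((f - τ f) * (g - τ g))) * (h - τ h)
        = (f - τ f) * ((g - τ g) * (h - τ h) - τ ((g - τ g) * (h - τ h)))) ∧
    -- ⋆^± lands in the (+1)-eigenspace of τ
    (∀ f g : R, τ ((f + τ f) * (g + τ g)) = (f + τ f) * (g + τ g)) ∧
    (∀ f g : R, τ ((f - τ f) * (g - τ g)) = (f - τ f) * (g - τ g)) ∧
    -- τ is a morphism of ⋆^±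
    (∀ f g : R, τ ((f + τ f) * (g + τ g)) = (τ f + τ (τ f)) * (τ g + τ (τ g))) ∧
    (∀ f g : R, τ ((f - τ f) * (g - τ g)) = (τ f - τ (τ f)) * (τ g - τ (τ g))) := by
  refine ⟨fun f g => by ring, fun f g h => ?_, fun f g => ?_, fun f g => ?_,
    fun f g h => ?_, fun f g h => ?_, fun f g => ?_, fun f g => ?_,
    fun f g => ?_, fun f g => ?_⟩ <;>
  simp only [map_mul, map_sub, map_add, hτ] <;> ring
end

section
/- Let R be a commutative ring and τ : R → R a ring homomorphism with τ ∘ τ = id. For V ∈ R define d⁻_V(f) := (V − τV)·(f − τf) and d⁺_V(f) := (τ(V − τV))·f − (τf)·(V − τV). Then: (i) d⁻_{V₁} ∘ d⁻_{V₂} = 0 and d⁺_{V₁} ∘ d⁺_{V₂} = 0 for all V₁, V₂ ∈ R; (ii) if τf = f then d⁻_V(f) = 0, and if τf = −f then d⁺_V(f) = 0 (i.e. R^∓ ⊆ ker(d^±_V)); (iii) d⁻_V satisfies the twisted Leibniz rule d⁻_V(f·g) = d⁻_V(f)·g + (τf)·d⁻_V(g); (iv) the product rule in the kernel parameter holds: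 d^±_{V₁·V₂}(f) = V₁·d^±_{V₂}(f) + (τV₂)·d^±_{V₁}(f), and consequently ker(d^±_{V₁}) ∩ ker(d^±_{V₂}) ⊆ ker(d^±_{V₁·V₂}). -/
noncomputable section

/-- `d⁻_V f = (V − τV)·(f − τf)`. -/
def dm {R : Type*} [CommRing R] (τ : R →+* R) (V f : R) : R :=
  (V - τ V) * (f - τ f)

/-- `d⁺_V f = τ(V − τV)·f − τf·(V − τV)`. -/
def dp {R : Type*} [CommRing R] (τ : R →+* R) (V f : R) : R :=
  τ (V - τ V) * f - τ f * (V - τ V)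

/-- the maps `d^±_V` square to zero (even with different
parameters), kill the appropriate eigenspaces of `τ`, satisfy a twisted Leibniz
rule and a product rule in the parameter `V`. -/
theorem stmt14 {R : Type*} [CommRing R] (τ : R →+* R) (hτ : ∀ x : R, τ (τ x) = x) :
    -- (i)
    (∀ V₁ V₂ f : R, dm τ V₁ (dm τ V₂ f) = 0) ∧
    (∀ V₁ V₂ f : R, dp τ V₁ (dp τ V₂ f) = 0) ∧
    -- (ii)
    (∀ V f : R, τ f = f → dm τ V f = 0) ∧
    (∀ V f : R, τ f = -f → dp τ V f = 0) ∧
    -- (iii) twisted Leibniz rule for d⁻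
    (∀ V f g : R, dm τ V (f * g) = dm τ V f * g + τ f * dm τ V g) ∧
    -- (iv) product rule in the parameter and the kernel inclusion
    (∀ V₁ V₂ f : R, dm τ (V₁ * V₂) f = V₁ * dm τ V₂ f + τ V₂ * dm τ V₁ f) ∧
    (∀ V₁ V₂ f : R, dp τ (V₁ * V₂) f = V₁ * dp τ V₂ f + τ V₂ * dp τ V₁ f) ∧
    (∀ V₁ V₂ f : R, dm τ V₁ f = 0 → dm τ V₂ f = 0 → dm τ (V₁ * V₂) f = 0) ∧
    (∀ V₁ V₂ f : R, dp τ V₁ f = 0 → dp τ V₂ f = 0 → dp τ (V₁ * V₂) f = 0) := by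
  refine ⟨?_, ?_, ?_, ?_, ?_, ?_, ?_, ?_, ?_⟩
  · intro V₁ V₂ f; simp only [dm, map_sub, map_mul, hτ]; ring
  · intro V₁ V₂ f; simp only [dp, map_sub, map_mul, hτ]; ring
  · intro V f h; simp only [dm, h]; ring
  · intro V f h; simp only [dp, h, map_sub, map_mul, hτ]; ring
  · intro V f g; simp only [dm, map_mul]; ring
  · intro V₁ V₂ f; simp only [dm, map_mul]; ring
  · intro V₁ V₂ f; simp only [dp, map_sub, map_mul, hτ]; ring
  · intro V₁ V₂ f h1 h2
    have h : dm τ (V₁ * V₂) f = V₁ * dm τ V₂ f + τ V₂ * dm τ V₁ f := by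
      simp only [dm, map_mul]; ring
    rw [h, h1, h2]; ring
  · intro V₁ V₂ f h1 h2
    have h : dp τ (V₁ * V₂) f = V₁ * dp τ V₂ f + τ V₂ * dp τ V₁ f := by
      simp only [dp, map_sub, map_mul, hτ]; ring
    rw [h, h1, h2]; ring
end
end

section
/- Let ℏ ∈ ℝ and let f ∈ ℋ satisfy f(t) = 0 for all t ∈ (0,1) and ⟨f,f⟩_ℏ = 1. Then ⟨f, τ_ℏ f⟩_ℏ = 0. Moreover, for every ℂ-linear map A : ℋ → ℋ that is symmetric with respect to ⟨·,·⟩_ℏ (i.e. ⟨Ag, h⟩_ℏ = ⟨g, Ah⟩_ℏ for all g, h ∈ ℋ), the variance σ_f²(A) := ⟨f, A(Af)⟩_ℏ − (⟨f, Af⟩_ℏ)² satisfies σ_f²(A) ≥ |⟨f, (1/(2i))·(A(τ_ℏ f) − τ_ℏ(Af))⟩_ℏ|² + |⟨f, ½·(A(τ_ℏ f) + τ_ℏ(Af))⟩_ℏ|². -/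
open MeasureTheory Filter Set ComplexConjugate

noncomputable section

section Helpers

lemma innerH_conj (hb : ℝ) (g h : ℝ → ℂ) : innerH hb g h = conj (innerH hb h g) := by
  unfold innerH
  rw [← integral_conj]
  refine setIntegral_congr_fun measurableSet_Ioi (fun t ht => ?_)
  simp only [map_mul, Complex.conj_conj, Complex.conj_ofReal]
  ring

lemma tau_tau_s15 (hb : ℝ) (f : ℝ → ℂ) {t : ℝ} (ht : 0 < t) : tauOp hb (tauOp hb f) t = f t := by
  unfold tauOp
  simp only [one_div, inv_inv]
  rw [Real.inv_rpow ht.le, Complex.ofReal_inv, ← mul_assoc,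
    mul_inv_cancel₀ (Complex.ofReal_ne_zero.mpr (Real.rpow_pos_of_pos ht _).ne'), one_mul]

lemma innerH_tau_symm (hb : ℝ) (g h : ℝ → ℂ) :
    innerH hb g (tauOp hb h) = innerH hb (tauOp hb g) h := by
  unfold innerH tauOp
  rw [← integral_comp_rpow_Ioi (fun t => ((t ^ hb : ℝ) : ℂ) * conj (g t) *
      (((t ^ (-(1 + hb)) : ℝ) : ℂ) * h (1 / t))) (p := -1) (by norm_num)]
  refine setIntegral_congr_fun measurableSet_Ioi (fun x hx => ?_)
  have hx' : (0:ℝ) < x := hx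
  have hxne : x ≠ 0 := hx'.ne'
  have h1 : x ^ (-1 : ℝ) = x⁻¹ := Real.rpow_neg_one x
  simp only [h1, one_div, inv_inv, Complex.real_smul, map_mul, Complex.conj_ofReal]
  rw [Real.inv_rpow hx'.le hb, Real.inv_rpow hx'.le (-(1+hb)),
    ← Real.rpow_neg hx'.le hb, ← Real.rpow_neg hx'.le (-(1+hb))]
  have key : x ^ (-1 - 1 : ℝ) * (x ^ (-hb) * x ^ (-(-(1+hb)))) = x ^ hb * x ^ (-(1+hb)) := by
    rw [← Real.rpow_add hx', ← Real.rpow_add hx', ← Real.rpow_add hx']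
    ring_nf
  calc (↑(|(-1:ℝ)| * x ^ (-1 - 1 : ℝ)) : ℂ) * (↑(x ^ (-hb):ℝ) * conj (g x⁻¹) * (↑(x ^ (-(-(1+hb))):ℝ) * h x))
      = (↑(x ^ (-1 - 1 : ℝ) * (x ^ (-hb) * x ^ (-(-(1+hb))))):ℂ) * (conj (g x⁻¹) * h x) := by
        push_cast [abs_of_nonpos (by norm_num : (-1:ℝ) ≤ 0)]
        ring
    _ = (↑(x ^ hb * x ^ (-(1+hb))):ℂ) * (conj (g x⁻¹) * h x) := by rw [key]
    _ = ↑(x ^ hb:ℝ) * (↑(x ^ (-(1+hb)):ℝ) * conj (g x⁻¹)) * h x := by push_cast; ring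


end Helpers

section Part1
variable {hb : ℝ} {f : ℝ → ℂ}

lemma memH_continuousOn (hf : MemH f) : ContinuousOn f (Ioi 0) :=
  hf.1.continuousOn

lemma f_one_eq_zero (hf : MemH f) (hsupp : ∀ t : ℝ, 0 < t → t < 1 → f t = 0) : f 1 = 0 := by
  have h1 : (1:ℝ) ∈ Ioi (0:ℝ) := by norm_num
  have hc : Tendsto f (nhdsWithin 1 (Ioo (0:ℝ) 1)) (nhds (f 1)) :=
    ((memH_continuousOn hf 1 h1).tendsto).mono_left (nhdsWithin_mono _ Ioo_subset_Ioi_self)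
  have hne : (nhdsWithin (1:ℝ) (Ioo (0:ℝ) 1)).NeBot := by
    rw [← mem_closure_iff_nhdsWithin_neBot, closure_Ioo (by norm_num : (0:ℝ) ≠ 1)]
    exact ⟨by norm_num, le_refl 1⟩
  have hz : Tendsto f (nhdsWithin 1 (Ioo (0:ℝ) 1)) (nhds 0) := by
    refine Tendsto.congr' ?_ tendsto_const_nhds
    filter_upwards [self_mem_nhdsWithin] with t ht
    exact (hsupp t ht.1 ht.2).symm
  exact tendsto_nhds_unique hc hz

lemma supp_zero_le_one (hf : MemH f) (hsupp : ∀ t : ℝ, 0 < t → t < 1 → f t = 0)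
    {t : ℝ} (ht0 : 0 < t) (ht1 : t ≤ 1) : f t = 0 := by
  rcases lt_or_eq_of_le ht1 with h | h
  · exact hsupp t ht0 h
  · rw [h]; exact f_one_eq_zero hf hsupp

lemma inner_tau_zero (hf : MemH f) (hsupp : ∀ t : ℝ, 0 < t → t < 1 → f t = 0) :
    innerH hb f (tauOp hb f) = 0 := by
  unfold innerH
  rw [← integral_zero (α := ℝ) (G := ℂ)]
  refine setIntegral_congr_fun measurableSet_Ioi (fun t ht => ?_)
  have ht' : (0:ℝ) < t := ht
  rcases le_or_gt t 1 with h | h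
  · rw [supp_zero_le_one hf hsupp ht' h]; simp
  · have : f (1 / t) = 0 := supp_zero_le_one hf hsupp (by positivity)
      (by rw [div_le_one ht']; linarith)
    rw [tauOp, this]; simp
end Part1

section Tau
variable {f : ℝ → ℂ} {hb : ℝ}

lemma uD : UniqueDiffOn ℝ (Ioi (0:ℝ)) := isOpen_Ioi.uniqueDiffOn

lemma Fj_hasDerivAt (hf : ContDiffOn ℝ (⊤ : ℕ∞) f (Ioi 0)) (j : ℕ) {s : ℝ} (hs : 0 < s) :
    HasDerivAt (iteratedDerivWithin j f (Ioi 0)) (iteratedDerivWithin (j+1) f (Ioi 0) s) s := by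
  have hd : DifferentiableOn ℝ (iteratedDerivWithin j f (Ioi 0)) (Ioi 0) :=
    hf.differentiableOn_iteratedDerivWithin (by exact_mod_cast ENat.coe_lt_top j) uD
  have hda := (hd s hs).differentiableAt (isOpen_Ioi.mem_nhds hs)
  have h2 : deriv (iteratedDerivWithin j f (Ioi 0)) s = iteratedDerivWithin (j+1) f (Ioi 0) s := by
    rw [iteratedDerivWithin_succ, derivWithin_of_isOpen isOpen_Ioi hs]
  rw [← h2]; exact hda.hasDerivAt

/-- Representation of a function as a finite combination of `t^r · f^{(j)}(1/t)`. -/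
def RepF (f φ : ℝ → ℂ) : Prop :=
  ∃ (ι : Type) (_ : Fintype ι) (c : ι → ℂ) (r : ι → ℝ) (j : ι → ℕ),
    ∀ t ∈ Ioi (0:ℝ),
      φ t = ∑ i, c i * ((t ^ r i : ℝ) : ℂ) * iteratedDerivWithin (j i) f (Ioi 0) (1/t)

lemma rpow_sq_inv {t : ℝ} (ht : 0 < t) (rr : ℝ) : t ^ rr * ((t^2 : ℝ))⁻¹ = t ^ (rr - 2) := by
  have h2 : ((t^2 : ℝ)) = t ^ (2:ℝ) := by
    rw [← Real.rpow_natCast t 2]; norm_num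
  rw [h2, ← Real.rpow_neg ht.le, ← Real.rpow_add ht]; ring_nf

lemma term_hasDerivAt (hf : ContDiffOn ℝ (⊤ : ℕ∞) f (Ioi 0)) (cc : ℂ) (rr : ℝ) (jj : ℕ)
    {t : ℝ} (ht : 0 < t) :
    HasDerivAt (fun u : ℝ => cc * ((u ^ rr : ℝ) : ℂ) * iteratedDerivWithin jj f (Ioi 0) (1/u))
      (cc * (rr : ℂ) * ((t ^ (rr - 1) : ℝ) : ℂ) * iteratedDerivWithin jj f (Ioi 0) (1/t)
        + (-cc) * ((t ^ (rr - 2) : ℝ) : ℂ) * iteratedDerivWithin (jj+1) f (Ioi 0) (1/t)) t := by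
  have h1 : HasDerivAt (fun u : ℝ => ((u ^ rr : ℝ) : ℂ)) ((rr * t ^ (rr - 1) : ℝ) : ℂ) t :=
    (Real.hasDerivAt_rpow_const (Or.inl ht.ne')).ofReal_comp
  have hinv : HasDerivAt (fun u : ℝ => 1/u) (-(t^2)⁻¹) t := by
    simpa only [one_div] using hasDerivAt_inv ht.ne'
  have hF : HasDerivAt (iteratedDerivWithin jj f (Ioi 0))
      (iteratedDerivWithin (jj+1) f (Ioi 0) (1/t)) (1/t) :=
    Fj_hasDerivAt hf jj (by positivity)
  have h2 : HasDerivAt (fun u : ℝ => iteratedDerivWithin jj f (Ioi 0) (1/u))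
      ((-(t^2)⁻¹) • iteratedDerivWithin (jj+1) f (Ioi 0) (1/t)) t := by
    exact HasDerivAt.scomp t hF hinv
  have h3 := (h1.fun_mul h2).const_mul cc
  have key := rpow_sq_inv ht rr
  convert h3 using 1
  · rfl
  · funext u; ring
  · rw [Complex.real_smul]
    push_cast [← key]
    ring

lemma RepF.derivW (hf : ContDiffOn ℝ (⊤ : ℕ∞) f (Ioi 0)) {φ : ℝ → ℂ} (h : RepF f φ) :
    RepF f (fun t => derivWithin φ (Ioi 0) t) := by
  obtain ⟨ι, _, c, r, j, hrep⟩ := h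
  refine ⟨ι ⊕ ι, inferInstance, Sum.elim (fun i => c i * (r i : ℂ)) (fun i => - c i),
    Sum.elim (fun i => r i - 1) (fun i => r i - 2), Sum.elim j (fun i => j i + 1),
    fun t ht => ?_⟩
  have ht' : (0:ℝ) < t := ht
  have hsum : HasDerivAt (fun u => ∑ i, c i * ((u ^ r i : ℝ) : ℂ) *
      iteratedDerivWithin (j i) f (Ioi 0) (1/u))
      (∑ i, (c i * (r i : ℂ) * ((t ^ (r i - 1) : ℝ) : ℂ) * iteratedDerivWithin (j i) f (Ioi 0) (1/t)
        + (-(c i)) * ((t ^ (r i - 2) : ℝ) : ℂ) * iteratedDerivWithin (j i + 1) f (Ioi 0) (1/t))) t :=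
    HasDerivAt.fun_sum (fun i _ => term_hasDerivAt hf (c i) (r i) (j i) ht')
  have heq : φ =ᶠ[nhds t] (fun u => ∑ i, c i * ((u ^ r i : ℝ) : ℂ) *
      iteratedDerivWithin (j i) f (Ioi 0) (1/u)) := by
    filter_upwards [isOpen_Ioi.mem_nhds ht'] with u hu
    exact hrep u hu
  show derivWithin φ (Ioi 0) t = _
  rw [derivWithin_of_isOpen isOpen_Ioi ht', heq.deriv_eq, hsum.deriv,
    Fintype.sum_sum_type, ← Finset.sum_add_distrib]
  simp

lemma rep_iter (hf : ContDiffOn ℝ (⊤ : ℕ∞) f (Ioi 0)) (m : ℕ) :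
    RepF f (iteratedDerivWithin m (tauOp hb f) (Ioi 0)) := by
  induction m with
  | zero =>
    refine ⟨PUnit, inferInstance, fun _ => 1, fun _ => -(1+hb), fun _ => 0, fun t ht => ?_⟩
    simp [tauOp, iteratedDerivWithin_zero]
  | succ m ih =>
    obtain ⟨ι, _, c, r, j, hrep⟩ := ih.derivW hf
    refine ⟨ι, inferInstance, c, r, j, fun t ht => ?_⟩
    rw [iteratedDerivWithin_succ]
    exact hrep t ht

end Tau

section Decay
variable {f F : ℝ → ℂ} {hb : ℝ}

lemma inv_tendsto_top : Tendsto (fun t : ℝ => 1/t) atTop (nhdsWithin 0 (Ioi 0)) := by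
  rw [tendsto_nhdsWithin_iff]
  constructor
  · simpa only [one_div] using tendsto_inv_atTop_zero
  · filter_upwards [eventually_gt_atTop (0:ℝ)] with t ht
    exact mem_Ioi.mpr (by positivity)

lemma inv_tendsto_zero : Tendsto (fun t : ℝ => 1/t) (nhdsWithin 0 (Ioi 0)) atTop := by
  simpa only [one_div] using tendsto_inv_nhdsGT_zero

lemma aux_top (hF : RapidZero F) (C r : ℝ) (hC : 0 ≤ C) (k : ℕ) :
    Tendsto (fun t : ℝ => C * (t ^ ((k : ℝ) + r) * ‖F (1/t)‖)) atTop (nhds 0) := by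
  obtain ⟨K, hK⟩ := exists_nat_ge ((k : ℝ) + r)
  have base : Tendsto (fun t : ℝ => C * ((1/t) ^ (-(K:ℝ)) * ‖F (1/t)‖)) atTop (nhds (C * 0)) :=
    ((hF K).comp inv_tendsto_top).const_mul C
  rw [mul_zero] at base
  refine squeeze_zero' ?_ ?_ base
  · filter_upwards [eventually_gt_atTop (0:ℝ)] with t ht
    positivity
  · filter_upwards [eventually_ge_atTop (1:ℝ)] with t ht
    have ht0 : (0:ℝ) < t := lt_of_lt_of_le one_pos ht
    have h1 : t ^ ((k : ℝ) + r) = (1/t) ^ (-((k:ℝ) + r)) := by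
      rw [one_div, Real.inv_rpow ht0.le, ← Real.rpow_neg ht0.le, neg_neg]
    have h2 : (1/t) ^ (-((k:ℝ) + r)) ≤ (1/t) ^ (-(K:ℝ)) :=
      Real.rpow_le_rpow_of_exponent_ge (by positivity) (by rw [div_le_one ht0]; exact ht)
        (neg_le_neg hK)
    have h3 : t ^ ((k:ℝ) + r) ≤ (1/t) ^ (-(K:ℝ)) := by rw [h1]; exact h2
    exact mul_le_mul_of_nonneg_left
      (mul_le_mul_of_nonneg_right h3 (norm_nonneg (F (1/t)))) hC

lemma aux_zero (hF : RapidTop F) (C r : ℝ) (hC : 0 ≤ C) (k : ℕ) :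
    Tendsto (fun t : ℝ => C * (t ^ (-(k : ℝ) + r) * ‖F (1/t)‖)) (nhdsWithin 0 (Ioi 0)) (nhds 0) := by
  obtain ⟨K, hK⟩ := exists_nat_ge ((k : ℝ) - r)
  have base : Tendsto (fun t : ℝ => C * ((1/t) ^ K * ‖F (1/t)‖)) (nhdsWithin 0 (Ioi 0)) (nhds (C * 0)) :=
    ((hF K).comp inv_tendsto_zero).const_mul C
  rw [mul_zero] at base
  refine squeeze_zero' ?_ ?_ base
  · filter_upwards [self_mem_nhdsWithin] with t ht
    have : (0:ℝ) < t := ht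
    positivity
  · have hev : ∀ᶠ t : ℝ in nhdsWithin 0 (Ioi 0), t ∈ Ioi (0:ℝ) ∧ t ≤ 1 := by
      refine Filter.Eventually.and self_mem_nhdsWithin ?_
      have : ∀ᶠ t : ℝ in nhds (0:ℝ), t ≤ 1 := by
        filter_upwards [eventually_abs_sub_lt (0:ℝ) one_pos] with t ht
        rw [sub_zero] at ht
        linarith [le_abs_self t]
      exact this.filter_mono nhdsWithin_le_nhds
    filter_upwards [hev] with t ⟨ht0, ht1⟩
    have ht0' : (0:ℝ) < t := ht0
    have hinv1 : 1 ≤ 1/t := by rw [le_div_iff₀ ht0']; linarith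
    have h1 : t ^ (-(k : ℝ) + r) = (1/t) ^ ((k:ℝ) - r) := by
      rw [one_div, Real.inv_rpow ht0'.le, ← Real.rpow_neg ht0'.le]
      ring_nf
    have h2 : (1/t) ^ ((k:ℝ) - r) ≤ (1/t) ^ (K:ℝ) :=
      Real.rpow_le_rpow_of_exponent_le hinv1 hK
    rw [Real.rpow_natCast] at h2
    have h3 : t ^ (-(k : ℝ) + r) ≤ (1/t) ^ K := h1 ▸ h2
    exact mul_le_mul_of_nonneg_left
      (mul_le_mul_of_nonneg_right h3 (norm_nonneg (F (1/t)))) hC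

lemma repF_rapid (hf : MemH f) {φ : ℝ → ℂ} (h : RepF f φ) : RapidTop φ ∧ RapidZero φ := by
  obtain ⟨ι, _, c, r, j, hrep⟩ := h
  constructor
  · intro k
    have hlim : Tendsto (fun t : ℝ => ∑ i, ‖c i‖ * (t ^ ((k : ℝ) + r i) *
        ‖iteratedDerivWithin (j i) f (Ioi 0) (1/t)‖)) atTop (nhds 0) := by
      have := tendsto_finset_sum (Finset.univ : Finset ι)
        (fun i _ => aux_top (hf.2 (j i)).2 ‖c i‖ (r i) (norm_nonneg _) k)
      simpa using this
    refine squeeze_zero' ?_ ?_ hlim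
    · filter_upwards [eventually_gt_atTop (0:ℝ)] with t ht
      positivity
    · filter_upwards [eventually_gt_atTop (0:ℝ)] with t ht
      rw [hrep t ht]
      calc t ^ k * ‖∑ i, c i * ((t ^ r i : ℝ) : ℂ) * iteratedDerivWithin (j i) f (Ioi 0) (1/t)‖
          ≤ t ^ k * ∑ i, ‖c i * ((t ^ r i : ℝ) : ℂ) * iteratedDerivWithin (j i) f (Ioi 0) (1/t)‖ := by
            apply mul_le_mul_of_nonneg_left (norm_sum_le _ _) (by positivity)
        _ = ∑ i, ‖c i‖ * (t ^ ((k : ℝ) + r i) * ‖iteratedDerivWithin (j i) f (Ioi 0) (1/t)‖) := by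
            rw [Finset.mul_sum]
            refine Finset.sum_congr rfl (fun i _ => ?_)
            rw [norm_mul, norm_mul, Complex.norm_real, Real.norm_eq_abs,
              abs_of_pos (Real.rpow_pos_of_pos ht _), Real.rpow_add ht, Real.rpow_natCast]
            ring
  · intro k
    have hlim : Tendsto (fun t : ℝ => ∑ i, ‖c i‖ * (t ^ (-(k : ℝ) + r i) *
        ‖iteratedDerivWithin (j i) f (Ioi 0) (1/t)‖)) (nhdsWithin 0 (Ioi 0)) (nhds 0) := by
      have := tendsto_finset_sum (Finset.univ : Finset ι)
        (fun i _ => aux_zero (hf.2 (j i)).1 ‖c i‖ (r i) (norm_nonneg _) k)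
      simpa using this
    refine squeeze_zero' ?_ ?_ hlim
    · filter_upwards [self_mem_nhdsWithin] with t ht
      have : (0:ℝ) < t := ht
      positivity
    · filter_upwards [self_mem_nhdsWithin] with t ht
      have ht' : (0:ℝ) < t := ht
      rw [hrep t ht]
      calc t ^ (-(k:ℝ)) * ‖∑ i, c i * ((t ^ r i : ℝ) : ℂ) * iteratedDerivWithin (j i) f (Ioi 0) (1/t)‖
          ≤ t ^ (-(k:ℝ)) * ∑ i, ‖c i * ((t ^ r i : ℝ) : ℂ) * iteratedDerivWithin (j i) f (Ioi 0) (1/t)‖ := by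
            apply mul_le_mul_of_nonneg_left (norm_sum_le _ _) (by positivity)
        _ = ∑ i, ‖c i‖ * (t ^ (-(k : ℝ) + r i) * ‖iteratedDerivWithin (j i) f (Ioi 0) (1/t)‖) := by
            rw [Finset.mul_sum]
            refine Finset.sum_congr rfl (fun i _ => ?_)
            rw [norm_mul, norm_mul, Complex.norm_real, Real.norm_eq_abs,
              abs_of_pos (Real.rpow_pos_of_pos ht' _), Real.rpow_add ht']
            ring

lemma tau_contDiffOn (hf : ContDiffOn ℝ (⊤ : ℕ∞) f (Ioi 0)) :
    ContDiffOn ℝ (⊤ : ℕ∞) (tauOp hb f) (Ioi 0) := by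
  have c1 : ContDiffOn ℝ (⊤ : ℕ∞) (fun t : ℝ => ((t ^ (-(1+hb)) : ℝ) : ℂ)) (Ioi 0) := by
    refine Complex.ofRealCLM.contDiff.comp_contDiffOn ?_
    intro x hx
    exact (Real.contDiffAt_rpow_const_of_ne (ne_of_gt hx)).contDiffWithinAt
  have c2 : ContDiffOn ℝ (⊤ : ℕ∞) (fun t : ℝ => f (1/t)) (Ioi 0) := by
    have hi : ContDiffOn ℝ (⊤ : ℕ∞) (fun t : ℝ => 1/t) (Ioi 0) := by
      simp only [one_div]
      exact (contDiffOn_inv ℝ).mono (fun x hx => ne_of_gt hx)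
    exact hf.comp hi (fun x hx => by simp [mem_Ioi] at hx ⊢; positivity)
  exact c1.mul c2

lemma tau_memH (hf : MemH f) : MemH (tauOp hb f) :=
  ⟨tau_contDiffOn hf.1, fun m => repF_rapid hf (rep_iter hf.1 m)⟩

end Decay

section Int
variable {f g h : ℝ → ℂ} {hb : ℝ}

lemma bound_Ioc (hf : MemH f) (k : ℕ) :
    ∃ C : ℝ, 0 ≤ C ∧ ∀ t ∈ Ioc (0:ℝ) 1, ‖f t‖ ≤ C * t ^ (k:ℝ) := by
  have hdecay := (hf.2 0).2 k
  rw [iteratedDerivWithin_zero] at hdecay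
  have h1 : ∀ᶠ t : ℝ in nhdsWithin 0 (Ioi 0), t ^ (-(k:ℝ)) * ‖f t‖ ≤ 1 :=
    hdecay.eventually (eventually_le_nhds (by norm_num : (0:ℝ) < 1))
  obtain ⟨ε, hε0, hε⟩ := Metric.eventually_nhds_iff.mp (eventually_nhdsWithin_iff.mp h1)
  set δ : ℝ := min (ε/2) 1 with hδdef
  have hδ0 : 0 < δ := by positivity
  have hδ1 : δ ≤ 1 := min_le_right _ _
  have hδε : δ < ε := lt_of_le_of_lt (min_le_left _ _) (by linarith)
  obtain ⟨M, hM⟩ := (isCompact_Icc (a := δ) (b := 1)).exists_bound_of_continuousOn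
    ((memH_continuousOn hf).mono (fun x hx => lt_of_lt_of_le hδ0 hx.1))
  refine ⟨(1 + |M|) * (1 + δ ^ (-(k:ℝ))), by positivity, fun t ht => ?_⟩
  have ht0 : 0 < t := ht.1
  have htk : (0:ℝ) < t ^ (k:ℝ) := Real.rpow_pos_of_pos ht0 _
  have hδk : (0:ℝ) < δ ^ (-(k:ℝ)) := Real.rpow_pos_of_pos hδ0 _
  rcases lt_or_ge t δ with hcase | hcase
  · have hball : dist t 0 < ε := by
      rw [Real.dist_eq, sub_zero, abs_of_pos ht0]; linarith
    have := hε hball ht0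
    have hft : ‖f t‖ ≤ t ^ (k:ℝ) := by
      have hmul : t ^ (k:ℝ) * (t ^ (-(k:ℝ)) * ‖f t‖) ≤ t ^ (k:ℝ) * 1 :=
        mul_le_mul_of_nonneg_left this htk.le
      rwa [← mul_assoc, ← Real.rpow_add ht0, add_neg_cancel, Real.rpow_zero, one_mul,
        mul_one] at hmul
    have hC1 : (1:ℝ) ≤ (1 + |M|) * (1 + δ ^ (-(k:ℝ))) := by nlinarith [abs_nonneg M]
    nlinarith
  · have hft : ‖f t‖ ≤ M := hM t ⟨hcase, ht.2⟩
    have hδkk : δ ^ (-(k:ℝ)) * δ ^ (k:ℝ) = 1 := by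
      rw [← Real.rpow_add hδ0]; simp
    have htδ : δ ^ (k:ℝ) ≤ t ^ (k:ℝ) := Real.rpow_le_rpow hδ0.le hcase (by positivity)
    have hδkpos : (0:ℝ) < δ ^ (k:ℝ) := Real.rpow_pos_of_pos hδ0 _
    have e1 : (1 + δ ^ (-(k:ℝ))) * δ ^ (k:ℝ) = δ ^ (k:ℝ) + 1 := by
      rw [add_mul, one_mul, hδkk]
    calc ‖f t‖ ≤ M := hft
      _ ≤ 1 + |M| := by linarith [le_abs_self M]
      _ ≤ (1 + |M|) * ((1 + δ ^ (-(k:ℝ))) * δ ^ (k:ℝ)) := by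
          rw [e1]
          nlinarith [abs_nonneg M]
      _ = (1 + |M|) * (1 + δ ^ (-(k:ℝ))) * δ ^ (k:ℝ) := by ring
      _ ≤ (1 + |M|) * (1 + δ ^ (-(k:ℝ))) * t ^ (k:ℝ) := by
          apply mul_le_mul_of_nonneg_left htδ (by positivity)

lemma bound_Ici (hf : MemH f) (k : ℕ) :
    ∃ C : ℝ, 0 ≤ C ∧ ∀ t : ℝ, 1 ≤ t → ‖f t‖ ≤ C * t ^ (-(k:ℝ)) := by
  have hdecay := (hf.2 0).1 k
  rw [iteratedDerivWithin_zero] at hdecay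
  have h1 : ∀ᶠ t : ℝ in atTop, t ^ k * ‖f t‖ ≤ 1 :=
    hdecay.eventually (eventually_le_nhds (by norm_num : (0:ℝ) < 1))
  obtain ⟨T, hT⟩ := eventually_atTop.mp h1
  set T' : ℝ := max T 1 with hT'def
  have hT'1 : (1:ℝ) ≤ T' := le_max_right _ _
  have hT'0 : (0:ℝ) < T' := lt_of_lt_of_le one_pos hT'1
  obtain ⟨M, hM⟩ := (isCompact_Icc (a := (1:ℝ)) (b := T')).exists_bound_of_continuousOn
    ((memH_continuousOn hf).mono (fun x hx => lt_of_lt_of_le one_pos hx.1))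
  refine ⟨(1 + |M|) * (1 + T' ^ (k:ℝ)), by positivity, fun t ht => ?_⟩
  have ht0 : (0:ℝ) < t := lt_of_lt_of_le one_pos ht
  have htk : (0:ℝ) < t ^ (-(k:ℝ)) := Real.rpow_pos_of_pos ht0 _
  have hT'k : (0:ℝ) < T' ^ (k:ℝ) := Real.rpow_pos_of_pos hT'0 _
  rcases le_or_gt T' t with hcase | hcase
  · have hTt : T ≤ t := le_trans (le_max_left _ _) hcase
    have := hT t hTt
    have hft : ‖f t‖ ≤ t ^ (-(k:ℝ)) := by
      have hknat : (t:ℝ) ^ k = t ^ (k:ℝ) := (Real.rpow_natCast t k).symm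
      have hmul : t ^ (-(k:ℝ)) * (t ^ (k:ℝ) * ‖f t‖) ≤ t ^ (-(k:ℝ)) * 1 := by
        apply mul_le_mul_of_nonneg_left _ htk.le
        rwa [← hknat]
      rwa [← mul_assoc, ← Real.rpow_add ht0, neg_add_cancel, Real.rpow_zero, one_mul,
        mul_one] at hmul
    have hC1 : (1:ℝ) ≤ (1 + |M|) * (1 + T' ^ (k:ℝ)) := by nlinarith [abs_nonneg M]
    nlinarith
  · have hft : ‖f t‖ ≤ M := hM t ⟨ht, hcase.le⟩
    have htT : t ^ (k:ℝ) ≤ T' ^ (k:ℝ) := Real.rpow_le_rpow ht0.le hcase.le (by positivity)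
    have hinv : T' ^ (-(k:ℝ)) ≤ t ^ (-(k:ℝ)) := by
      rw [Real.rpow_neg ht0.le, Real.rpow_neg hT'0.le]
      exact inv_anti₀ (Real.rpow_pos_of_pos ht0 _) htT
    have hTkk : T' ^ (-(k:ℝ)) * T' ^ (k:ℝ) = 1 := by
      rw [← Real.rpow_add hT'0]; simp
    have hT'kinv : (0:ℝ) < T' ^ (-(k:ℝ)) := Real.rpow_pos_of_pos hT'0 _
    have e1 : (1 + T' ^ (k:ℝ)) * T' ^ (-(k:ℝ)) = T' ^ (-(k:ℝ)) + 1 := by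
      rw [add_mul, one_mul, mul_comm (T' ^ (k:ℝ)), hTkk]
    calc ‖f t‖ ≤ M := hft
      _ ≤ 1 + |M| := by linarith [le_abs_self M]
      _ ≤ (1 + |M|) * ((1 + T' ^ (k:ℝ)) * T' ^ (-(k:ℝ))) := by
          rw [e1]
          nlinarith [abs_nonneg M]
      _ = (1 + |M|) * (1 + T' ^ (k:ℝ)) * T' ^ (-(k:ℝ)) := by ring
      _ ≤ (1 + |M|) * (1 + T' ^ (k:ℝ)) * t ^ (-(k:ℝ)) := by
          apply mul_le_mul_of_nonneg_left hinv (by positivity)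

lemma contOn_w (hg : MemH g) (e : ℝ) :
    ContinuousOn (fun t : ℝ => ((t ^ e : ℝ) : ℂ) * g t) (Ioi 0) := by
  refine ContinuousOn.mul ?_ (memH_continuousOn hg)
  refine Complex.continuous_ofReal.comp_continuousOn ?_
  intro x hx
  exact (Real.continuousAt_rpow_const x e (Or.inl (ne_of_gt hx))).continuousWithinAt

lemma integrable_weight (r : ℝ) (hg : MemH g) (hh : MemH h) :
    IntegrableOn (fun t : ℝ => t ^ r * (‖g t‖ * ‖h t‖)) (Ioi 0) := by
  have hcont : ContinuousOn (fun t : ℝ => t ^ r * (‖g t‖ * ‖h t‖)) (Ioi 0) := by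
    refine ContinuousOn.mul ?_ (((memH_continuousOn hg).norm).mul ((memH_continuousOn hh).norm))
    intro x hx
    exact (Real.continuousAt_rpow_const x r (Or.inl (ne_of_gt hx))).continuousWithinAt
  have hsplit : Ioc (0:ℝ) 1 ∪ Ioi 1 = Ioi (0:ℝ) := Ioc_union_Ioi_eq_Ioi zero_le_one
  rw [← hsplit]
  apply IntegrableOn.union
  · -- on Ioc 0 1
    set k : ℕ := ⌈|r|⌉₊ with hk
    obtain ⟨C₁, hC₁0, hC₁⟩ := bound_Ioc hg k
    obtain ⟨C₂, hC₂0, hC₂⟩ := bound_Ioc hh k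
    refine Integrable.mono' (g := fun _ => C₁ * C₂)
      (integrableOn_const measure_Ioc_lt_top.ne) ?_ ?_
    · exact (hcont.mono Ioc_subset_Ioi_self).aestronglyMeasurable measurableSet_Ioc
    · rw [ae_restrict_iff' measurableSet_Ioc]
      refine ae_of_all _ (fun t ht => ?_)
      have ht0 : 0 < t := ht.1
      have h1 : ‖t ^ r * (‖g t‖ * ‖h t‖)‖ = t ^ r * (‖g t‖ * ‖h t‖) := by
        rw [Real.norm_eq_abs, abs_of_nonneg (by positivity)]
      rw [h1]
      have hgb := hC₁ t ht
      have hhb := hC₂ t ht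
      have key : t ^ r * ((C₁ * t ^ (k:ℝ)) * (C₂ * t ^ (k:ℝ))) ≤ C₁ * C₂ := by
        have : t ^ r * ((C₁ * t ^ (k:ℝ)) * (C₂ * t ^ (k:ℝ)))
            = C₁ * C₂ * t ^ (r + ((k:ℝ) + (k:ℝ))) := by
          rw [Real.rpow_add ht0, Real.rpow_add ht0]; ring
        rw [this]
        have hexp : (0:ℝ) ≤ r + ((k:ℝ) + (k:ℝ)) := by
          have : |r| ≤ (k:ℝ) := Nat.le_ceil _
          have := neg_abs_le r
          linarith
        have := Real.rpow_le_one ht0.le ht.2 hexp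
        exact mul_le_of_le_one_right (by positivity) this
      have h2 : t ^ r * (‖g t‖ * ‖h t‖) ≤ t ^ r * ((C₁ * t ^ (k:ℝ)) * (C₂ * t ^ (k:ℝ))) := by
        have hrp : (0:ℝ) < t ^ r := Real.rpow_pos_of_pos ht0 _
        have hkp : (0:ℝ) ≤ t ^ (k:ℝ) := (Real.rpow_pos_of_pos ht0 _).le
        apply mul_le_mul_of_nonneg_left _ hrp.le
        exact mul_le_mul hgb hhb (norm_nonneg _) (by positivity)
      exact le_trans h2 key
  · -- on Ioi 1
    set k : ℕ := ⌈|r|⌉₊ + 1 with hk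
    obtain ⟨C₁, hC₁0, hC₁⟩ := bound_Ici hg k
    obtain ⟨C₂, hC₂0, hC₂⟩ := bound_Ici hh k
    refine Integrable.mono' (g := fun t => (C₁ * C₂) * t ^ (-2 : ℝ))
      ((integrableOn_Ioi_rpow_of_lt (by norm_num) one_pos).const_mul _) ?_ ?_
    · exact (hcont.mono (t := Ioi 1) (fun x hx => lt_trans one_pos hx)).aestronglyMeasurable measurableSet_Ioi
    · rw [ae_restrict_iff' measurableSet_Ioi]
      refine ae_of_all _ (fun t ht => ?_)
      have ht1 : (1:ℝ) < t := ht
      have ht0 : (0:ℝ) < t := lt_trans one_pos ht1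
      have h1 : ‖t ^ r * (‖g t‖ * ‖h t‖)‖ = t ^ r * (‖g t‖ * ‖h t‖) := by
        rw [Real.norm_eq_abs, abs_of_nonneg (by positivity)]
      rw [h1]
      have hgb := hC₁ t ht1.le
      have hhb := hC₂ t ht1.le
      have h2 : t ^ r * (‖g t‖ * ‖h t‖) ≤ t ^ r * ((C₁ * t ^ (-(k:ℝ))) * (C₂ * t ^ (-(k:ℝ)))) := by
        apply mul_le_mul_of_nonneg_left _ (Real.rpow_pos_of_pos ht0 r).le
        exact mul_le_mul hgb hhb (norm_nonneg _) (by positivity)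
      have h3 : t ^ r * ((C₁ * t ^ (-(k:ℝ))) * (C₂ * t ^ (-(k:ℝ))))
          = C₁ * C₂ * t ^ (r + (-(k:ℝ) + -(k:ℝ))) := by
        rw [Real.rpow_add ht0, Real.rpow_add ht0]; ring
      have hexp : r + (-(k:ℝ) + -(k:ℝ)) ≤ -2 := by
        have h4 : |r| ≤ ((⌈|r|⌉₊ : ℝ)) := Nat.le_ceil _
        have h5 : r ≤ |r| := le_abs_self r
        have h6 : ((k:ℝ)) = (⌈|r|⌉₊ : ℝ) + 1 := by rw [hk]; push_cast; ring
        have h7 : (0:ℝ) ≤ (⌈|r|⌉₊ : ℝ) := Nat.cast_nonneg _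
        rw [h6]; linarith
      have h8 : t ^ (r + (-(k:ℝ) + -(k:ℝ))) ≤ t ^ (-2:ℝ) :=
        Real.rpow_le_rpow_of_exponent_le ht1.le hexp
      have h9 : (0:ℝ) ≤ C₁ * C₂ := by positivity
      calc t ^ r * (‖g t‖ * ‖h t‖) ≤ C₁ * C₂ * t ^ (r + (-(k:ℝ) + -(k:ℝ))) := by
            rw [← h3]; exact h2
        _ ≤ C₁ * C₂ * t ^ (-2:ℝ) := mul_le_mul_of_nonneg_left h8 h9

lemma contOn_inner (hg : MemH g) (hh : MemH h) :
    ContinuousOn (fun t : ℝ => ((t ^ hb : ℝ) : ℂ) * conj (g t) * h t) (Ioi 0) := by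
  refine ContinuousOn.mul (ContinuousOn.mul ?_ ?_) (memH_continuousOn hh)
  · refine Complex.continuous_ofReal.comp_continuousOn ?_
    intro x hx
    exact (Real.continuousAt_rpow_const x hb (Or.inl (ne_of_gt hx))).continuousWithinAt
  · exact Complex.continuous_conj.comp_continuousOn (memH_continuousOn hg)

lemma norm_inner_integrand {t : ℝ} (ht : 0 < t) (g h : ℝ → ℂ) (e : ℝ) :
    ‖((t ^ e : ℝ) : ℂ) * conj (g t) * h t‖ = t ^ e * (‖g t‖ * ‖h t‖) := by
  rw [norm_mul, norm_mul, Complex.norm_real, Real.norm_eq_abs,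
    abs_of_pos (Real.rpow_pos_of_pos ht _), RCLike.norm_conj]
  ring

lemma innerIntegrable (hg : MemH g) (hh : MemH h) : InnerIntegrable hb g h := by
  refine Integrable.mono' (integrable_weight hb hg hh)
    ((contOn_inner hg hh).aestronglyMeasurable measurableSet_Ioi) ?_
  rw [ae_restrict_iff' measurableSet_Ioi]
  refine ae_of_all _ (fun t ht => ?_)
  rw [norm_inner_integrand ht]

lemma memL2 (hg : MemH g) :
    MemLp (fun t : ℝ => ((t ^ (hb/2) : ℝ) : ℂ) * g t) 2 (volume.restrict (Ioi 0)) := by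
  have hm : AEStronglyMeasurable (fun t : ℝ => ((t ^ (hb/2) : ℝ) : ℂ) * g t)
      (volume.restrict (Ioi 0)) :=
    (contOn_w hg (hb/2)).aestronglyMeasurable measurableSet_Ioi
  rw [memLp_two_iff_integrable_sq_norm hm]
  refine Integrable.mono' (integrable_weight hb hg hg) ?_ ?_
  · exact (hm.norm.pow 2)
  · rw [ae_restrict_iff' measurableSet_Ioi]
    refine ae_of_all _ (fun t ht => ?_)
    have ht' : (0:ℝ) < t := ht
    have h1 : ‖(fun t : ℝ => ((t ^ (hb/2) : ℝ) : ℂ) * g t) t‖ ^ 2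
        = (t ^ (hb/2)) ^ 2 * ‖g t‖ ^ 2 := by
      rw [norm_mul, Complex.norm_real, Real.norm_eq_abs,
        abs_of_pos (Real.rpow_pos_of_pos ht' _), mul_pow]
    have h2 : ((t ^ (hb/2) : ℝ)) ^ 2 = t ^ hb := by
      rw [← Real.rpow_natCast (t ^ (hb/2)) 2, ← Real.rpow_mul ht'.le]
      norm_num
    rw [Real.norm_eq_abs, abs_of_nonneg (by positivity), h1, h2, sq]

end Int

section L2sec
variable {hb : ℝ} {g h u v : ℝ → ℂ}

lemma inner_WL (hg : MemH g) (hh : MemH h) :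
    (inner ℂ ((memL2 (hb := hb) hg).toLp _) ((memL2 (hb := hb) hh).toLp _) : ℂ) = innerH hb g h := by
  rw [MeasureTheory.L2.inner_def]
  refine integral_congr_ae ?_
  filter_upwards [MemLp.coeFn_toLp (memL2 (hb := hb) hg), MemLp.coeFn_toLp (memL2 (hb := hb) hh),
    ae_restrict_mem measurableSet_Ioi] with t h1 h2 h3
  rw [h1, h2, RCLike.inner_apply']
  have ht : (0:ℝ) < t := h3
  have key : (t ^ (hb/2) : ℝ) * (t ^ (hb/2) : ℝ) = t ^ hb := by
    rw [← Real.rpow_add ht]; norm_num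
  rw [map_mul, Complex.conj_ofReal]
  calc ((t ^ (hb/2) : ℝ) : ℂ) * conj (g t) * (((t ^ (hb/2) : ℝ) : ℂ) * h t)
      = (((t ^ (hb/2) : ℝ) * (t ^ (hb/2) : ℝ) : ℝ) : ℂ) * conj (g t) * h t := by
        push_cast; ring
    _ = ((t ^ hb : ℝ) : ℂ) * conj (g t) * h t := by rw [key]

lemma innerH_congr_right (hcong : ∀ t ∈ Ioi (0:ℝ), u t = v t) :
    innerH hb g u = innerH hb g v := by
  unfold innerH
  exact setIntegral_congr_fun measurableSet_Ioi (fun t ht => by rw [hcong t ht])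

lemma innerH_comb (c : ℂ) (g u v : ℝ → ℂ) (hgu : InnerIntegrable hb g u)
    (hgv : InnerIntegrable hb g v) :
    innerH hb g (fun t => c * (u t - v t)) = c * (innerH hb g u - innerH hb g v) ∧
    innerH hb g (fun t => c * (u t + v t)) = c * (innerH hb g u + innerH hb g v) := by
  unfold innerH InnerIntegrable at *
  constructor
  · calc ∫ t in Ioi (0:ℝ), ((t ^ hb : ℝ) : ℂ) * conj (g t) * (c * (u t - v t))
        = ∫ t in Ioi (0:ℝ), c • (((t ^ hb : ℝ) : ℂ) * conj (g t) * u t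
            - ((t ^ hb : ℝ) : ℂ) * conj (g t) * v t) := by
          refine setIntegral_congr_fun measurableSet_Ioi (fun t _ => ?_)
          simp only [smul_eq_mul]; ring
      _ = c * (∫ t in Ioi (0:ℝ), (((t ^ hb : ℝ) : ℂ) * conj (g t) * u t
            - ((t ^ hb : ℝ) : ℂ) * conj (g t) * v t)) := by rw [integral_smul]; rfl
      _ = c * ((∫ t in Ioi (0:ℝ), ((t ^ hb : ℝ) : ℂ) * conj (g t) * u t)
            - ∫ t in Ioi (0:ℝ), ((t ^ hb : ℝ) : ℂ) * conj (g t) * v t) := by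
          rw [integral_sub hgu hgv]
  · calc ∫ t in Ioi (0:ℝ), ((t ^ hb : ℝ) : ℂ) * conj (g t) * (c * (u t + v t))
        = ∫ t in Ioi (0:ℝ), c • (((t ^ hb : ℝ) : ℂ) * conj (g t) * u t
            + ((t ^ hb : ℝ) : ℂ) * conj (g t) * v t) := by
          refine setIntegral_congr_fun measurableSet_Ioi (fun t _ => ?_)
          simp only [smul_eq_mul]; ring
      _ = c * (∫ t in Ioi (0:ℝ), (((t ^ hb : ℝ) : ℂ) * conj (g t) * u t
            + ((t ^ hb : ℝ) : ℂ) * conj (g t) * v t)) := by rw [integral_smul]; rfl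
      _ = c * ((∫ t in Ioi (0:ℝ), ((t ^ hb : ℝ) : ℂ) * conj (g t) * u t)
            + ∫ t in Ioi (0:ℝ), ((t ^ hb : ℝ) : ℂ) * conj (g t) * v t) := by
          rw [integral_add hgu hgv]

end L2sec

/-- the Schrödinger uncertainty relation for a symmetric operator
`A` and the involution `τ_ℏ`, for states supported in `[1,∞)`. -/
theorem stmt15 (hb : ℝ) (f : ℝ → ℂ) (hf : MemH f)
    (hsupp : ∀ t : ℝ, 0 < t → t < 1 → f t = 0)
    (hnorm : innerH hb f f = 1) :
    innerH hb f (tauOp hb f) = 0 ∧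
    ∀ A : (ℝ → ℂ) → (ℝ → ℂ),
      (∀ g : ℝ → ℂ, MemH g → MemH (A g)) →
      (∀ (c : ℂ) (g h : ℝ → ℂ),
        A (fun t => c * g t + h t) = fun t => c * A g t + A h t) →
      (∀ g h : ℝ → ℂ, MemH g → MemH h → innerH hb (A g) h = innerH hb g (A h)) →
      ‖innerH hb f (fun t =>
          (1 / (2 * Complex.I)) * (A (tauOp hb f) t - tauOp hb (A f) t))‖ ^ 2
        + ‖innerH hb f (fun t =>
          (1 / 2 : ℂ) * (A (tauOp hb f) t + tauOp hb (A f) t))‖ ^ 2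
        ≤ (innerH hb f (A (A f)) - (innerH hb f (A f)) ^ 2).re := by
  refine ⟨inner_tau_zero hf hsupp, fun A hA1 _hA2 hA3 => ?_⟩
  have hAf : MemH (A f) := hA1 f hf
  have htf : MemH (tauOp hb f) := tau_memH hf
  have hAtf : MemH (A (tauOp hb f)) := hA1 _ htf
  have htAf : MemH (tauOp hb (A f)) := tau_memH hAf
  set μ : ℂ := innerH hb f (A f) with hμdef
  have hμ_real : conj μ = μ := by
    calc conj μ = conj (innerH hb f (A f)) := by rw [hμdef]
      _ = conj (conj (innerH hb (A f) f)) := by rw [innerH_conj hb f (A f)]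
      _ = innerH hb (A f) f := Complex.conj_conj _
      _ = innerH hb f (A f) := hA3 f f hf hf
      _ = μ := hμdef.symm
  set P : ℂ := innerH hb (A f) (tauOp hb f) with hPdef
  -- L2 vectors
  set F := (memL2 (hb := hb) hf).toLp _ with hF
  set G := (memL2 (hb := hb) hAf).toLp _ with hG
  set V := (memL2 (hb := hb) htf).toLp _ with hV
  set U := G - μ • F with hU
  have hFF : (inner ℂ F F : ℂ) = 1 := by rw [hF, inner_WL hf hf, hnorm]
  have hFG : (inner ℂ F G : ℂ) = μ := by rw [hF, hG, inner_WL hf hAf]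
  have hGF : (inner ℂ G F : ℂ) = μ := by
    rw [hG, hF, inner_WL hAf hf, hA3 f f hf hf]
  have hGG : (inner ℂ G G : ℂ) = innerH hb f (A (A f)) := by
    rw [hG, inner_WL hAf hAf, hA3 f (A f) hf hAf]
  have hFV : (inner ℂ F V : ℂ) = 0 := by
    rw [hF, hV, inner_WL hf htf, inner_tau_zero hf hsupp]
  have hGV : (inner ℂ G V : ℂ) = P := by rw [hG, hV, inner_WL hAf htf]
  have hVV : (inner ℂ V V : ℂ) = 1 := by
    rw [hV, inner_WL htf htf, ← innerH_tau_symm hb f (tauOp hb f),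
      innerH_congr_right (fun t ht => tau_tau_s15 hb f ht), hnorm]
  have hUV : (inner ℂ U V : ℂ) = P := by
    rw [hU, inner_sub_left, inner_smul_left, hFV, hGV]
    ring
  have hUU : (inner ℂ U U : ℂ) = innerH hb f (A (A f)) - μ ^ 2 := by
    rw [hU, inner_sub_left, inner_sub_right, inner_sub_right, inner_smul_left,
      inner_smul_right, inner_smul_left, inner_smul_right, hFF, hFG, hGF, hGG, hμ_real]
    ring
  -- the two inner products in the goal
  have hint1 : InnerIntegrable hb f (A (tauOp hb f)) := innerIntegrable hf hAtf
  have hint2 : InnerIntegrable hb f (tauOp hb (A f)) := innerIntegrable hf htAf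
  have hP1 : innerH hb f (A (tauOp hb f)) = P := by
    rw [hPdef, hA3 f (tauOp hb f) hf htf]
  have hP2 : innerH hb f (tauOp hb (A f)) = conj P := by
    rw [innerH_tau_symm hb f (A f), innerH_conj hb (tauOp hb f) (A f), hPdef]
  have hX : innerH hb f (fun t =>
      (1 / (2 * Complex.I)) * (A (tauOp hb f) t - tauOp hb (A f) t)) = (P.im : ℂ) := by
    rw [(innerH_comb (1 / (2 * Complex.I)) f _ _ hint1 hint2).1, hP1, hP2, Complex.sub_conj]
    rw [Complex.ofReal_mul]
    field_simp
    push_cast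
    ring
  have hY : innerH hb f (fun t =>
      (1 / 2 : ℂ) * (A (tauOp hb f) t + tauOp hb (A f) t)) = (P.re : ℂ) := by
    rw [(innerH_comb (1 / 2 : ℂ) f _ _ hint1 hint2).2, hP1, hP2, Complex.add_conj]
    rw [Complex.ofReal_mul]
    push_cast
    ring
  rw [hX, hY]
  have hnormV : ‖V‖ ^ 2 = 1 := by
    have := inner_self_eq_norm_sq (𝕜 := ℂ) V
    rw [hVV] at this
    simpa using this.symm
  have hnormU : ‖U‖ ^ 2 = (innerH hb f (A (A f)) - μ ^ 2).re := by
    have := inner_self_eq_norm_sq (𝕜 := ℂ) U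
    rw [hUU] at this
    exact this.symm
  have hCS : ‖(inner ℂ U V : ℂ)‖ ^ 2 ≤ ‖U‖ ^ 2 * ‖V‖ ^ 2 := by
    have h1 := norm_inner_le_norm (𝕜 := ℂ) U V
    have h2 : (0:ℝ) ≤ ‖(inner ℂ U V : ℂ)‖ := norm_nonneg _
    nlinarith [norm_nonneg U, norm_nonneg V]
  rw [hUV] at hCS
  rw [hnormU, hnormV, mul_one] at hCS
  have hPsq : ‖(P.im : ℂ)‖ ^ 2 + ‖(P.re : ℂ)‖ ^ 2 = ‖P‖ ^ 2 := by
    rw [Complex.norm_real, Complex.norm_real, Complex.sq_norm,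
      Complex.normSq_apply, Real.norm_eq_abs, Real.norm_eq_abs, sq_abs, sq_abs]
    ring
  rw [hPsq]
  exact hCS
end
end
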